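/- arXiv:2407.17589 — 9 statements merged into one kernel-verified Lean document; each statement's English description precedes it below -/
import Mathlib

section
/- If a vector x in R^n majorizes a vector y in R^n, then for every continuous strictly convex function g: R → R, the sum of g(x_i) over i is at least the sum of g(y_i); moreover if x strictly majorizes y (x majorizes y but y does not majorize x), the inequality is strict. -/
open Finset

/-- `x` majorizes `y`: for each `k`, the sum of the `k` largest coordinates of `x`
is at least that of `y`, and the total sums agree.  (Stated via the equivalent
subset formulation.) -/
def maj {n : ℕ} (x y : Fin n → ℝ) : Prop :=
  (∀ B : Finset (Fin n), ∃ A : Finset (Fin n),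
      A.card = B.card ∧ ∑ i ∈ B, y i ≤ ∑ i ∈ A, x i) ∧
  ∑ i, x i = ∑ i, y i

/-- strict majorization -/
def smaj {n : ℕ} (x y : Fin n → ℝ) : Prop := maj x y ∧ ¬ maj y x

/-!
Sort both vectors increasingly, `a = x ∘ σ` and `b = y ∘ τ`. Majorization says that every
suffix sum of `a` dominates the corresponding suffix sum of `b`, with equal totals. Let `c i` be
the right derivative of `g` at `b i`; it increases with `i`. Convexity gives the tangent line
bound `g (a i) ≥ g (b i) + c i * (a i - b i)`, and Abel summation against the increasing
weights `c` shows `∑ c i * (a i - b i) ≥ 0`. For strictly convex `g` the tangent bound is strict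
wherever `a i ≠ b i`, and `a = b` would make `y` majorize `x` as well.
-/

lemma Monotone.sum_le_sum_Ici {ι M : Type*} [LinearOrder ι] [LocallyFiniteOrderTop ι]
    [AddCommMonoid M] [PartialOrder M] [IsOrderedAddMonoid M] {a : ι → M} (ha : Monotone a)
    {S : Finset ι} {k : ι} (hS : #S = #(Ici k)) : ∑ i ∈ S, a i ≤ ∑ i ≥ k, a i := by
  -- `a k` separates the values on `S \ Ici k` from those on `Ici k \ S`, two sets of equal size
  have hlo : ∑ i ∈ S \ Ici k, a i ≤ #(S \ Ici k) • a k := by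
    refine sum_le_card_nsmul _ _ _ fun i hi => ha ?_
    simp only [mem_sdiff, mem_Ici, not_le] at hi
    exact hi.2.le
  have hhi : #(Ici k \ S) • a k ≤ ∑ i ∈ Ici k \ S, a i :=
    card_nsmul_le_sum _ _ _ fun i hi => ha (mem_Ici.1 (mem_sdiff.1 hi).1)
  rw [card_sdiff_comm hS] at hlo
  rw [← sum_inter_add_sum_sdiff S (Ici k), ← sum_inter_add_sum_sdiff (Ici k) S, inter_comm]
  exact add_le_add le_rfl (hlo.trans hhi)

namespace Fin

lemma mul_sum_le_sum_mul_of_sum_Ici_nonneg {n : ℕ} {c u : Fin n → ℝ} (hc : Monotone c)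
    (hu : ∀ k, 0 ≤ ∑ i ≥ k, u i) {t : ℝ} (ht : ∀ i, t ≤ c i) :
    t * ∑ i, u i ≤ ∑ i, c i * u i := by
  induction n generalizing t with
  | zero => simp
  | succ n ih =>
    have hu' (k : Fin n) : 0 ≤ ∑ i ≥ k, u i.succ := by simpa [Fin.sum_Ici_succ] using hu k.succ
    have htail : 0 ≤ ∑ i : Fin n, u i.succ := by
      cases n with
      | zero => simp
      | succ n => simpa [← bot_eq_zero, Finset.Ici_bot] using hu' 0
    have ih' : c 0 * ∑ i : Fin n, u i.succ ≤ ∑ i : Fin n, c i.succ * u i.succ :=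
      ih (hc.comp Fin.strictMono_succ.monotone) hu' fun i => hc (Fin.zero_le _)
    calc t * ∑ i, u i ≤ c 0 * ∑ i, u i :=
          mul_le_mul_of_nonneg_right (ht 0) (by simpa using hu 0)
      _ = c 0 * u 0 + c 0 * ∑ i : Fin n, u i.succ := by rw [Fin.sum_univ_succ, mul_add]
      _ ≤ ∑ i, c i * u i := by rw [Fin.sum_univ_succ]; linarith

lemma sum_mul_nonneg_of_sum_Ici_nonneg {n : ℕ} {c u : Fin n → ℝ} (hc : Monotone c)
    (hu : ∀ k, 0 ≤ ∑ i ≥ k, u i) (hu₀ : ∑ i, u i = 0) : 0 ≤ ∑ i, c i * u i := by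
  obtain ⟨t, ht⟩ := (Set.finite_range c).bddBelow
  simpa [hu₀] using mul_sum_le_sum_mul_of_sum_Ici_nonneg hc hu fun i => ht ⟨i, rfl⟩

end Fin

section TangentLine

variable {S : Set ℝ} {f : ℝ → ℝ} {x y : ℝ}

lemma ConvexOn.add_rightDeriv_mul_sub_le (hf : ConvexOn ℝ S f) (hx : x ∈ interior S)
    (hy : y ∈ S) : f x + derivWithin f (Set.Ioi x) x * (y - x) ≤ f y := by
  rcases lt_trichotomy x y with hxy | rfl | hyx
  · have h := hf.rightDeriv_le_slope_of_mem_interior hx hy hxy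
    rw [slope_def_field, le_div_iff₀ (sub_pos.2 hxy)] at h
    linarith
  · simp
  · have h := (hf.slope_le_leftDeriv_of_mem_interior hy hx hyx).trans
      (hf.leftDeriv_le_rightDeriv_of_mem_interior hx)
    rw [slope_def_field, div_le_iff₀ (sub_pos.2 hyx)] at h
    linarith

lemma StrictConvexOn.add_rightDeriv_mul_sub_lt (hf : StrictConvexOn ℝ S f)
    (hx : x ∈ interior S) (hy : y ∈ S) (hxy : x ≠ y) :
    f x + derivWithin f (Set.Ioi x) x * (y - x) < f y := by
  rcases hxy.lt_or_gt with hxy | hyx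
  · have h := hf.rightDeriv_lt_slope (interior_subset hx) hy hxy
      (hf.convexOn.differentiableWithinAt_Ioi_of_mem_interior hx)
    rw [slope_def_field, lt_div_iff₀ (sub_pos.2 hxy)] at h
    linarith
  · have h := (hf.slope_lt_leftDeriv hy (interior_subset hx) hyx
      (hf.convexOn.differentiableWithinAt_Iio_of_mem_interior hx)).trans_le
      (hf.convexOn.leftDeriv_le_rightDeriv_of_mem_interior hx)
    rw [slope_def_field, div_lt_iff₀ (sub_pos.2 hyx)] at h
    linarith

end TangentLine

section Karamata

variable {n : ℕ} {S : Set ℝ} {g : ℝ → ℝ} {a b : Fin n → ℝ}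

lemma ConvexOn.sum_rightDeriv_mul_sub_nonneg (hg : ConvexOn ℝ S g) (hb : Monotone b)
    (hbS : ∀ i, b i ∈ interior S) (hsuf : ∀ k, ∑ i ≥ k, b i ≤ ∑ i ≥ k, a i)
    (htot : ∑ i, a i = ∑ i, b i) :
    0 ≤ ∑ i, derivWithin g (Set.Ioi (b i)) (b i) * (a i - b i) := by
  refine Fin.sum_mul_nonneg_of_sum_Ici_nonneg (fun i j hij => ?_) (fun k => ?_) ?_
  · exact hg.monotoneOn_rightDeriv (hbS i) (hbS j) (hb hij)
  · rw [sum_sub_distrib, sub_nonneg]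
    exact hsuf k
  · rw [sum_sub_distrib, htot, sub_self]

lemma ConvexOn.sum_comp_le_sum_comp_of_sum_Ici_le (hg : ConvexOn ℝ S g) (hb : Monotone b)
    (hbS : ∀ i, b i ∈ interior S) (haS : ∀ i, a i ∈ S)
    (hsuf : ∀ k, ∑ i ≥ k, b i ≤ ∑ i ≥ k, a i) (htot : ∑ i, a i = ∑ i, b i) :
    ∑ i, g (b i) ≤ ∑ i, g (a i) := by
  have htangent := sum_le_sum fun i (_ : i ∈ univ) =>
    hg.add_rightDeriv_mul_sub_le (hbS i) (haS i)
  rw [sum_add_distrib] at htangent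
  linarith [hg.sum_rightDeriv_mul_sub_nonneg hb hbS hsuf htot]

lemma StrictConvexOn.sum_comp_lt_sum_comp_of_sum_Ici_le (hg : StrictConvexOn ℝ S g)
    (hb : Monotone b) (hbS : ∀ i, b i ∈ interior S) (haS : ∀ i, a i ∈ S)
    (hsuf : ∀ k, ∑ i ≥ k, b i ≤ ∑ i ≥ k, a i) (htot : ∑ i, a i = ∑ i, b i) (hab : a ≠ b) :
    ∑ i, g (b i) < ∑ i, g (a i) := by
  obtain ⟨j, hj⟩ := Function.ne_iff.1 hab
  have htangent := sum_lt_sum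
    (fun i (_ : i ∈ univ) => hg.convexOn.add_rightDeriv_mul_sub_le (hbS i) (haS i))
    ⟨j, mem_univ j, hg.add_rightDeriv_mul_sub_lt (hbS j) (haS j) (Ne.symm hj)⟩
  rw [sum_add_distrib] at htangent
  linarith [hg.convexOn.sum_rightDeriv_mul_sub_nonneg hb hbS hsuf htot]

end Karamata

section Sorting

variable {n : ℕ}

lemma sum_le_sum_Ici_sort (x : Fin n → ℝ) {A : Finset (Fin n)} {k : Fin n}
    (hA : #A = #(Ici k)) : ∑ i ∈ A, x i ≤ ∑ i ≥ k, x (Tuple.sort x i) := by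
  have h := (Tuple.monotone_sort x).sum_le_sum_Ici (S := A.map (Tuple.sort x).symm.toEmbedding)
    (by rwa [card_map])
  simpa [sum_map] using h

lemma maj_iff_sum_Ici_sort_le (x y : Fin n → ℝ) :
    maj x y ↔ (∀ k, ∑ i ≥ k, y (Tuple.sort y i) ≤ ∑ i ≥ k, x (Tuple.sort x i)) ∧
      ∑ i, x (Tuple.sort x i) = ∑ i, y (Tuple.sort y i) := by
  refine and_congr ⟨fun h k => ?_, fun h B => ?_⟩ (by rw [Equiv.sum_comp, Equiv.sum_comp])
  · obtain ⟨A, hA, hBA⟩ := h ((Ici k).map (Tuple.sort y).toEmbedding)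
    rw [card_map] at hA
    calc ∑ i ≥ k, y (Tuple.sort y i) = ∑ i ∈ (Ici k).map (Tuple.sort y).toEmbedding, y i := by
          rw [sum_map]; rfl
      _ ≤ ∑ i ∈ A, x i := hBA
      _ ≤ _ := sum_le_sum_Ici_sort x hA
  · rcases B.eq_empty_or_nonempty with rfl | hB
    · exact ⟨∅, rfl, le_rfl⟩
    have hBn : #B ≤ n := by simpa using B.card_le_univ
    set k : Fin n := ⟨n - #B, by have := hB.card_pos; omega⟩
    have hk : #(Ici k) = #B := by simp only [Fin.card_Ici, k]; omega
    refine ⟨(Ici k).map (Tuple.sort x).toEmbedding, by rw [card_map, hk], ?_⟩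
    calc ∑ i ∈ B, y i ≤ ∑ i ≥ k, y (Tuple.sort y i) := sum_le_sum_Ici_sort y hk.symm
      _ ≤ ∑ i ≥ k, x (Tuple.sort x i) := h k
      _ = _ := by rw [sum_map]; rfl

end Sorting

theorem stmt0_general {n : ℕ} (x y : Fin n → ℝ) (g : ℝ → ℝ)
    (hg' : StrictConvexOn ℝ Set.univ g) :
    (maj x y → ∑ i, g (y i) ≤ ∑ i, g (x i)) ∧
    (smaj x y → ∑ i, g (y i) < ∑ i, g (x i)) := by
  have hsort (z : Fin n → ℝ) : ∑ i, g (z (Tuple.sort z i)) = ∑ i, g (z i) :=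
    Equiv.sum_comp (Tuple.sort z) (g ∘ z)
  have hint (i : Fin n) : y (Tuple.sort y i) ∈ interior Set.univ := by simp
  rw [← hsort x, ← hsort y]
  refine ⟨fun h => ?_, fun ⟨h, hyx⟩ => ?_⟩
  · obtain ⟨hsuf, htot⟩ := (maj_iff_sum_Ici_sort_le x y).1 h
    exact hg'.convexOn.sum_comp_le_sum_comp_of_sum_Ici_le (Tuple.monotone_sort y) hint
      (fun _ => Set.mem_univ _) hsuf htot
  · obtain ⟨hsuf, htot⟩ := (maj_iff_sum_Ici_sort_le x y).1 h
    refine hg'.sum_comp_lt_sum_comp_of_sum_Ici_le (Tuple.monotone_sort y) hint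
      (fun _ => Set.mem_univ _) hsuf htot fun hxy => hyx ?_
    exact (maj_iff_sum_Ici_sort_le y x).2
      ⟨fun k => (sum_congr rfl fun i _ => congrFun hxy i).le, htot.symm⟩

/-- If `x` majorizes `y`, then for every continuous strictly convex `g : ℝ → ℝ`,
the sum of `g (x i)` dominates the sum of `g (y i)`; and strictly so under
strict majorization. -/
theorem stmt0 {n : ℕ} (x y : Fin n → ℝ) (g : ℝ → ℝ)
    (hg : Continuous g) (hg' : StrictConvexOn ℝ Set.univ g) :
    (maj x y → ∑ i, g (y i) ≤ ∑ i, g (x i)) ∧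
    (smaj x y → ∑ i, g (y i) < ∑ i, g (x i)) :=
  stmt0_general x y g hg'
end

section
/- Fix a capacity q ∈ Z_{>0} and bias b ∈ R^n with coordinates summing to 0, and define T_b(x) = x + (Σ_i x_i)·b. For x ∈ Z_+^n, let B(x) = {y ∈ Z_+^n : y ≤ x componentwise and Σ_i y_i ≤ q}, and let F_b(x) be the set of y ∈ B(x) such that no z ∈ B(x) satisfies z > y (componentwise with strict inequality somewhere) or T_b(y) strictly majorizes T_b(z). Then every y ∈ F_b(x) satisfies Σ_i y_i = min(q, Σ_i x_i). -/
open Finset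

/-- The biased transformation `T_b(x) = x + (Σ_i x_i)·b`. -/
noncomputable def Tb {n : ℕ} (b : Fin n → ℝ) (x : Fin n → ℤ) : Fin n → ℝ :=
  fun i => (x i : ℝ) + (∑ j, (x j : ℝ)) * b i

/-- The budget set `B(x)` for capacity `q`. -/
def memB {n : ℕ} (q : ℕ) (x y : Fin n → ℤ) : Prop :=
  (∀ i, 0 ≤ y i) ∧ (∀ i, y i ≤ x i) ∧ ∑ i, y i ≤ (q : ℤ)

/-- The `b`-targeting Schur frontier `F_b(x)`. -/
def memF {n : ℕ} (q : ℕ) (b : Fin n → ℝ) (x y : Fin n → ℤ) : Prop :=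
  memB q x y ∧
    ¬ ∃ z : Fin n → ℤ, memB q x z ∧ ((y ≤ z ∧ y ≠ z) ∨ smaj (Tb b y) (Tb b z))


/-- Every element of the frontier `F_b(x)` has coordinate sum `min q (Σ x)`. -/
theorem stmt2 {n : ℕ} (q : ℕ) (hq : 0 < q) (b : Fin n → ℝ) (hb : ∑ i, b i = 0)
    (x : Fin n → ℤ) (hx : ∀ i, 0 ≤ x i) (y : Fin n → ℤ) (hy : memF q b x y) :
    ∑ i, y i = min (q : ℤ) (∑ i, x i) := by
  obtain ⟨⟨hpos, hle, hq'⟩, hmax⟩ := hy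
  have hyx : ∑ i, y i ≤ ∑ i, x i := Finset.sum_le_sum fun i _ => hle i
  have hlemin : ∑ i, y i ≤ min (q : ℤ) (∑ i, x i) := le_min hq' hyx
  rcases eq_or_lt_of_le hlemin with h | h
  · exact h
  · exfalso
    have hlt : ∑ i, y i < ∑ i, x i := lt_of_lt_of_le h (min_le_right _ _)
    have hltq : ∑ i, y i < (q : ℤ) := lt_of_lt_of_le h (min_le_left _ _)
    -- there is a coordinate with y i < x i
    have : ∃ i, y i < x i := by
      by_contra hc
      push_neg at hc
      have : ∑ i, x i ≤ ∑ i, y i := Finset.sum_le_sum fun i _ => hc i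
      omega
    obtain ⟨i, hi⟩ := this
    set z := Function.update y i (y i + 1) with hz
    apply hmax
    refine ⟨z, ⟨?_, ?_, ?_⟩, Or.inl ⟨?_, ?_⟩⟩
    · intro j
      rcases eq_or_ne j i with rfl | hji
      · simp [hz]; linarith [hpos j]
      · simpa [hz, Function.update_of_ne hji] using hpos j
    · intro j
      rcases eq_or_ne j i with rfl | hji
      · simp [hz]; omega
      · simpa [hz, Function.update_of_ne hji] using hle j
    · have : ∑ j, z j = (∑ j, y j) + 1 := by
        have hmem : i ∈ Finset.univ := Finset.mem_univ i
        rw [hz, Finset.sum_update_of_mem hmem]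
        rw [← Finset.sum_erase_add Finset.univ y hmem, Finset.sdiff_singleton_eq_erase]
        ring
      omega
    · intro j
      rcases eq_or_ne j i with rfl | hji
      · simp [hz]
      · simp [hz, Function.update_of_ne hji]
    · intro hcontra
      have := congrFun hcontra i
      simp [hz] at this
end

section
/- With T_b, B(x), F_b(x) as defined (capacity q, bias b summing to 0), define M_b(x) as the set of minimizers of Σ_i T_b(y)_i^2 over y ∈ B(x) subject to Σ_i y_i = min(q, Σ_i x_i). Then for every x ∈ Z_+^n, F_b(x) = M_b(x). -/
open Finset

/-- `M_b(x)`: minimizers of `Σ (T_b y i)^2` over `B(x)` subject to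
`Σ y = min q (Σ x)`. -/
noncomputable def memM {n : ℕ} (q : ℕ) (b : Fin n → ℝ) (x y : Fin n → ℤ) : Prop :=
  memB q x y ∧ ∑ i, y i = min (q : ℤ) (∑ i, x i) ∧
    ∀ z : Fin n → ℤ, memB q x z → ∑ i, z i = min (q : ℤ) (∑ i, x i) →
      ∑ i, (Tb b y i) ^ 2 ≤ ∑ i, (Tb b z i) ^ 2

namespace Stmt3Aux

variable {n : ℕ}

variable {n : ℕ}

def pref (n k : ℕ) : Finset (Fin n) := Finset.univ.filter (fun i => (i : ℕ) < k)

lemma mem_pref {k : ℕ} {i : Fin n} : i ∈ pref n k ↔ (i : ℕ) < k := by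
  simp [pref]

lemma pref_top : pref n n = Finset.univ := by
  ext i; simp [mem_pref, i.isLt]

lemma pref_succ {m : ℕ} (hm : m < n) :
    pref n (m + 1) = insert ⟨m, hm⟩ (pref n m) := by
  ext i
  simp only [mem_pref, Finset.mem_insert, Fin.ext_iff]
  omega

lemma notMem_pref_self {m : ℕ} (hm : m < n) : (⟨m, hm⟩ : Fin n) ∉ pref n m := by
  simp [mem_pref]

lemma card_pref {k : ℕ} (hk : k ≤ n) : (pref n k).card = k := by
  induction k with
  | zero => simp [pref]
  | succ m ih =>
    rw [pref_succ hk, Finset.card_insert_of_notMem (notMem_pref_self hk), ih (by omega)]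

lemma strictMono_nat_le {k : ℕ} (g : Fin k → ℕ) (hg : StrictMono g) :
    ∀ m (hm : m < k), m ≤ g ⟨m, hm⟩ := by
  intro m
  induction m with
  | zero => exact fun _ => Nat.zero_le _
  | succ m ih =>
    intro hm
    have h1 : m < k := by omega
    have h2 := ih h1
    have h3 : g ⟨m, h1⟩ < g ⟨m + 1, hm⟩ := hg (by simp [Fin.lt_def])
    omega

lemma sum_le_sum_pref {v : Fin n → ℝ} (hv : Antitone v) (A : Finset (Fin n)) :
    ∑ i ∈ A, v i ≤ ∑ i ∈ pref n A.card, v i := by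
  have hkn : A.card ≤ n := by simpa using A.card_le_univ
  have hmapA : Finset.univ.map (A.orderEmbOfFin rfl).toEmbedding = A := by
    ext i
    simp only [Finset.mem_map, Finset.mem_univ, true_and]
    constructor
    · rintro ⟨j, rfl⟩; exact A.orderEmbOfFin_mem rfl j
    · intro hi
      have h := A.range_orderEmbOfFin rfl
      have : i ∈ Set.range (A.orderEmbOfFin rfl) := by rw [h]; exact hi
      exact this
  have hmapP : Finset.univ.map (Fin.castLEEmb hkn) = pref n A.card := by
    ext i
    simp only [Finset.mem_map, Finset.mem_univ, true_and, mem_pref]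
    constructor
    · rintro ⟨j, rfl⟩; simpa using j.isLt
    · intro hi
      exact ⟨⟨(i : ℕ), hi⟩, by ext; simp⟩
  rw [← hmapP]
  conv_lhs => rw [← hmapA]
  rw [Finset.sum_map, Finset.sum_map]
  apply Finset.sum_le_sum
  intro j _
  apply hv
  have hsm : StrictMono (fun j : Fin A.card => ((A.orderEmbOfFin rfl j : Fin n) : ℕ)) := by
    intro a b hab
    exact (A.orderEmbOfFin rfl).strictMono hab
  have h5 := strictMono_nat_le _ hsm (j : ℕ) j.isLt
  rw [Fin.le_def]
  have h6 : (⟨(j : ℕ), j.isLt⟩ : Fin A.card) = j := by ext; rfl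
  rw [h6] at h5
  simpa using h5

lemma abel_aux {v w : Fin n → ℝ} (hv : Antitone v)
    (hW : ∀ m, m ≤ n → 0 ≤ ∑ i ∈ pref n m, w i) :
    ∀ m, (hm : m ≤ n) → ∀ t : ℝ, (∀ i : Fin n, (i : ℕ) < m → t ≤ v i) →
      t * ∑ i ∈ pref n m, w i ≤ ∑ i ∈ pref n m, v i * w i := by
  intro m
  induction m with
  | zero => intro _ t _; simp [pref]
  | succ m ih =>
    intro hm t ht
    have hmn : m < n := hm
    have hvm : ∀ i : Fin n, (i : ℕ) < m → v ⟨m, hmn⟩ ≤ v i := by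
      intro i hi
      apply hv
      rw [Fin.le_def]
      simpa using le_of_lt hi
    have h1 := ih (le_of_lt hmn) (v ⟨m, hmn⟩) hvm
    have h2 : 0 ≤ ∑ i ∈ pref n (m + 1), w i := hW _ hm
    have ht' : t ≤ v ⟨m, hmn⟩ := ht _ (by simp)
    have h3 : t * ∑ i ∈ pref n (m+1), w i ≤ v ⟨m, hmn⟩ * ∑ i ∈ pref n (m+1), w i :=
      mul_le_mul_of_nonneg_right ht' h2
    rw [pref_succ hmn, Finset.sum_insert (notMem_pref_self hmn),
        Finset.sum_insert (notMem_pref_self hmn)]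
    rw [pref_succ hmn, Finset.sum_insert (notMem_pref_self hmn)] at h3
    nlinarith [h1, h3]

lemma abel_nonneg {v w : Fin n → ℝ} (hv : Antitone v)
    (hW : ∀ m, m ≤ n → 0 ≤ ∑ i ∈ pref n m, w i)
    (hWn : ∑ i, w i = 0) :
    0 ≤ ∑ i, v i * w i := by
  rcases Nat.eq_zero_or_pos n with hn | hn
  · subst hn; simp
  · have hlast : ∀ i : Fin n, (i : ℕ) < n → v ⟨n - 1, by omega⟩ ≤ v i := by
      intro i _
      apply hv
      rw [Fin.le_def]
      simp
      omega
    have h := abel_aux hv hW n le_rfl (v ⟨n - 1, by omega⟩) hlast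
    rw [pref_top, hWn, mul_zero] at h
    exact h

lemma exists_antitone_perm (u : Fin n → ℝ) :
    ∃ σ : Equiv.Perm (Fin n), Antitone (u ∘ σ) := by
  refine ⟨Tuple.sort (fun i => -u i), ?_⟩
  have h := Tuple.monotone_sort (fun i => -u i)
  intro i j hij
  have h2 := h hij
  simp only [Function.comp_apply] at h2 ⊢
  linarith

lemma maj_key {u v : Fin n → ℝ} (h : maj u v) :
    ∑ i, v i ^ 2 ≤ ∑ i, u i ^ 2 ∧ (∑ i, v i ^ 2 = ∑ i, u i ^ 2 → maj v u) := by
  obtain ⟨σu, hu⟩ := exists_antitone_perm u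
  obtain ⟨σv, hv⟩ := exists_antitone_perm v
  set u' : Fin n → ℝ := u ∘ σu with hu'
  set v' : Fin n → ℝ := v ∘ σv with hv'
  have hsu : ∀ f : ℝ → ℝ, ∑ i, f (u' i) = ∑ i, f (u i) := fun f =>
    Equiv.sum_comp σu (fun i => f (u i))
  have hsv : ∀ f : ℝ → ℝ, ∑ i, f (v' i) = ∑ i, f (v i) := fun f =>
    Equiv.sum_comp σv (fun i => f (v i))
  -- sum over a set of u is bounded by prefix of sorted u'
  have hub : ∀ A : Finset (Fin n), ∑ i ∈ A, u i ≤ ∑ i ∈ pref n A.card, u' i := by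
    intro A
    have h1 : ∑ i ∈ A.image σu.symm, u' i = ∑ i ∈ A, u i := by
      rw [Finset.sum_image (fun a _ b _ hab => σu.symm.injective hab)]
      apply Finset.sum_congr rfl
      intro i _
      simp [hu']
    have h2 := sum_le_sum_pref hu (A.image σu.symm)
    rw [Finset.card_image_of_injective _ σu.symm.injective] at h2
    linarith
  -- prefix sums of sorted v are achieved by an actual subset
  have hvset : ∀ k, k ≤ n → ∑ i ∈ (pref n k).image σv, v i = ∑ i ∈ pref n k, v' i := by
    intro k hk
    rw [Finset.sum_image (fun a _ b _ hab => σv.injective hab)]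
    apply Finset.sum_congr rfl
    intro i _
    simp [hv']
  have hvcard : ∀ k, k ≤ n → ((pref n k).image σv).card = k := by
    intro k hk
    rw [Finset.card_image_of_injective _ σv.injective, card_pref hk]
  -- prefix domination
  have hdom : ∀ k, k ≤ n → ∑ i ∈ pref n k, v' i ≤ ∑ i ∈ pref n k, u' i := by
    intro k hk
    obtain ⟨A, hAcard, hAle⟩ := h.1 ((pref n k).image σv)
    rw [hvset k hk] at hAle
    have h2 := hub A
    rw [hAcard, hvcard k hk] at h2
    linarith
  -- Abel
  have habel : 0 ≤ ∑ i, v' i * (u' i - v' i) := by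
    apply abel_nonneg hv
    · intro m hm
      rw [Finset.sum_sub_distrib]
      have := hdom m hm
      linarith
    · rw [Finset.sum_sub_distrib]
      have h1 : ∑ i, u' i = ∑ i, u i := hsu id
      have h2 : ∑ i, v' i = ∑ i, v i := hsv id
      rw [h1, h2, h.2]
      ring
  set P : ℝ := ∑ i, v' i * u' i with hP
  set Q : ℝ := ∑ i, v i ^ 2 with hQ
  set R : ℝ := ∑ i, u i ^ 2 with hR
  have hQ' : ∑ i, v' i ^ 2 = Q := hsv (fun t => t ^ 2)
  have hR' : ∑ i, u' i ^ 2 = R := hsu (fun t => t ^ 2)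
  have hQP : Q ≤ P := by
    have : ∑ i, v' i * (u' i - v' i) = P - ∑ i, v' i ^ 2 := by
      rw [hP, ← Finset.sum_sub_distrib]
      apply Finset.sum_congr rfl
      intro i _; ring
    rw [this, hQ'] at habel
    linarith
  have hCS : P ^ 2 ≤ Q * R := by
    have := Finset.sum_mul_sq_le_sq_mul_sq Finset.univ v' u'
    rw [hQ', hR'] at this
    exact this
  have hQ0 : 0 ≤ Q := Finset.sum_nonneg (fun i _ => sq_nonneg _)
  have hR0 : 0 ≤ R := Finset.sum_nonneg (fun i _ => sq_nonneg _)
  constructor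
  · rcases eq_or_lt_of_le hQ0 with hq | hq
    · linarith
    · nlinarith
  · intro hQR
    have hPQ : P = Q := by nlinarith
    have hzero : ∑ i, (v' i - u' i) ^ 2 = 0 := by
      have hexp : ∑ i, (v' i - u' i) ^ 2
          = (∑ i, v' i ^ 2) - 2 * P + ∑ i, u' i ^ 2 := by
        rw [hP, Finset.mul_sum, ← Finset.sum_sub_distrib, ← Finset.sum_add_distrib]
        apply Finset.sum_congr rfl
        intro i _; ring
      rw [hexp, hQ', hR', hPQ, hQR]
      ring
    have heq : ∀ i, v' i = u' i := by
      intro i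
      have := (Finset.sum_eq_zero_iff_of_nonneg (fun i _ => sq_nonneg (v' i - u' i))).1 hzero i (Finset.mem_univ i)
      have := sq_eq_zero_iff.1 this
      linarith
    constructor
    · intro B
      refine ⟨(pref n B.card).image σv, ?_, ?_⟩
      · exact hvcard B.card (by simpa using B.card_le_univ)
      · have h1 := hub B
        have h2 : ∑ i ∈ pref n B.card, u' i = ∑ i ∈ pref n B.card, v' i :=
          Finset.sum_congr rfl (fun i _ => (heq i).symm)
        rw [hvset B.card (by simpa using B.card_le_univ)]
        linarith
    · exact h.2.symm

/-- transfer one unit from coordinate `i` to coordinate `j` -/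
def tfer (i j : Fin n) (y : Fin n → ℤ) : Fin n → ℤ :=
  fun k => y k - (if k = i then 1 else 0) + (if k = j then 1 else 0)

lemma sum_tfer (i j : Fin n) (y : Fin n → ℤ) : ∑ k, tfer i j y k = ∑ k, y k := by
  simp [tfer, Finset.sum_add_distrib, Finset.sum_sub_distrib, Finset.sum_ite_eq']

lemma Tb_tfer (b : Fin n → ℝ) (y : Fin n → ℤ) (i j : Fin n) :
    Tb b (tfer i j y) =
      fun k => Tb b y k - (if k = i then (1 : ℝ) else 0) + (if k = j then 1 else 0) := by
  funext k
  have hs : ∑ m, ((tfer i j y m : ℤ) : ℝ) = ∑ m, ((y m : ℤ) : ℝ) := by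
    have h := sum_tfer i j y
    exact_mod_cast congrArg (fun z : ℤ => (z : ℝ)) h
  simp only [Tb]
  rw [hs]
  simp only [tfer]
  push_cast [apply_ite (Int.cast : ℤ → ℝ)]
  ring

lemma sum_sq_update (u : Fin n → ℝ) (i j : Fin n) (hij : i ≠ j) :
    ∑ k, (u k - (if k = i then (1 : ℝ) else 0) + (if k = j then 1 else 0)) ^ 2
      = (∑ k, u k ^ 2) + 2 - 2 * (u i - u j) := by
  have hpt : ∀ k : Fin n, (u k - (if k = i then (1 : ℝ) else 0) + (if k = j then 1 else 0)) ^ 2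
      = u k ^ 2 + ((if k = i then 1 - 2 * u i else 0) + (if k = j then 1 + 2 * u j else 0)) := by
    intro k
    rcases eq_or_ne k i with rfl | hki
    · simp [hij]
      ring
    · rcases eq_or_ne k j with rfl | hkj
      · simp [hki]
        ring
      · simp [hki, hkj]
  rw [Finset.sum_congr rfl (fun k _ => hpt k), Finset.sum_add_distrib,
    Finset.sum_add_distrib, Finset.sum_ite_eq', Finset.sum_ite_eq']
  simp
  ring

lemma smaj_tfer (u : Fin n → ℝ) (i j : Fin n) (hij : i ≠ j) (h : u j + 1 < u i) :
    smaj u (fun k => u k - (if k = i then (1 : ℝ) else 0) + (if k = j then 1 else 0)) := by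
  set u2 : Fin n → ℝ :=
    fun k => u k - (if k = i then (1 : ℝ) else 0) + (if k = j then 1 else 0) with hu2
  have hsum2 : ∀ B : Finset (Fin n),
      ∑ k ∈ B, u2 k = ∑ k ∈ B, u k - (if i ∈ B then 1 else 0) + (if j ∈ B then 1 else 0) := by
    intro B
    simp [hu2, Finset.sum_add_distrib, Finset.sum_sub_distrib, Finset.sum_ite_eq']
  have hmaj : maj u u2 := by
    constructor
    · intro B
      by_cases hjB : j ∈ B
      · by_cases hiB : i ∈ B
        · exact ⟨B, rfl, by rw [hsum2]; simp [hiB, hjB]⟩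
        · refine ⟨insert i (B.erase j), ?_, ?_⟩
          · rw [Finset.card_insert_of_notMem (fun hmem => hiB (Finset.mem_of_mem_erase hmem)),
              Finset.card_erase_of_mem hjB]
            have : 0 < B.card := Finset.card_pos.2 ⟨j, hjB⟩
            omega
          · rw [Finset.sum_insert (fun hmem => hiB (Finset.mem_of_mem_erase hmem))]
            have he : u j + ∑ k ∈ B.erase j, u k = ∑ k ∈ B, u k :=
              Finset.add_sum_erase B u hjB
            rw [hsum2]
            simp only [hiB, hjB, if_true, if_false]
            linarith
      · refine ⟨B, rfl, ?_⟩
        rw [hsum2]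
        simp only [hjB, if_false]
        split_ifs <;> linarith
    · have := hsum2 Finset.univ
      simp only [Finset.mem_univ, if_true] at this
      rw [this]
      ring
  refine ⟨hmaj, ?_⟩
  intro hmaj2
  have h1 := (maj_key hmaj2).1
  have h2 : ∑ k, u2 k ^ 2 = (∑ k, u k ^ 2) + 2 - 2 * (u i - u j) :=
    sum_sq_update u i j hij
  rw [h2] at h1
  linarith

lemma Tb_sum (b : Fin n → ℝ) (hb : ∑ i, b i = 0) (y : Fin n → ℤ) :
    ∑ i, Tb b y i = ∑ i, (y i : ℝ) := by
  simp [Tb, Finset.sum_add_distrib, ← Finset.mul_sum, hb]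

lemma exists_good_tfer (b : Fin n → ℝ) (x y : Fin n → ℤ)
    (hy0 : ∀ i, 0 ≤ y i) (hyx : ∀ i, y i ≤ x i) :
    ∀ N : ℕ, ∀ w : Fin n → ℤ, (∀ i, 0 ≤ w i) → (∀ i, w i ≤ x i) →
      (∑ i, w i = ∑ i, y i) →
      (∑ i, (Tb b w i) ^ 2 < ∑ i, (Tb b y i) ^ 2) →
      (∑ i, (y i - w i).natAbs ≤ N) →
      ∃ i j, i ≠ j ∧ 1 ≤ y i ∧ y j + 1 ≤ x j ∧ Tb b y j + 1 < Tb b y i := by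
  intro N
  induction N with
  | zero =>
    intro w h0 hwx hsum hlt hN
    exfalso
    have hz : ∑ i, (y i - w i).natAbs = 0 := Nat.le_zero.1 hN
    have heq : w = y := by
      funext i
      have := (Finset.sum_eq_zero_iff).1 hz i (Finset.mem_univ i)
      omega
    rw [heq] at hlt
    exact lt_irrefl _ hlt
  | succ N ih =>
    intro w h0 hwx hsum hlt hN
    have hne : w ≠ y := by
      intro he
      rw [he] at hlt
      exact lt_irrefl _ hlt
    have hexi : ∃ i, w i < y i := by
      by_contra hc
      push_neg at hc
      have hz : ∑ i, (w i - y i) = 0 := by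
        rw [Finset.sum_sub_distrib, hsum]; ring
      have h1 := (Finset.sum_eq_zero_iff_of_nonneg
        (fun i _ => sub_nonneg.2 (hc i))).1 hz
      exact hne (funext fun i => by have := h1 i (Finset.mem_univ i); omega)
    obtain ⟨i, hi⟩ := hexi
    have hexj : ∃ j, y j < w j := by
      by_contra hc
      push_neg at hc
      have hz : ∑ k, (y k - w k) = 0 := by
        rw [Finset.sum_sub_distrib, hsum]; ring
      have h1 := (Finset.sum_eq_zero_iff_of_nonneg
        (fun k _ => sub_nonneg.2 (hc k))).1 hz
      exact hne (funext fun k => by have := h1 k (Finset.mem_univ k); omega)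
    obtain ⟨j, hj⟩ := hexj
    have hij : i ≠ j := by
      intro he; rw [he] at hi; omega
    by_cases hkey : Tb b y j + 1 < Tb b y i
    · exact ⟨i, j, hij, by have := h0 i; omega, by have := hwx j; omega, hkey⟩
    · push_neg at hkey
      set w2 : Fin n → ℤ := tfer j i w with hw2
      -- the sums of coordinates agree, hence the bias terms agree
      have hS : (∑ m, ((w m : ℤ) : ℝ)) = ∑ m, ((y m : ℤ) : ℝ) := by
        exact_mod_cast congrArg (fun z : ℤ => (z : ℝ)) hsum
      -- pointwise convexity
      have hpt : ∀ k ∈ Finset.univ,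
          (Tb b (tfer i j y) k) ^ 2 + (Tb b w2 k) ^ 2
            ≤ (Tb b y k) ^ 2 + (Tb b w k) ^ 2 := by
        intro k _
        simp only [hw2, Tb_tfer]
        rcases eq_or_ne k i with rfl | hki
        · simp only [if_pos rfl, if_neg hij, if_neg (Ne.symm hij)]
          have h1 : ((w k : ℤ) : ℝ) + 1 ≤ ((y k : ℤ) : ℝ) := by exact_mod_cast hi
          simp only [Tb, hS, if_true]
          nlinarith [h1]
        · rcases eq_or_ne k j with rfl | hkj
          · simp only [if_pos rfl, if_neg hki]
            have h1 : ((y k : ℤ) : ℝ) + 1 ≤ ((w k : ℤ) : ℝ) := by exact_mod_cast hj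
            simp only [Tb, hS, if_true]
            nlinarith [h1]
          · simp [hki, hkj]
      have hconv := Finset.sum_le_sum hpt
      rw [Finset.sum_add_distrib, Finset.sum_add_distrib] at hconv
      -- the y-side transfer does not decrease the objective
      have hfz : ∑ k, (Tb b (tfer i j y) k) ^ 2
          = (∑ k, (Tb b y k) ^ 2) + 2 - 2 * (Tb b y i - Tb b y j) := by
        rw [Tb_tfer]
        exact sum_sq_update _ i j hij
      have hzge : ∑ k, (Tb b y k) ^ 2 ≤ ∑ k, (Tb b (tfer i j y) k) ^ 2 := by
        rw [hfz]; linarith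
      have hfw2 : ∑ k, (Tb b w2 k) ^ 2 ≤ ∑ k, (Tb b w k) ^ 2 := by linarith
      -- bounds for w2
      have h02 : ∀ k, 0 ≤ w2 k := by
        intro k
        simp only [hw2, tfer]
        rcases eq_or_ne k j with rfl | hkj
        · simp [Ne.symm hij]
          have := hy0 k; omega
        · rcases eq_or_ne k i with rfl | hki
          · simp [hkj]
            have := h0 k; omega
          · simp [hki, hkj]
            exact h0 k
      have hx2 : ∀ k, w2 k ≤ x k := by
        intro k
        simp only [hw2, tfer]
        rcases eq_or_ne k j with rfl | hkj
        · simp [Ne.symm hij]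
          have := hwx k; omega
        · rcases eq_or_ne k i with rfl | hki
          · simp [hkj]
            have := hyx k; omega
          · simp [hki, hkj]
            exact hwx k
      have hsum2 : ∑ k, w2 k = ∑ k, y k := by
        rw [hw2, sum_tfer]; exact hsum
      have hlt2 : ∑ k, (Tb b w2 k) ^ 2 < ∑ k, (Tb b y k) ^ 2 :=
        lt_of_le_of_lt hfw2 hlt
      have hNA : (∑ k, (y k - w2 k).natAbs) + 2 = ∑ k, (y k - w k).natAbs := by
        have hk : ∀ k : Fin n, (y k - w2 k).natAbs
            + ((if k = i then 1 else 0) + (if k = j then 1 else 0))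
            = (y k - w k).natAbs := by
          intro k
          simp only [hw2, tfer]
          rcases eq_or_ne k i with rfl | hki
          · simp [hij]
            omega
          · rcases eq_or_ne k j with rfl | hkj
            · simp [Ne.symm hij]
              omega
            · simp [hki, hkj]
        calc (∑ k, (y k - w2 k).natAbs) + 2
            = ∑ k, ((y k - w2 k).natAbs
              + ((if k = i then 1 else 0) + (if k = j then 1 else 0))) := by
              rw [Finset.sum_add_distrib, Finset.sum_add_distrib,
                Finset.sum_ite_eq', Finset.sum_ite_eq']
              simp
          _ = ∑ k, (y k - w k).natAbs := Finset.sum_congr rfl (fun k _ => hk k)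
      exact ih w2 h02 hx2 hsum2 hlt2 (by omega)

end Stmt3Aux

open Stmt3Aux

/-- The frontier coincides with the set of quadratic minimizers: `F_b(x) = M_b(x)`. -/
theorem stmt3 {n : ℕ} (q : ℕ) (hq : 0 < q) (b : Fin n → ℝ) (hb : ∑ i, b i = 0)
    (x : Fin n → ℤ) (hx : ∀ i, 0 ≤ x i) (y : Fin n → ℤ) :
    memF q b x y ↔ memM q b x y := by
  constructor
  · rintro ⟨hyB, hnex⟩
    obtain ⟨h0, hle, hqle⟩ := hyB
    have hyx : ∑ i, y i ≤ ∑ i, x i := Finset.sum_le_sum (fun i _ => hle i)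
    have hsy : ∑ i, y i = min (q : ℤ) (∑ i, x i) := by
      rcases lt_or_eq_of_le (le_min hqle hyx) with hlt | he
      · exfalso
        have hexi : ∃ i, y i < x i := by
          by_contra hc
          push_neg at hc
          have h1 : ∑ i, x i ≤ ∑ i, y i := Finset.sum_le_sum (fun i _ => hc i)
          have h2 := min_le_right (q : ℤ) (∑ i, x i)
          omega
        obtain ⟨i, hi⟩ := hexi
        apply hnex
        refine ⟨fun k => y k + (if k = i then 1 else 0), ⟨?_, ?_, ?_⟩, Or.inl ⟨?_, ?_⟩⟩
        · intro k
          show 0 ≤ y k + if k = i then 1 else 0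
          have := h0 k
          split_ifs <;> omega
        · intro k
          rcases eq_or_ne k i with rfl | hki
          · simp
            omega
          · simp [hki]
            exact hle k
        · rw [Finset.sum_add_distrib, Finset.sum_ite_eq']
          simp only [Finset.mem_univ, if_true]
          have h3 := min_le_left (q : ℤ) (∑ i, x i)
          omega
        · intro k
          show y k ≤ y k + if k = i then 1 else 0
          split_ifs <;> simp
        · intro he
          have := congrFun he i
          simp at this
      · exact he
    refine ⟨⟨h0, hle, hqle⟩, hsy, ?_⟩
    intro z hz hzs
    by_contra hlt
    push_neg at hlt
    obtain ⟨i, j, hij, h1y, hjx, hkey⟩ :=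
      exists_good_tfer b x y h0 hle (∑ k, (y k - z k).natAbs) z hz.1 hz.2.1
        (by rw [hzs, ← hsy]) hlt le_rfl
    apply hnex
    refine ⟨tfer i j y, ⟨?_, ?_, ?_⟩, Or.inr ?_⟩
    · intro k
      simp only [tfer]
      rcases eq_or_ne k i with rfl | hki
      · simp [hij]
        omega
      · rcases eq_or_ne k j with rfl | hkj
        · simp [hki]
          have := h0 k; omega
        · simp [hki, hkj]
          exact h0 k
    · intro k
      simp only [tfer]
      rcases eq_or_ne k i with rfl | hki
      · simp [hij]
        have := hle k; omega
      · rcases eq_or_ne k j with rfl | hkj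
        · simp [hki]
          omega
        · simp [hki, hkj]
          exact hle k
    · rw [sum_tfer]
      exact hqle
    · have h5 := smaj_tfer (Tb b y) i j hij hkey
      rw [Tb_tfer b y i j]
      exact h5
  · rintro ⟨hyB, hsy, hmin⟩
    refine ⟨hyB, ?_⟩
    rintro ⟨z, hzB, hcase | hsm⟩
    · obtain ⟨hyz, hne⟩ := hcase
      have hex : ∃ i, y i < z i := by
        by_contra hc
        push_neg at hc
        exact hne (funext fun i => le_antisymm (hyz i) (hc i))
      obtain ⟨i, hi⟩ := hex
      have h1 : ∑ k, y k < ∑ k, z k :=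
        Finset.sum_lt_sum (fun k _ => hyz k) ⟨i, Finset.mem_univ i, hi⟩
      have h2 : ∑ k, z k ≤ min (q : ℤ) (∑ k, x k) :=
        le_min hzB.2.2 (Finset.sum_le_sum (fun k _ => hzB.2.1 k))
      omega
    · have hsz : ∑ i, z i = ∑ i, y i := by
        have h1 := Tb_sum b hb y
        have h2 := Tb_sum b hb z
        have h3 := hsm.1.2
        rw [h1, h2] at h3
        exact_mod_cast h3.symm
      have hle2 := hmin z hzB (hsz.trans hsy)
      have hge := (maj_key hsm.1).1
      have heq : ∑ i, (Tb b z i) ^ 2 = ∑ i, (Tb b y i) ^ 2 := le_antisymm hge hle2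
      exact hsm.2 ((maj_key hsm.1).2 heq)
end

section
/- Suppose y, z ∈ F_b(x) with y ≠ z. Then T_b(y) is a permutation of T_b(z); moreover there is a constant a (depending only on x, b, q, not on y or z) and an involutive permutation π of {1,...,n} such that T_b(y)_i = T_b(z)_{π(i)} for all i, and whenever T_b(y)_i > T_b(z)_i we have T_b(y)_i = T_b(z)_i + 1 = a, and whenever T_b(y)_i < T_b(z)_i we have T_b(y)_i + 1 = T_b(z)_i = a. -/
open Finset

section AuxLemmas
variable {n : ℕ} {q : ℕ} {b : Fin n → ℝ} {x : Fin n → ℤ}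

lemma aux_not_lt {y z : Fin n → ℤ} (hy : memF q b x y) (hz : memB q x z) :
    ¬ (∑ i, y i < ∑ i, z i) := by
  intro hlt
  have hq' : ∑ i, y i < (q : ℤ) := lt_of_lt_of_le hlt hz.2.2
  have hex : ∃ i, y i < x i := by
    by_contra hno
    push_neg at hno
    have hyx : ∀ i, y i = x i := fun i => le_antisymm (hy.1.2.1 i) (hno i)
    have : ∑ i, z i ≤ ∑ i, y i := by
      simp only [hyx]
      exact Finset.sum_le_sum (fun i _ => hz.2.1 i)
    omega
  obtain ⟨i, hi⟩ := hex
  apply hy.2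
  refine ⟨Function.update y i (y i + 1), ⟨?_, ?_, ?_⟩, Or.inl ⟨?_, ?_⟩⟩
  · intro k
    rcases eq_or_ne k i with rfl | hk
    · simp; have := hy.1.1 k; omega
    · simp [Function.update_of_ne hk]; exact hy.1.1 k
  · intro k
    rcases eq_or_ne k i with rfl | hk
    · simp; omega
    · simp [Function.update_of_ne hk]; exact hy.1.2.1 k
  · rw [Finset.sum_update_of_mem (Finset.mem_univ i)]
    have := Finset.sum_eq_sum_sdiff_singleton_add (Finset.mem_univ i) y
    omega
  · intro k
    rcases eq_or_ne k i with rfl | hk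
    · simp
    · simp [Function.update_of_ne hk]
  · intro hcontra
    have := congrFun hcontra i
    simp at this

lemma aux_sum_eq {y z : Fin n → ℤ} (hy : memF q b x y) (hz : memF q b x z) :
    ∑ i, y i = ∑ i, z i := by
  have h1 := aux_not_lt hy hz.1
  have h2 := aux_not_lt hz hy.1
  omega

lemma aux_tb_sub {y z : Fin n → ℤ} (hsum : ∑ i, y i = ∑ i, z i) (i : Fin n) :
    Tb b y i - Tb b z i = (y i : ℝ) - (z i : ℝ) := by
  have : (∑ j, ((y j : ℝ))) = ∑ j, ((z j : ℝ)) := by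
    have := congrArg (fun t : ℤ => (t : ℝ)) hsum
    push_cast at this
    exact this
  simp [Tb, this]

lemma aux_exists_lt {y z : Fin n → ℤ} (hsum : ∑ i, y i = ∑ i, z i) (hne : y ≠ z) :
    ∃ i, z i < y i := by
  by_contra hno
  push_neg at hno
  have := (Finset.sum_eq_sum_iff_of_le (fun i _ => hno i)).1 hsum
  exact hne (funext fun i => this i (Finset.mem_univ i))


lemma aux_sup (w : Fin n → ℝ) (t : ℝ) (A : Finset (Fin n))
    (hcard : A.card = (univ.filter (fun k => t < w k)).card) (i : Fin n)
    (hiB : i ∈ univ.filter (fun k => t < w k)) (hiA : i ∉ A) :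
    ∑ k ∈ A, w k + (w i - t) ≤ ∑ k ∈ univ.filter (fun k => t < w k), w k := by
  set B := univ.filter (fun k => t < w k) with hB
  have hiBA : i ∈ B \ A := Finset.mem_sdiff.2 ⟨hiB, hiA⟩
  have hrr : (A \ B).card = (B \ A).card := by
    have h1 := Finset.card_sdiff_add_card_inter A B
    have h2 := Finset.card_sdiff_add_card_inter B A
    rw [Finset.inter_comm] at h2
    omega
  set r := (B \ A).card with hr
  have hr1 : 1 ≤ r := Finset.card_pos.2 ⟨i, hiBA⟩
  have hA : ∑ k ∈ A ∩ B, w k + ∑ k ∈ A \ B, w k = ∑ k ∈ A, w k :=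
    Finset.sum_inter_add_sum_sdiff A B w
  have hBs : ∑ k ∈ B ∩ A, w k + ∑ k ∈ B \ A, w k = ∑ k ∈ B, w k :=
    Finset.sum_inter_add_sum_sdiff B A w
  rw [Finset.inter_comm] at hBs
  have hAB_le : ∑ k ∈ A \ B, w k ≤ (r : ℝ) * t := by
    have := Finset.sum_le_card_nsmul (A \ B) w t (fun k hk => by
      have : k ∉ B := (Finset.mem_sdiff.1 hk).2
      simp only [hB, Finset.mem_filter, Finset.mem_univ, true_and] at this
      linarith [not_lt.1 this])
    rw [nsmul_eq_mul, hrr] at this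
    exact this
  have hBA_ge : w i + ((r : ℝ) - 1) * t ≤ ∑ k ∈ B \ A, w k := by
    have herase : ∑ k ∈ B \ A, w k = w i + ∑ k ∈ (B \ A).erase i, w k :=
      (Finset.add_sum_erase _ w hiBA).symm
    have hcarde : ((B \ A).erase i).card = r - 1 := by
      rw [Finset.card_erase_of_mem hiBA]
    have := Finset.card_nsmul_le_sum ((B \ A).erase i) w t (fun k hk => by
      have hkB : k ∈ B := (Finset.mem_sdiff.1 (Finset.mem_of_mem_erase hk)).1
      simp only [hB, Finset.mem_filter, Finset.mem_univ, true_and] at hkB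
      linarith)
    rw [hcarde, nsmul_eq_mul, Nat.cast_sub hr1, Nat.cast_one] at this
    linarith [herase, this]
  have ht : t < w i := by
    simp only [hB, Finset.mem_filter, Finset.mem_univ, true_and] at hiB
    exact hiB
  nlinarith [hA, hBs, hAB_le, hBA_ge]


lemma aux_transfer {y : Fin n → ℤ} (hy : memF q b x y)
    (i j : Fin n) (hij : i ≠ j) (hi : 1 ≤ y i) (hj : y j < x j) :
    Tb b y i ≤ Tb b y j + 1 := by
  by_contra hcon
  push_neg at hcon
  set w := Tb b y with hw
  set y' : Fin n → ℤ := fun k => y k + (if k = j then 1 else 0) - (if k = i then 1 else 0)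
    with hy'
  have hy'j : y' j = y j + 1 := by simp [hy', hij.symm]
  have hy'i : y' i = y i - 1 := by simp [hy', hij]
  have hy'k : ∀ k, k ≠ i → k ≠ j → y' k = y k := by
    intro k h1 h2; simp [hy', h1, h2]
  have hsum' : ∑ k, y' k = ∑ k, y k := by
    simp only [hy']
    rw [Finset.sum_sub_distrib, Finset.sum_add_distrib, Finset.sum_ite_eq' univ j,
      Finset.sum_ite_eq' univ i]
    simp
  have hmemB : memB q x y' := by
    refine ⟨?_, ?_, ?_⟩
    · intro k
      rcases eq_or_ne k i with rfl | h1
      · rw [hy'i]; omega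
      rcases eq_or_ne k j with rfl | h2
      · rw [hy'j]; have := hy.1.1 k; omega
      · rw [hy'k k h1 h2]; exact hy.1.1 k
    · intro k
      rcases eq_or_ne k i with rfl | h1
      · rw [hy'i]; have := hy.1.2.1 k; omega
      rcases eq_or_ne k j with rfl | h2
      · rw [hy'j]; omega
      · rw [hy'k k h1 h2]; exact hy.1.2.1 k
    · rw [hsum']; exact hy.1.2.2
  set w' := Tb b y' with hwd
  have hww' : ∀ k, w' k = w k + (if k = j then 1 else 0) - (if k = i then 1 else 0) := by
    intro k
    have hcast : (∑ m, ((y' m : ℝ))) = ∑ m, ((y m : ℝ)) := by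
      have := congrArg (fun t : ℤ => (t : ℝ)) hsum'
      push_cast at this
      exact this
    simp only [hwd, hw, Tb, hcast]
    rcases eq_or_ne k i with rfl | h1
    · rw [hy'i]; push_cast; simp [hij]; ring
    rcases eq_or_ne k j with rfl | h2
    · rw [hy'j]; push_cast; simp [hij.symm]; ring
    · rw [hy'k k h1 h2]; simp [h1, h2]
  have hsumA : ∀ A : Finset (Fin n), ∑ k ∈ A, w' k
      = ∑ k ∈ A, w k + (if j ∈ A then 1 else 0) - (if i ∈ A then 1 else 0) := by
    intro A
    calc ∑ k ∈ A, w' k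
        = ∑ k ∈ A, (w k + (if k = j then 1 else 0) - (if k = i then 1 else 0)) :=
          Finset.sum_congr rfl (fun k _ => hww' k)
      _ = _ := by
          rw [Finset.sum_sub_distrib, Finset.sum_add_distrib, Finset.sum_ite_eq' A j,
            Finset.sum_ite_eq' A i]
  have hmaj : maj w w' := by
    constructor
    · intro B
      by_cases hjB : j ∈ B
      · by_cases hiB : i ∈ B
        · exact ⟨B, rfl, by rw [hsumA B]; simp [hjB, hiB]⟩
        · refine ⟨insert i (B.erase j), ?_, ?_⟩
          · rw [Finset.card_insert_of_notMem (fun hmem => hiB (Finset.mem_of_mem_erase hmem)),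
              Finset.card_erase_of_mem hjB]
            have : 1 ≤ B.card := Finset.card_pos.2 ⟨j, hjB⟩
            omega
          · rw [hsumA B, Finset.sum_insert (fun hmem => hiB (Finset.mem_of_mem_erase hmem))]
            have := Finset.add_sum_erase B w hjB
            simp only [hjB, hiB, if_true, if_false]
            linarith
      · refine ⟨B, rfl, ?_⟩
        rw [hsumA B]
        simp only [hjB, if_false, add_zero]
        split <;> linarith
    · rw [hsumA univ]; simp
  have hnmaj : ¬ maj w' w := by
    rintro ⟨h1, -⟩
    set B := univ.filter (fun k => w j < w k) with hBdef
    obtain ⟨A, hcA, hle⟩ := h1 B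
    have hiB : i ∈ B := by
      simp only [hBdef, Finset.mem_filter, Finset.mem_univ, true_and]; linarith
    have hjB : j ∉ B := by
      simp only [hBdef, Finset.mem_filter, Finset.mem_univ, true_and]; exact lt_irrefl _
    have hlt : ∑ k ∈ A, w' k < ∑ k ∈ B, w k := by
      rw [hsumA A]
      by_cases hiA : i ∈ A
      · by_cases hAB : A = B
        · have hjA : j ∉ A := fun h => hjB (hAB ▸ h)
          simp only [hiA, hjA, if_true, if_false, add_zero]
          rw [hAB]
          linarith
        · have hBA : (B \ A).Nonempty := by
            by_contra hempty
            rw [Finset.not_nonempty_iff_eq_empty, Finset.sdiff_eq_empty_iff_subset] at hempty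
            exact hAB ((Finset.eq_of_subset_of_card_le hempty (le_of_eq hcA)).symm)
          obtain ⟨k₀, hk₀⟩ := hBA
          have hk₀B := (Finset.mem_sdiff.1 hk₀).1
          have hk₀A := (Finset.mem_sdiff.1 hk₀).2
          have hsup := aux_sup w (w j) A hcA k₀ hk₀B hk₀A
          have htk : w j < w k₀ := by
            simp only [hBdef, Finset.mem_filter, Finset.mem_univ, true_and] at hk₀B
            exact hk₀B
          have hjle : (if j ∈ A then (1:ℝ) else 0) ≤ 1 := by split <;> norm_num
          simp only [hiA, if_true]
          linarith
      · have := aux_sup w (w j) A hcA i hiB hiA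
        have hjle : (if j ∈ A then (1:ℝ) else 0) ≤ 1 := by split <;> norm_num
        have hile : (0:ℝ) ≤ if i ∈ A then (1:ℝ) else 0 := by split <;> norm_num
        linarith
    linarith
  exact hy.2 ⟨y', hmemB, Or.inr ⟨hmaj, hnmaj⟩⟩


lemma aux_pair {y z : Fin n → ℤ} (hy : memF q b x y) (hz : memF q b x z)
    {i j : Fin n} (hiP : z i < y i) (hjN : y j < z j) :
    y i = z i + 1 ∧ z j = y j + 1 ∧ Tb b y i = Tb b y j + 1 := by
  have hij : i ≠ j := by rintro rfl; omega
  have hsum := aux_sum_eq hy hz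
  have t1 : Tb b y i ≤ Tb b y j + 1 :=
    aux_transfer hy i j hij (by have := hz.1.1 i; omega) (lt_of_lt_of_le hjN (hz.1.2.1 j))
  have t2 : Tb b z j ≤ Tb b z i + 1 :=
    aux_transfer hz j i hij.symm (by have := hy.1.1 j; omega) (lt_of_lt_of_le hiP (hy.1.2.1 i))
  have s_i := aux_tb_sub (b := b) hsum i
  have s_j := aux_tb_sub (b := b) hsum j
  have key : (y i : ℝ) - (z i : ℝ) + ((z j : ℝ) - (y j : ℝ)) ≤ 2 := by linarith
  have keyZ : (y i - z i) + (z j - y j) ≤ (2:ℤ) := by exact_mod_cast key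
  have h1 : y i = z i + 1 := by omega
  have h2 : z j = y j + 1 := by omega
  refine ⟨h1, h2, ?_⟩
  have c1 : (y i : ℝ) - z i = 1 := by exact_mod_cast (by omega : y i - z i = (1:ℤ))
  have c2 : (y j : ℝ) - z j = -1 := by exact_mod_cast (by omega : y j - z j = (-1:ℤ))
  linarith

lemma aux_shared {y z v : Fin n → ℤ} (hy : memF q b x y) (hz : memF q b x z)
    (hv : memF q b x v) {i i' : Fin n}
    (hi : z i < y i) (hi' : v i' < y i') : Tb b y i = Tb b y i' := by
  obtain ⟨j, hj⟩ : ∃ j, y j < z j :=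
    aux_exists_lt (aux_sum_eq hz hy) (fun h => by rw [h] at hi; omega)
  obtain ⟨j', hj'⟩ : ∃ j', y j' < v j' :=
    aux_exists_lt (aux_sum_eq hv hy) (fun h => by rw [h] at hi'; omega)
  have a1eq : Tb b y i = Tb b y j + 1 := (aux_pair hy hz hi hj).2.2
  have a2eq : Tb b y i' = Tb b y j' + 1 := (aux_pair hy hv hi' hj').2.2
  have le1 : Tb b y i ≤ Tb b y i' := by
    rcases eq_or_ne i j' with rfl | hne
    · linarith
    · have := aux_transfer hy i j' hne (by have := hz.1.1 i; omega)
        (lt_of_lt_of_le hj' (hv.1.2.1 j'))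
      linarith
  have le2 : Tb b y i' ≤ Tb b y i := by
    rcases eq_or_ne i' j with rfl | hne
    · linarith
    · have := aux_transfer hy i' j hne (by have := hv.1.1 i'; omega)
        (lt_of_lt_of_le hj (hz.1.2.1 j))
      linarith
  linarith


end AuxLemmas

/-- Any two distinct members of the frontier are related by an involutive
permutation after transformation, with differences pinned down by a constant `a`
depending only on `x`, `b`, `q`. -/
theorem stmt5 {n : ℕ} (q : ℕ) (hq : 0 < q) (b : Fin n → ℝ) (hb : ∑ i, b i = 0)
    (x : Fin n → ℤ) (hx : ∀ i, 0 ≤ x i) :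
    ∃ a : ℝ, ∀ y z : Fin n → ℤ, memF q b x y → memF q b x z → y ≠ z →
      ∃ π : Equiv.Perm (Fin n), Function.Involutive π ∧
        (∀ i, Tb b y i = Tb b z (π i)) ∧
        (∀ i, Tb b z i < Tb b y i → Tb b y i = Tb b z i + 1 ∧ Tb b y i = a) ∧
        (∀ i, Tb b y i < Tb b z i → Tb b y i + 1 = Tb b z i ∧ Tb b z i = a) := by
  classical
  by_cases h : ∃ y₀ z₀ : Fin n → ℤ, ∃ i₀ : Fin n,
      memF q b x y₀ ∧ memF q b x z₀ ∧ z₀ i₀ < y₀ i₀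
  case neg =>
    refine ⟨0, fun y z hy hz hne => absurd ?_ h⟩
    obtain ⟨i, hi⟩ := aux_exists_lt (aux_sum_eq hy hz) hne
    exact ⟨y, z, i, hy, hz, hi⟩
  case pos =>
  obtain ⟨y₀, z₀, i₀, hy₀, hz₀, hi₀⟩ := h
  refine ⟨Tb b y₀ i₀, ?_⟩
  have glob : ∀ y z : Fin n → ℤ, memF q b x y → memF q b x z → ∀ i, z i < y i →
      Tb b y i = Tb b y₀ i₀ := by
    intro y z hy hz i hi
    by_cases hyy : y = y₀
    · subst hyy
      exact aux_shared hy hz hz₀ hi hi₀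
    · obtain ⟨k, hk⟩ := aux_exists_lt (aux_sum_eq hy hy₀) hyy
      obtain ⟨j, hj⟩ := aux_exists_lt (aux_sum_eq hy₀ hy) (Ne.symm hyy)
      have e1 : Tb b y i = Tb b y k := aux_shared hy hz hy₀ hi hk
      obtain ⟨-, hj1, e2⟩ := aux_pair hy hy₀ hk hj
      have e3 : Tb b y₀ j - Tb b y j = ((y₀ j : ℝ)) - y j := aux_tb_sub (aux_sum_eq hy₀ hy) j
      have e3' : Tb b y₀ j = Tb b y j + 1 := by
        have hcast : ((y₀ j : ℝ)) - y j = 1 := by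
          exact_mod_cast (by omega : y₀ j - y j = (1:ℤ))
        linarith
      have e4 : Tb b y₀ j = Tb b y₀ i₀ := aux_shared hy₀ hy hz₀ hj hi₀
      linarith
  intro y z hy hz hne
  have hsum := aux_sum_eq hy hz
  obtain ⟨ip, hip⟩ := aux_exists_lt hsum hne
  obtain ⟨jn, hjn⟩ := aux_exists_lt (aux_sum_eq hz hy) (Ne.symm hne)
  have hPval : ∀ i, z i < y i → Tb b y i = Tb b y₀ i₀ := fun i hi => glob y z hy hz i hi
  have hNval : ∀ j, y j < z j → Tb b z j = Tb b y₀ i₀ := fun j hj => glob z y hz hy j hj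
  have hstep : ∀ i, z i < y i → y i = z i + 1 := fun i hi => (aux_pair hy hz hi hjn).1
  have hstep' : ∀ j, y j < z j → z j = y j + 1 := fun j hj => (aux_pair hy hz hip hj).2.1
  have hsub : ∀ i, Tb b y i - Tb b z i = ((y i : ℝ)) - z i := aux_tb_sub hsum
  set P := univ.filter (fun i => z i < y i) with hPdef
  set N := univ.filter (fun i => y i < z i) with hNdef
  have hmemP : ∀ i, i ∈ P ↔ z i < y i := by
    intro i; simp [hPdef]
  have hmemN : ∀ i, i ∈ N ↔ y i < z i := by
    intro i; simp [hNdef]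
  have hcard : P.card = N.card := by
    have hsplit : ∀ i ∈ univ, y i - z i =
        (if z i < y i then (1:ℤ) else 0) - (if y i < z i then (1:ℤ) else 0) := by
      intro i _
      rcases lt_trichotomy (z i) (y i) with hlt | heq | hgt
      · have := hstep i hlt
        rw [if_pos hlt, if_neg (by omega)]
        omega
      · rw [if_neg (by omega), if_neg (by omega)]
        omega
      · have := hstep' i hgt
        rw [if_neg (by omega), if_pos hgt]
        omega
    have hsum0 : ∑ i, (y i - z i) = 0 := by
      rw [Finset.sum_sub_distrib, hsum, sub_self]
    rw [Finset.sum_congr rfl hsplit, Finset.sum_sub_distrib,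
      Finset.sum_boole, Finset.sum_boole] at hsum0
    have : ((P.card : ℤ)) = ((N.card : ℤ)) := by
      simp only [hPdef, hNdef]
      omega
    exact_mod_cast this
  have hdisj : ∀ i, i ∈ P → i ∈ N → False := by
    intro i h1 h2
    rw [hmemP] at h1; rw [hmemN] at h2; omega
  let e := Finset.equivOfCardEq hcard
  let f : Fin n → Fin n := fun i =>
    if h : i ∈ P then ((e ⟨i, h⟩ : {m // m ∈ N}) : Fin n)
    else if h' : i ∈ N then ((e.symm ⟨i, h'⟩ : {m // m ∈ P}) : Fin n)
    else i
  have hfP : ∀ i (h : i ∈ P), f i = ((e ⟨i, h⟩ : {m // m ∈ N}) : Fin n) := by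
    intro i h; simp only [f, dif_pos h]
  have hfN : ∀ i (h : i ∈ N), f i = ((e.symm ⟨i, h⟩ : {m // m ∈ P}) : Fin n) := by
    intro i h
    have hP : i ∉ P := fun h' => hdisj i h' h
    simp only [f, dif_neg hP, dif_pos h]
  have hfO : ∀ i, i ∉ P → i ∉ N → f i = i := by
    intro i h1 h2; simp only [f, dif_neg h1, dif_neg h2]
  have hinv : Function.Involutive f := by
    intro i
    by_cases h : i ∈ P
    · rw [hfP i h]
      have hmem : ((e ⟨i, h⟩ : {m // m ∈ N}) : Fin n) ∈ N := (e ⟨i, h⟩).2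
      rw [hfN _ hmem]
      have heq : (⟨((e ⟨i, h⟩ : {m // m ∈ N}) : Fin n), hmem⟩ : {m // m ∈ N}) = e ⟨i, h⟩ :=
        Subtype.ext rfl
      rw [heq, Equiv.symm_apply_apply]
    · by_cases h' : i ∈ N
      · rw [hfN i h']
        have hmem : ((e.symm ⟨i, h'⟩ : {m // m ∈ P}) : Fin n) ∈ P := (e.symm ⟨i, h'⟩).2
        rw [hfP _ hmem]
        have heq : (⟨((e.symm ⟨i, h'⟩ : {m // m ∈ P}) : Fin n), hmem⟩ : {m // m ∈ P})
            = e.symm ⟨i, h'⟩ := Subtype.ext rfl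
        rw [heq, Equiv.apply_symm_apply]
      · rw [hfO i h h', hfO i h h']
  refine ⟨hinv.toPerm f, hinv, ?_, ?_, ?_⟩
  · intro i
    show Tb b y i = Tb b z (f i)
    by_cases h : i ∈ P
    · rw [hfP i h]
      have hiP : z i < y i := (hmemP i).1 h
      have hk : ((e ⟨i, h⟩ : {m // m ∈ N}) : Fin n) ∈ N := (e ⟨i, h⟩).2
      have hk' : y _ < z _ := (hmemN _).1 hk
      rw [hNval _ hk', hPval i hiP]
    · by_cases h' : i ∈ N
      · rw [hfN i h']
        have hiN : y i < z i := (hmemN i).1 h'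
        have hk : ((e.symm ⟨i, h'⟩ : {m // m ∈ P}) : Fin n) ∈ P := (e.symm ⟨i, h'⟩).2
        have hk' : z _ < y _ := (hmemP _).1 hk
        -- Tb y i = Tb z i - 1 = a - 1 ; Tb z (f i) = Tb y (f i) - 1 = a - 1
        have e1 : Tb b z i = Tb b y₀ i₀ := hNval i hiN
        have e2 : Tb b y i - Tb b z i = ((y i : ℝ)) - z i := hsub i
        have e2' : ((y i : ℝ)) - z i = -1 := by
          exact_mod_cast (by have := hstep' i hiN; omega : y i - z i = (-1:ℤ))
        have e3 : Tb b y _ = Tb b y₀ i₀ := hPval _ hk'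
        have e4 := hsub ((e.symm ⟨i, h'⟩ : {m // m ∈ P}) : Fin n)
        have e4' : ((y ((e.symm ⟨i, h'⟩ : {m // m ∈ P}) : Fin n) : ℝ))
            - z ((e.symm ⟨i, h'⟩ : {m // m ∈ P}) : Fin n) = 1 := by
          exact_mod_cast (by have := hstep _ hk'; omega :
            y ((e.symm ⟨i, h'⟩ : {m // m ∈ P}) : Fin n)
              - z ((e.symm ⟨i, h'⟩ : {m // m ∈ P}) : Fin n) = (1:ℤ))
        linarith
      · rw [hfO i h h']
        have : ¬ z i < y i := fun hh => h ((hmemP i).2 hh)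
        have : y i = z i := by
          have h2 : ¬ y i < z i := fun hh => h' ((hmemN i).2 hh)
          omega
        have h4 := hsub i
        have h5 : ((y i : ℝ)) = ((z i : ℝ)) := by exact_mod_cast ‹y i = z i›
        linarith
  · intro i hlt
    have hiP : z i < y i := by
      have h2 := hsub i
      have : (0:ℤ) < y i - z i := by
        exact_mod_cast (by push_cast; linarith : (0:ℝ) < ((y i - z i : ℤ) : ℝ))
      omega
    have h1 : y i = z i + 1 := hstep i hiP
    have h2 := hsub i
    have h3 : ((y i : ℝ)) - z i = 1 := by exact_mod_cast (by omega : y i - z i = (1:ℤ))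
    exact ⟨by linarith, hPval i hiP⟩
  · intro i hlt
    have hiN : y i < z i := by
      have h2 := hsub i
      have : (0:ℤ) < z i - y i := by
        exact_mod_cast (by push_cast; linarith : (0:ℝ) < ((z i - y i : ℤ) : ℝ))
      omega
    have h1 : z i = y i + 1 := hstep' i hiN
    have h2 := hsub i
    have h3 : ((y i : ℝ)) - z i = -1 := by exact_mod_cast (by omega : y i - z i = (-1:ℤ))
    exact ⟨by linarith, hNval i hiN⟩
end

section
/- Let x ∈ Z_+^n and let y ∈ B(x) satisfy Σ_i y_i = min(q, Σ_i x_i) but y ∉ F_b(x). Then there exist indices i, j such that y + e_i − e_j ∈ B(x) and T_b(y) strictly majorizes T_b(y + e_i − e_j). -/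
open Finset

/-- A single unit transfer from a strictly higher coordinate is strictly majorized. -/
lemma lemA {n : ℕ} (a : Fin n → ℝ) (i j : Fin n) (hij : a i + 1 < a j) :
    smaj a (fun t => a t + (if t = i then (1:ℝ) else 0) - (if t = j then (1:ℝ) else 0)) := by
  have hne : i ≠ j := by rintro rfl; linarith
  set c : Fin n → ℝ := fun t => a t + (if t = i then (1:ℝ) else 0) - (if t = j then (1:ℝ) else 0) with hc
  have hsum : ∀ (s : Finset (Fin n)), ∑ t ∈ s, c t
      = ∑ t ∈ s, a t + (if i ∈ s then (1:ℝ) else 0) - (if j ∈ s then (1:ℝ) else 0) := by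
    intro s
    simp only [hc, Finset.sum_sub_distrib, Finset.sum_add_distrib, Finset.sum_ite_eq' s]
  constructor
  · constructor
    · intro B
      by_cases hi : i ∈ B
      · by_cases hj : j ∈ B
        · exact ⟨B, rfl, by rw [hsum]; simp [hi, hj]⟩
        · refine ⟨insert j (B.erase i), ?_, ?_⟩
          · rw [Finset.card_insert_of_notMem (by simp [hj, Ne.symm hne])]
            exact Finset.card_erase_add_one hi
          · rw [hsum, Finset.sum_insert (by simp [hj, Ne.symm hne]),
              Finset.sum_erase_eq_sub hi]
            simp only [hi, hj, if_true, if_false]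
            linarith
      · exact ⟨B, rfl, by rw [hsum]; split_ifs <;> simp [hi]⟩
    · rw [hsum]; simp
  · rintro ⟨h1, -⟩
    obtain ⟨A, hcard, hle⟩ := h1 (univ.filter (fun t => a j ≤ a t))
    set B : Finset (Fin n) := univ.filter (fun t => a j ≤ a t) with hB
    have hjB : j ∈ B := by simp [hB]
    have hiB : i ∉ B := by simp [hB]; linarith
    have hkey : ∑ t ∈ A, c t < ∑ t ∈ B, a t := by
      by_cases hAB : A = B
      · subst hAB
        rw [hsum]
        simp [hiB, hjB]
      · have hABne : (A \ B).Nonempty := by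
          rw [Finset.sdiff_nonempty]
          intro hsub
          exact hAB (Finset.eq_of_subset_of_card_le hsub (le_of_eq hcard.symm))
        have hcds : (A \ B).card = (B \ A).card := by
          rw [Finset.card_sdiff_comm hcard]
        have h2 : ∑ t ∈ A ∩ B, c t ≤ ∑ t ∈ A ∩ B, a t := by
          apply Finset.sum_le_sum
          intro t ht
          have : t ≠ i := by rintro rfl; exact hiB (Finset.mem_of_mem_inter_right ht)
          simp [hc, this]
          split_ifs <;> linarith
        have h3 : ∑ t ∈ A \ B, c t < ∑ t ∈ B \ A, a t := by
          calc ∑ t ∈ A \ B, c t < ∑ t ∈ A \ B, a j := by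
                apply Finset.sum_lt_sum_of_nonempty hABne
                intro t ht
                have htB : t ∉ B := (Finset.mem_sdiff.mp ht).2
                have htj : t ≠ j := by rintro rfl; exact htB hjB
                have hta : a t < a j := by
                  by_contra hcon
                  exact htB (by simp [hB]; linarith)
                by_cases hti : t = i
                · subst hti; simp [hc, htj]; linarith
                · simp [hc, hti, htj]; linarith
            _ = (B \ A).card • a j := by rw [Finset.sum_const, hcds]
            _ ≤ ∑ t ∈ B \ A, a j := by rw [Finset.sum_const]
            _ ≤ ∑ t ∈ B \ A, a t := by
                apply Finset.sum_le_sum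
                intro t ht
                have := (Finset.mem_sdiff.mp ht).1
                rw [hB, Finset.mem_filter] at this
                exact this.2
        calc ∑ t ∈ A, c t = ∑ t ∈ A ∩ B, c t + ∑ t ∈ A \ B, c t :=
              (Finset.sum_inter_add_sum_sdiff A B c).symm
          _ < ∑ t ∈ A ∩ B, a t + ∑ t ∈ B \ A, a t := by linarith
          _ = ∑ t ∈ B ∩ A, a t + ∑ t ∈ B \ A, a t := by rw [Finset.inter_comm]
          _ = ∑ t ∈ B, a t := Finset.sum_inter_add_sum_sdiff B A a
    exact absurd hle (not_le.mpr hkey)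

/-- If `a` strictly majorizes `a + d` (with `d` integral summing to zero), there is a
coordinate pair witnessing a strictly improving unit transfer. -/
lemma lemB {n : ℕ} (a : Fin n → ℝ) (d : Fin n → ℤ) (hd : ∑ i, d i = 0)
    (h : smaj a (fun t => a t + (d t : ℝ))) :
    ∃ i j, 0 < d i ∧ d j < 0 ∧ a i + 1 < a j := by
  by_contra hcon
  push_neg at hcon
  apply h.2
  set c : Fin n → ℝ := fun t => a t + (d t : ℝ) with hcdef
  constructor
  · intro B
    set P : Finset (Fin n) := univ.filter (fun t => 0 < d t) with hP
    by_cases hPne : P.Nonempty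
    case neg =>
      have hd0 : ∀ t, d t = 0 := by
        have hle : ∀ t ∈ (univ : Finset (Fin n)), d t ≤ 0 := by
          intro t _
          by_contra hh
          exact hPne ⟨t, by simp [hP]; omega⟩
        intro t
        exact (Finset.sum_eq_zero_iff_of_nonpos hle).mp hd t (mem_univ t)
      exact ⟨B, rfl, by apply Finset.sum_le_sum; intro t _; simp [hcdef, hd0 t]⟩
    case pos =>
      obtain ⟨i₀, hi₀P, hi₀min⟩ := Finset.exists_min_image P a hPne
      set m : ℝ := a i₀ with hm
      have hi₀d : 0 < d i₀ := by simpa [hP] using hi₀P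
      set N : Finset (Fin n) := univ.filter (fun t => d t < 0) with hN
      have hPN : Disjoint P N := by
        rw [Finset.disjoint_filter]
        intro t _ h1; omega
      have haj : ∀ t ∈ N, a t ≤ m + 1 := by
        intro t ht
        rw [hN, Finset.mem_filter] at ht
        exact hcon i₀ t hi₀d ht.2
      have hcP : ∀ t ∈ P, m + 1 ≤ c t := by
        intro t ht
        rw [hP, Finset.mem_filter] at ht
        have h1 : m ≤ a t := hi₀min t (by rw [hP, Finset.mem_filter]; exact ⟨mem_univ t, ht.2⟩)
        have h2 : (1:ℝ) ≤ (d t : ℝ) := by exact_mod_cast ht.2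
        simp only [hcdef]; linarith
      set J : Finset (Fin n) := B ∩ N with hJ
      set I : Finset (Fin n) := P \ B with hI
      have hJB : J ⊆ B := Finset.inter_subset_left
      have hJN : J ⊆ N := Finset.inter_subset_right
      have hIP : I ⊆ P := Finset.sdiff_subset
      by_cases hcase : J.card ≤ I.card
      · obtain ⟨I', hI'I, hI'card⟩ := Finset.exists_subset_card_eq hcase
        have hdisj : Disjoint (B \ J) I' := by
          apply Finset.disjoint_left.mpr
          intro t ht1 ht2
          exact (Finset.mem_sdiff.mp (hI'I ht2)).2 (Finset.mem_sdiff.mp ht1).1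
        refine ⟨(B \ J) ∪ I', ?_, ?_⟩
        · rw [Finset.card_union_of_disjoint hdisj, Finset.card_sdiff_of_subset hJB, hI'card]
          have := Finset.card_le_card hJB
          omega
        · rw [Finset.sum_union hdisj]
          have h1 : ∑ t ∈ B \ J, a t ≤ ∑ t ∈ B \ J, c t := by
            apply Finset.sum_le_sum
            intro t ht
            rw [Finset.mem_sdiff] at ht
            have htN : t ∉ N := fun hh => ht.2 (Finset.mem_inter.mpr ⟨ht.1, hh⟩)
            have : 0 ≤ d t := by
              by_contra hh
              exact htN (by rw [hN, Finset.mem_filter]; exact ⟨mem_univ t, by omega⟩)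
            have : (0:ℝ) ≤ (d t : ℝ) := by exact_mod_cast this
            simp only [hcdef]; linarith
          have h2 : ∑ t ∈ J, a t ≤ J.card • (m + 1) :=
            Finset.sum_le_card_nsmul J a (m+1) (fun t ht => haj t (hJN ht))
          have h3 : (I'.card : ℕ) • (m + 1) ≤ ∑ t ∈ I', c t :=
            Finset.card_nsmul_le_sum I' c (m+1) (fun t ht => hcP t (hIP (hI'I ht)))
          have h4 : ∑ t ∈ B, a t = ∑ t ∈ B \ J, a t + ∑ t ∈ J, a t := by
            rw [Finset.sum_sdiff_eq_sub hJB]; ring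
          rw [hI'card] at h3
          rw [h4]; linarith
      · push_neg at hcase
        obtain ⟨J', hJ'J, hJ'card⟩ := Finset.exists_subset_card_eq (le_of_lt hcase)
        have hJ'B : J' ⊆ B := fun t ht => hJB (hJ'J ht)
        have hJ'N : J' ⊆ N := fun t ht => hJN (hJ'J ht)
        have hdisj : Disjoint (B \ J') I := by
          apply Finset.disjoint_left.mpr
          intro t ht1 ht2
          exact (Finset.mem_sdiff.mp ht2).2 (Finset.mem_sdiff.mp ht1).1
        set A : Finset (Fin n) := (B \ J') ∪ I with hA
        refine ⟨A, ?_, ?_⟩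
        · rw [hA, Finset.card_union_of_disjoint hdisj, Finset.card_sdiff_of_subset hJ'B, hJ'card]
          have := Finset.card_le_card hJ'B
          omega
        · have hsplit : ∑ t ∈ A, c t = ∑ t ∈ A, a t + ((∑ t ∈ A, d t : ℤ) : ℝ) := by
            simp only [hcdef]
            rw [Finset.sum_add_distrib]
            push_cast
            ring
          have hJ'A : ∀ t ∈ J', t ∉ A := by
            intro t ht hA'
            rw [hA, Finset.mem_union] at hA'
            rcases hA' with h' | h'
            · exact (Finset.mem_sdiff.mp h').2 ht
            · exact Finset.disjoint_left.mp hPN (hIP h') (hJ'N ht)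
          have hdoffA : ∀ t ∈ univ \ A, d t ≤ 0 := by
            intro t ht
            rw [Finset.mem_sdiff] at ht
            by_contra hh
            push_neg at hh
            have htP : t ∈ P := by rw [hP, Finset.mem_filter]; exact ⟨mem_univ t, hh⟩
            have htB : t ∈ B := by
              by_contra hB'
              exact ht.2 (Finset.mem_union_right _ (Finset.mem_sdiff.mpr ⟨htP, hB'⟩))
            have htJ' : t ∈ J' := by
              by_contra hJ''
              exact ht.2 (Finset.mem_union_left _ (Finset.mem_sdiff.mpr ⟨htB, hJ''⟩))
            have := hJ'N htJ'
            rw [hN, Finset.mem_filter] at this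
            omega
          have hAd : (I.card : ℤ) ≤ ∑ t ∈ A, d t := by
            have h0 : ∑ t ∈ A, d t + ∑ t ∈ univ \ A, d t = 0 := by
              rw [← hd, add_comm, Finset.sum_sdiff (Finset.subset_univ A)]
            have h1 : ∑ t ∈ univ \ A, d t ≤ ∑ t ∈ J', d t := by
              have hsub : J' ⊆ univ \ A := fun t ht => Finset.mem_sdiff.mpr ⟨mem_univ t, hJ'A t ht⟩
              have := Finset.sum_le_sum_of_subset_of_nonneg hsub
                (f := fun t => -d t) (fun t ht _ => by simpa using hdoffA t ht)
              simp only [Finset.sum_neg_distrib] at this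
              linarith
            have h2 : ∑ t ∈ J', d t ≤ -(J'.card : ℤ) := by
              have : ∑ t ∈ J', d t ≤ ∑ t ∈ J', (-1 : ℤ) := by
                apply Finset.sum_le_sum
                intro t ht
                have := hJ'N ht
                rw [hN, Finset.mem_filter] at this
                omega
              simpa using this
            rw [hJ'card] at h2
            omega
          have hAa : ∑ t ∈ B, a t - (I.card : ℝ) ≤ ∑ t ∈ A, a t := by
            rw [hA, Finset.sum_union hdisj, Finset.sum_sdiff_eq_sub hJ'B]
            have h5 : ∑ t ∈ J', a t ≤ J'.card • (m + 1) :=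
              Finset.sum_le_card_nsmul J' a (m+1) (fun t ht => haj t (hJ'N ht))
            have h6 : (I.card : ℕ) • m ≤ ∑ t ∈ I, a t := by
              apply Finset.card_nsmul_le_sum
              intro t ht
              exact hi₀min t (hIP ht)
            rw [hJ'card] at h5
            simp only [nsmul_eq_mul] at h5 h6
            linarith
          have hAdR : (I.card : ℝ) ≤ ((∑ t ∈ A, d t : ℤ) : ℝ) := by exact_mod_cast hAd
          rw [hsplit]
          linarith
  · simp only [hcdef]
    rw [Finset.sum_add_distrib]
    have : ∑ t, ((d t : ℝ)) = ((∑ t, d t : ℤ) : ℝ) := by push_cast; ring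
    rw [this, hd]
    simp

/-- A full-size budget-feasible vector outside the frontier admits a
diversity-improving single swap. -/
theorem stmt6 {n : ℕ} (q : ℕ) (hq : 0 < q) (b : Fin n → ℝ) (hb : ∑ i, b i = 0)
    (x : Fin n → ℤ) (hx : ∀ i, 0 ≤ x i) (y : Fin n → ℤ)
    (hyB : memB q x y) (hysum : ∑ i, y i = min (q : ℤ) (∑ i, x i))
    (hyF : ¬ memF q b x y) :
    ∃ i j : Fin n, memB q x (y + Pi.single i 1 - Pi.single j 1) ∧
      smaj (Tb b y) (Tb b (y + Pi.single i 1 - Pi.single j 1)) := by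
  obtain ⟨z, hzB, hzcase⟩ : ∃ z, memB q x z ∧ ((y ≤ z ∧ y ≠ z) ∨ smaj (Tb b y) (Tb b z)) := by
    by_contra hno
    push_neg at hno
    exact hyF ⟨hyB, by push_neg; intro z hz; rcases (hno z hz).imp id id with h; exact h⟩
  rcases hzcase with ⟨hle, hne⟩ | hsm
  · exfalso
    have hlt : ∑ t, y t < ∑ t, z t := by
      apply Finset.sum_lt_sum (fun t _ => hle t)
      obtain ⟨t, ht⟩ : ∃ t, y t ≠ z t := by
        by_contra hh
        push_neg at hh
        exact hne (funext hh)
      exact ⟨t, mem_univ t, lt_of_le_of_ne (hle t) ht⟩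
    have h1 : ∑ t, z t ≤ (q : ℤ) := hzB.2.2
    have h2 : ∑ t, z t ≤ ∑ t, x t := Finset.sum_le_sum (fun t _ => hzB.2.1 t)
    have := le_min h1 h2
    omega
  · have hTbsum : ∀ w : Fin n → ℤ, ∑ i, Tb b w i = ∑ i, (w i : ℝ) := by
      intro w
      simp [Tb, Finset.sum_add_distrib, ← Finset.mul_sum, hb]
    have hzy : ∑ t, z t = ∑ t, y t := by
      have h0 := hsm.1.2
      rw [hTbsum, hTbsum] at h0
      exact_mod_cast h0.symm
    have hzyR : ∑ t, (z t : ℝ) = ∑ t, (y t : ℝ) := by exact_mod_cast hzy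
    have hTz : Tb b z = fun t => Tb b y t + ((z t - y t : ℤ) : ℝ) := by
      funext t
      simp only [Tb, hzyR]
      push_cast
      ring
    rw [hTz] at hsm
    obtain ⟨i, j, hdi, hdj, hij⟩ :=
      lemB (Tb b y) (fun t => z t - y t)
        (by rw [Finset.sum_sub_distrib, hzy]; ring) hsm
    have hine : i ≠ j := by rintro rfl; omega
    refine ⟨i, j, ?_, ?_⟩
    · set y' : Fin n → ℤ := y + Pi.single i 1 - Pi.single j 1 with hy'
      have happ : ∀ t, y' t
          = y t + (if t = i then (1:ℤ) else 0) - (if t = j then (1:ℤ) else 0) := by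
        intro t
        simp [hy', Pi.single_apply]
      show memB q x y'
      refine ⟨?_, ?_, ?_⟩
      · intro t
        rw [happ t]
        by_cases h1 : t = j
        · subst h1
          have := hzB.1 t
          simp [Ne.symm hine]
          omega
        · have := hyB.1 t
          split_ifs <;> omega
      · intro t
        rw [happ t]
        by_cases h1 : t = i
        · subst h1
          have h2 : y t + 1 ≤ z t := by omega
          have := hzB.2.1 t
          simp [hine]
          omega
        · have := hyB.2.1 t
          split_ifs <;> omega
      · have : ∑ t, y' t = ∑ t, y t := by
          rw [Finset.sum_congr rfl (fun t _ => happ t)]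
          rw [Finset.sum_sub_distrib, Finset.sum_add_distrib]
          simp [Finset.sum_ite_eq' univ]
        rw [this]
        exact hyB.2.2
    · set y' : Fin n → ℤ := y + Pi.single i 1 - Pi.single j 1 with hy'
      have happ : ∀ t, y' t
          = y t + (if t = i then (1:ℤ) else 0) - (if t = j then (1:ℤ) else 0) := by
        intro t
        simp [hy', Pi.single_apply]
      have happR : ∀ t, (y' t : ℝ)
          = (y t : ℝ) + (if t = i then (1:ℝ) else 0) - (if t = j then (1:ℝ) else 0) := by
        intro t
        rw [happ t]
        split_ifs <;> push_cast <;> ring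
      have hy'sum : ∑ t, (y' t : ℝ) = ∑ t, (y t : ℝ) := by
        rw [Finset.sum_congr rfl (fun t _ => happR t)]
        rw [Finset.sum_sub_distrib, Finset.sum_add_distrib]
        simp [Finset.sum_ite_eq' univ]
      have hTy' : Tb b y'
          = fun t => Tb b y t + (if t = i then (1:ℝ) else 0) - (if t = j then (1:ℝ) else 0) := by
        funext t
        simp only [Tb, hy'sum, happR t]
        ring
      show smaj (Tb b y) (Tb b y')
      rw [hTy']
      exact lemA (Tb b y) i j hij
end

section
/- Let x ∈ Z_+^n and let y ∈ B(x) satisfy Σ_i y_i = min(q, Σ_i x_i) but y ∉ F_b(x). Then for every z ∈ F_b(x), T_b(y) strictly majorizes T_b(z). -/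
open Finset

-- my helpers
lemma maj_refl {n : ℕ} (x : Fin n → ℝ) : maj x x :=
  ⟨fun B => ⟨B, rfl, le_rfl⟩, rfl⟩

lemma maj_trans {n : ℕ} {a b c : Fin n → ℝ} (h1 : maj a b) (h2 : maj b c) : maj a c := by
  refine ⟨fun B => ?_, h1.2.trans h2.2⟩
  obtain ⟨A, hA, hle⟩ := h2.1 B
  obtain ⟨A', hA', hle'⟩ := h1.1 A
  exact ⟨A', hA'.trans hA, hle.trans hle'⟩

/-- `rh a i j` transfers one unit from coordinate `i` to coordinate `j`. -/
noncomputable def rh {n : ℕ} (a : Fin n → ℝ) (i j : Fin n) : Fin n → ℝ :=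
  fun k => a k + (if k = j then 1 else 0) - (if k = i then 1 else 0)

lemma sum_rh {n : ℕ} (a : Fin n → ℝ) (i j : Fin n) (B : Finset (Fin n)) :
    ∑ k ∈ B, rh a i j k
      = (∑ k ∈ B, a k) + (if j ∈ B then 1 else 0) - (if i ∈ B then 1 else 0) := by
  simp [rh, Finset.sum_add_distrib, Finset.sum_sub_distrib, Finset.sum_ite_eq']

lemma maj_rh {n : ℕ} (a : Fin n → ℝ) (i j : Fin n) (hij : i ≠ j) (h : a j + 1 ≤ a i) :
    maj a (rh a i j) := by
  constructor
  · intro B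
    by_cases hiB : i ∈ B
    · refine ⟨B, rfl, ?_⟩
      rw [sum_rh]
      split_ifs <;> simp
    · by_cases hjB : j ∈ B
      · refine ⟨insert i (B.erase j), ?_, ?_⟩
        · rw [Finset.card_insert_of_notMem (fun hm => hiB (Finset.mem_of_mem_erase hm)),
            Finset.card_erase_of_mem hjB]
          have := Finset.card_pos.mpr ⟨j, hjB⟩
          omega
        · rw [sum_rh, if_pos hjB, if_neg hiB,
            Finset.sum_insert (fun hm => hiB (Finset.mem_of_mem_erase hm))]
          have hs : ∑ k ∈ B, a k = a j + ∑ k ∈ B.erase j, a k :=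
            (Finset.add_sum_erase B a hjB).symm
          rw [hs]
          linarith
      · refine ⟨B, rfl, ?_⟩
        rw [sum_rh, if_neg hjB, if_neg hiB]
        simp
  · rw [sum_rh]
    simp

lemma not_maj_rh {n : ℕ} (a : Fin n → ℝ) (i j : Fin n) (hij : i ≠ j) (h : a j + 1 < a i) :
    ¬ maj (rh a i j) a := by
  intro hm
  set B₀ : Finset (Fin n) := univ.filter (fun k => a i ≤ a k) with hB₀def
  have hiB₀ : i ∈ B₀ := by simp [hB₀def]
  have hjB₀ : j ∉ B₀ := by simp [hB₀def]; linarith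
  obtain ⟨A, hcard, hle⟩ := hm.1 B₀
  set B' : Finset (Fin n) := B₀.erase i with hB'def
  have hclaim1 : ∀ k, k ∉ B' → rh a i j k < a i := by
    intro k hk
    by_cases hki : k = i
    · subst hki
      simp only [rh, if_neg hij]
      split_ifs <;> simp <;> linarith
    · have hkB₀ : k ∉ B₀ := fun hm' => hk (Finset.mem_erase.mpr ⟨hki, hm'⟩)
      by_cases hkj : k = j
      · subst hkj; simp [rh, hki]; linarith
      · have : ¬ a i ≤ a k := by
          intro hc; exact hkB₀ (by simp [hB₀def, hc])
        simp [rh, hki, hkj]; linarith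
  have hclaim2 : ∀ k ∈ B', rh a i j k = a k ∧ a i ≤ a k := by
    intro k hk
    have hki : k ≠ i := (Finset.mem_erase.mp hk).1
    have hkB₀ : k ∈ B₀ := (Finset.mem_erase.mp hk).2
    have hkj : k ≠ j := fun hc => hjB₀ (hc ▸ hkB₀)
    constructor
    · simp [rh, hki, hkj]
    · exact (Finset.mem_filter.mp hkB₀).2
  set A₁ : Finset (Fin n) := A ∩ B' with hA₁
  set A₂ : Finset (Fin n) := A \ B' with hA₂
  have hsplit : ∑ k ∈ A₁, rh a i j k + ∑ k ∈ A₂, rh a i j k = ∑ k ∈ A, rh a i j k :=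
    Finset.sum_inter_add_sum_sdiff A B' _
  have hcardB' : B'.card + 1 = B₀.card := by
    rw [hB'def, Finset.card_erase_of_mem hiB₀]
    have := Finset.card_pos.mpr ⟨i, hiB₀⟩
    omega
  have hcardA : A₁.card + A₂.card = A.card := by
    rw [hA₁, hA₂]
    exact Finset.card_inter_add_card_sdiff A B'
  have hA₁sub : A₁ ⊆ B' := Finset.inter_subset_right
  have hA₁le : A₁.card ≤ B'.card := Finset.card_le_card hA₁sub
  have hA₂pos : 0 < A₂.card := by omega
  have hA₂ne : A₂.Nonempty := Finset.card_pos.mp hA₂pos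
  have h1 : ∑ k ∈ A₂, rh a i j k < (A₂.card : ℝ) * a i := by
    calc ∑ k ∈ A₂, rh a i j k < ∑ _k ∈ A₂, a i := by
          refine Finset.sum_lt_sum_of_nonempty hA₂ne ?_
          intro k hk
          exact hclaim1 k (Finset.mem_sdiff.mp hk).2
      _ = (A₂.card : ℝ) * a i := by rw [Finset.sum_const, nsmul_eq_mul]
  have h2 : (((B' \ A₁).card : ℝ)) * a i ≤ ∑ k ∈ B' \ A₁, a k := by
    have := Finset.card_nsmul_le_sum (B' \ A₁) a (a i)
      (fun k hk => (hclaim2 k (Finset.mem_sdiff.mp hk).1).2)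
    rwa [nsmul_eq_mul] at this
  have h3 : ∑ k ∈ B' \ A₁, a k + ∑ k ∈ A₁, a k = ∑ k ∈ B', a k :=
    Finset.sum_sdiff hA₁sub
  have h4 : ∑ k ∈ B₀, a k = a i + ∑ k ∈ B', a k := (Finset.add_sum_erase B₀ a hiB₀).symm
  have h5 : ∑ k ∈ A₁, rh a i j k = ∑ k ∈ A₁, a k :=
    Finset.sum_congr rfl (fun k hk => (hclaim2 k (hA₁sub hk)).1)
  have hcard2 : (B' \ A₁).card + 1 = A₂.card := by
    have : (B' \ A₁).card = B'.card - A₁.card := Finset.card_sdiff_of_subset hA₁sub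
    omega
  have hcast : ((B' \ A₁).card : ℝ) + 1 = (A₂.card : ℝ) := by exact_mod_cast congrArg (Nat.cast (R := ℝ)) hcard2
  have hmul : ((A₂.card : ℝ)) * a i = ((B' \ A₁).card : ℝ) * a i + 1 * a i := by
    rw [← hcast]; ring
  linarith [hle, h1, h2, hsplit, h5, h3, h4, hmul]

/-- The exchange/water-filling lemma: a locally balanced `z` is a majorization
least element among equal-sum budget-feasible points. -/
lemma key_maj {n : ℕ} (q : ℕ) (x z : Fin n → ℤ) (c : Fin n → ℝ)
    (hz0 : ∀ i, 0 ≤ z i) (hzx : ∀ i, z i ≤ x i)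
    (hbal : ∀ i j, 0 < z j → z i < x i → (z j : ℝ) + c j ≤ (z i : ℝ) + c i + 1) :
    ∀ N : ℕ, ∀ w : Fin n → ℤ, (∑ i, (w i - z i).natAbs) = N → memB q x w →
      (∑ i, w i = ∑ i, z i) →
      maj (fun k => (w k : ℝ) + c k) (fun k => (z k : ℝ) + c k) := by
  intro N
  induction N using Nat.strong_induction_on with
  | _ N IH =>
    intro w hN hwB hsum
    by_cases hwz : ∀ k, w k = z k
    · have hfe : (fun k => (w k : ℝ) + c k) = fun k => (z k : ℝ) + c k :=
        funext fun k => by rw [hwz k]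
      rw [hfe]; exact maj_refl _
    · push_neg at hwz
      obtain ⟨k₀, hk₀⟩ := hwz
      have hexi : ∃ i, z i < w i := by
        by_contra hno
        push_neg at hno
        have hlt : ∑ i, w i < ∑ i, z i :=
          Finset.sum_lt_sum (fun i _ => hno i)
            ⟨k₀, Finset.mem_univ k₀, lt_of_le_of_ne (hno k₀) hk₀⟩
        omega
      obtain ⟨i, hi⟩ := hexi
      have hexj : ∃ j, w j < z j := by
        by_contra hno
        push_neg at hno
        have hlt : ∑ k, z k < ∑ k, w k :=
          Finset.sum_lt_sum (fun m _ => hno m) ⟨i, Finset.mem_univ i, hi⟩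
        omega
      obtain ⟨j, hj⟩ := hexj
      have hij : i ≠ j := by intro h; rw [h] at hi; omega
      set w' : Fin n → ℤ :=
        fun k => w k + (if k = j then 1 else 0) - (if k = i then 1 else 0) with hw'def
      have hw'i : w' i = w i - 1 := by simp [hw'def, hij]
      have hw'j : w' j = w j + 1 := by simp [hw'def, hij.symm]
      have hw'k : ∀ k, k ≠ i → k ≠ j → w' k = w k := by
        intro k h1 h2; simp [hw'def, h1, h2]
      have hw'B : memB q x w' := by
        refine ⟨?_, ?_, ?_⟩
        · intro k
          by_cases h1 : k = i
          · rw [h1, hw'i]; have := hz0 i; omega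
          · by_cases h2 : k = j
            · rw [h2, hw'j]; have := hwB.1 j; omega
            · rw [hw'k k h1 h2]; exact hwB.1 k
        · intro k
          by_cases h1 : k = i
          · rw [h1, hw'i]; have := hwB.2.1 i; omega
          · by_cases h2 : k = j
            · rw [h2, hw'j]; have := hzx j; omega
            · rw [hw'k k h1 h2]; exact hwB.2.1 k
        · have hseq : ∑ k, w' k = ∑ k, w k := by
            simp [hw'def, Finset.sum_add_distrib, Finset.sum_sub_distrib,
              Finset.sum_ite_eq']
          rw [hseq]; exact hwB.2.2
      have hsum' : ∑ k, w' k = ∑ k, z k := by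
        have hseq : ∑ k, w' k = ∑ k, w k := by
          simp [hw'def, Finset.sum_add_distrib, Finset.sum_sub_distrib,
            Finset.sum_ite_eq']
        rw [hseq]; exact hsum
      have hmeas : (∑ k, (w' k - z k).natAbs) < N := by
        rw [← hN]
        refine Finset.sum_lt_sum (fun k _ => ?_) ⟨i, Finset.mem_univ i, ?_⟩
        · by_cases h1 : k = i
          · rw [h1, hw'i]; omega
          · by_cases h2 : k = j
            · rw [h2, hw'j]; omega
            · rw [hw'k k h1 h2]
        · rw [hw'i]; omega
      have hstep : maj (fun k => (w k : ℝ) + c k) (fun k => (w' k : ℝ) + c k) := by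
        have hfe : (fun k => (w' k : ℝ) + c k) = rh (fun k => (w k : ℝ) + c k) i j := by
          funext k
          by_cases h1 : k = i
          · rw [h1, hw'i]; simp [rh, hij]; push_cast; ring
          · by_cases h2 : k = j
            · rw [h2, hw'j]; simp [rh, hij.symm, h1]; push_cast; ring
            · rw [hw'k k h1 h2]; simp [rh, h1, h2]
        rw [hfe]
        refine maj_rh _ i j hij ?_
        have h0j : 0 < z j := by have := hwB.1 j; omega
        have hix : z i < x i := by have := hwB.2.1 i; omega
        have hb := hbal i j h0j hix
        have c1 : (w j : ℝ) + 1 ≤ (z j : ℝ) := by exact_mod_cast hj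
        have c2 : (z i : ℝ) + 1 ≤ (w i : ℝ) := by exact_mod_cast hi
        linarith
      exact maj_trans hstep (IH _ hmeas w' rfl hw'B hsum')

/-- Frontier elements are locally balanced. -/
lemma F_bal {n : ℕ} {q : ℕ} {b : Fin n → ℝ} {x z : Fin n → ℤ} (hzF : memF q b x z) :
    ∀ i j, 0 < z j → z i < x i → Tb b z j ≤ Tb b z i + 1 := by
  intro i j h0 hix
  by_contra hcon
  push_neg at hcon
  have hij : i ≠ j := by
    rintro rfl; linarith
  set z' : Fin n → ℤ :=
    fun k => z k + (if k = i then 1 else 0) - (if k = j then 1 else 0) with hz'def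
  have hz'i : z' i = z i + 1 := by simp [hz'def, hij]
  have hz'j : z' j = z j - 1 := by simp [hz'def, hij.symm]
  have hz'k : ∀ k, k ≠ i → k ≠ j → z' k = z k := by
    intro k h1 h2; simp [hz'def, h1, h2]
  have hsz' : ∑ k, z' k = ∑ k, z k := by
    simp [hz'def, Finset.sum_add_distrib, Finset.sum_sub_distrib, Finset.sum_ite_eq']
  have hz'B : memB q x z' := by
    refine ⟨?_, ?_, ?_⟩
    · intro k
      by_cases h1 : k = i
      · rw [h1, hz'i]; have := hzF.1.1 i; omega
      · by_cases h2 : k = j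
        · rw [h2, hz'j]; omega
        · rw [hz'k k h1 h2]; exact hzF.1.1 k
    · intro k
      by_cases h1 : k = i
      · rw [h1, hz'i]; omega
      · by_cases h2 : k = j
        · rw [h2, hz'j]; have := hzF.1.2.1 j; omega
        · rw [hz'k k h1 h2]; exact hzF.1.2.1 k
    · rw [hsz']; exact hzF.1.2.2
  have hfe : Tb b z' = rh (Tb b z) j i := by
    funext k
    have hsr : (∑ m, (z' m : ℝ)) = ∑ m, (z m : ℝ) := by
      exact_mod_cast hsz'
    by_cases h1 : k = i
    · rw [h1]; simp only [Tb, hsr, hz'i, rh, if_pos rfl, if_neg hij]; push_cast; ring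
    · by_cases h2 : k = j
      · rw [h2]; simp only [Tb, hsr, hz'j, rh, if_neg hij.symm, if_pos rfl]
        push_cast; ring
      · simp only [Tb, hsr, hz'k k h1 h2, rh, if_neg h1, if_neg h2]; ring
  exact hzF.2 ⟨z', hz'B, Or.inr (by
    rw [hfe]
    exact ⟨maj_rh (Tb b z) j i hij.symm (by linarith),
      not_maj_rh (Tb b z) j i hij.symm hcon⟩)⟩

/-- Frontier elements have full sum. -/
lemma F_sum {n : ℕ} {q : ℕ} {b : Fin n → ℝ} {x z : Fin n → ℤ} (hzF : memF q b x z) :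
    ∑ i, z i = min (q : ℤ) (∑ i, x i) := by
  have h1 : ∑ i, z i ≤ (q : ℤ) := hzF.1.2.2
  have h2 : ∑ i, z i ≤ ∑ i, x i := Finset.sum_le_sum (fun i _ => hzF.1.2.1 i)
  have hle : ∑ i, z i ≤ min (q : ℤ) (∑ i, x i) := le_min h1 h2
  rcases eq_or_lt_of_le hle with heq | hlt
  · exact heq
  · exfalso
    have hltx : ∑ i, z i < ∑ i, x i := lt_of_lt_of_le hlt (min_le_right _ _)
    have hexi : ∃ i, z i < x i := by
      by_contra hno
      push_neg at hno
      have : ∑ i, x i ≤ ∑ i, z i := Finset.sum_le_sum (fun i _ => hno i)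
      omega
    obtain ⟨i, hi⟩ := hexi
    set z' : Fin n → ℤ := fun k => z k + (if k = i then 1 else 0) with hz'def
    have hsz' : ∑ k, z' k = ∑ k, z k + 1 := by
      simp [hz'def, Finset.sum_add_distrib, Finset.sum_ite_eq']
    have hz'B : memB q x z' := by
      refine ⟨?_, ?_, ?_⟩
      · intro k
        by_cases h1 : k = i
        · rw [h1]; simp [hz'def]; have := hzF.1.1 i; omega
        · simp [hz'def, h1]; exact hzF.1.1 k
      · intro k
        by_cases h1 : k = i
        · rw [h1]; simp [hz'def]; omega
        · simp [hz'def, h1]; exact hzF.1.2.1 k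
      · have hql : ∑ i, z i < (q : ℤ) := lt_of_lt_of_le hlt (min_le_left _ _)
        rw [hsz']; omega
    refine hzF.2 ⟨z', hz'B, Or.inl ⟨?_, ?_⟩⟩
    · intro k
      by_cases h1 : k = i <;> simp [hz'def, h1]
    · intro hzeq
      have := congrFun hzeq i
      simp [hz'def] at this

/-- A full-size budget-feasible vector outside the frontier is strictly less
`b`-diverse than every frontier element. -/
theorem stmt7 {n : ℕ} (q : ℕ) (hq : 0 < q) (b : Fin n → ℝ) (hb : ∑ i, b i = 0)
    (x : Fin n → ℤ) (hx : ∀ i, 0 ≤ x i) (y : Fin n → ℤ)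
    (hyB : memB q x y) (hysum : ∑ i, y i = min (q : ℤ) (∑ i, x i))
    (hyF : ¬ memF q b x y) :
    ∀ z : Fin n → ℤ, memF q b x z → smaj (Tb b y) (Tb b z) := by
  intro z hzF
  -- extract a witness that y is not a frontier element
  have hex : ∃ z₁ : Fin n → ℤ, memB q x z₁ ∧
      ((y ≤ z₁ ∧ y ≠ z₁) ∨ smaj (Tb b y) (Tb b z₁)) := by
    by_contra h
    exact hyF ⟨hyB, h⟩
  obtain ⟨z₁, hz₁B, hz₁⟩ := hex
  have hz₁smaj : smaj (Tb b y) (Tb b z₁) := by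
    rcases hz₁ with ⟨hle, hne⟩ | hs
    · exfalso
      obtain ⟨k, hk⟩ := Function.ne_iff.mp hne
      have h1 : ∑ i, y i < ∑ i, z₁ i :=
        Finset.sum_lt_sum (fun i _ => hle i)
          ⟨k, Finset.mem_univ k, lt_of_le_of_ne (hle k) hk⟩
      have h2 : ∑ i, z₁ i ≤ min (q : ℤ) (∑ i, x i) :=
        le_min hz₁B.2.2 (Finset.sum_le_sum fun i _ => hz₁B.2.1 i)
      omega
    · exact hs
  -- z has full sum
  have hzsum : ∑ i, z i = ∑ i, y i := by rw [hysum, F_sum hzF]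
  -- majorization part via the key lemma
  set c : Fin n → ℝ := fun k => (∑ j, (z j : ℝ)) * b k with hcdef
  have hbal : ∀ i j, 0 < z j → z i < x i → (z j : ℝ) + c j ≤ (z i : ℝ) + c i + 1 :=
    fun i j h0 hix => F_bal hzF i j h0 hix
  have hmaj0 : maj (fun k => (y k : ℝ) + c k) (fun k => (z k : ℝ) + c k) :=
    key_maj q x z c hzF.1.1 hzF.1.2.1 hbal _ y rfl hyB hzsum.symm
  have hTy : Tb b y = fun k => (y k : ℝ) + c k := by
    funext k
    have hsr : (∑ j, (y j : ℝ)) = ∑ j, (z j : ℝ) := by exact_mod_cast hzsum.symm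
    simp only [Tb, hsr, hcdef]
  have hTz : Tb b z = fun k => (z k : ℝ) + c k := rfl
  have hmaj : maj (Tb b y) (Tb b z) := by rw [hTy, hTz]; exact hmaj0
  refine ⟨hmaj, ?_⟩
  intro hrev
  exact hzF.2 ⟨z₁, hz₁B, Or.inr ⟨maj_trans hrev hz₁smaj.1,
    fun h => hz₁smaj.2 (maj_trans h hrev)⟩⟩
end

section
/- Let S be a finite set of students, each with a type in {1,...,n}, and let ξ(R) ∈ Z_+^n denote the type-count vector of R ⊆ S. If R, R' ⊆ S satisfy ξ(R), ξ(R') ∈ F_b(ξ(S)) and R ≠ R', then for each s ∈ R \ R' there exists s' ∈ R' \ R such that ξ((R \ {s}) ∪ {s'}) ∈ F_b(ξ(S)) and ξ((R' \ {s'}) ∪ {s}) ∈ F_b(ξ(S)). -/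
open Finset

/-- The type-count vector of a finite set of typed students. -/
def xi {σ : Type} [DecidableEq σ] {n : ℕ} (typ : σ → Fin n) (R : Finset σ) :
    Fin n → ℤ :=
  fun i => ((R.filter fun s => typ s = i).card : ℤ)


-- AUX -------------------------------------------------------------

lemma maj_comp_left {n : ℕ} {u t : Fin n → ℝ} (π : Equiv.Perm (Fin n)) (h : maj u t) :
    maj (fun k => u (π k)) t := by
  refine ⟨fun B => ?_, ?_⟩
  · obtain ⟨A, hA, hle⟩ := h.1 B
    refine ⟨A.image π.symm, by
      rw [Finset.card_image_of_injective _ π.symm.injective, hA], ?_⟩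
    have h2 : ∑ k ∈ A.image π.symm, u (π k) = ∑ a ∈ A, u a := by
      rw [Finset.sum_image (fun a _ b _ hab => π.symm.injective hab)]
      simp
    exact hle.trans h2.ge
  · rw [Equiv.sum_comp π u]; exact h.2

lemma maj_comp_right {n : ℕ} {u t : Fin n → ℝ} (π : Equiv.Perm (Fin n)) (h : maj t u) :
    maj t (fun k => u (π k)) := by
  refine ⟨fun B => ?_, ?_⟩
  · obtain ⟨A, hA, hle⟩ := h.1 (B.image π)
    refine ⟨A, by rw [hA, Finset.card_image_of_injective _ π.injective], ?_⟩
    have h2 : ∑ k ∈ B, u (π k) = ∑ a ∈ B.image π, u a :=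
      (Finset.sum_image (fun a _ b _ hab => π.injective hab)).symm
    exact h2.le.trans hle
  · rw [show (∑ i, u (π i)) = ∑ i, u i from Equiv.sum_comp π u]; exact h.2

lemma smaj_congr {n : ℕ} {u u' t : Fin n → ℝ} (π : Equiv.Perm (Fin n))
    (h : ∀ k, u k = u' (π k)) (hs : smaj u t) : smaj u' t := by
  have hu : u = fun k => u' (π k) := funext h
  constructor
  · have hs1 : maj (fun k => u' (π k)) t := by rw [← hu]; exact hs.1
    have h3 : maj (fun k => u' (π (π.symm k))) t := maj_comp_left π.symm hs1
    have h4 : (fun k => u' (π (π.symm k))) = u' := by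
      funext k; rw [Equiv.apply_symm_apply]
    rwa [h4] at h3
  · intro hm
    exact hs.2 (by rw [hu]; exact maj_comp_right π hm)

lemma sum_ind {n : ℕ} (B : Finset (Fin n)) (j : Fin n) :
    ∑ k ∈ B, (if k = j then (1:ℝ) else 0) = if j ∈ B then 1 else 0 :=
  Finset.sum_ite_eq' B j fun _ => 1

lemma smaj_transfer {n : ℕ} {w : Fin n → ℝ} {i j : Fin n} (hij : w j + 1 < w i) :
    smaj w (fun k => w k + (if k = j then 1 else 0) - (if k = i then 1 else 0)) := by
  have hji : j ≠ i := by intro h; rw [h] at hij; linarith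
  set w' : Fin n → ℝ := fun k => w k + (if k = j then 1 else 0) - (if k = i then 1 else 0)
    with hw'
  have hw'app : ∀ k, w' k = w k + (if k = j then 1 else 0) - (if k = i then 1 else 0) :=
    fun k => rfl
  have hsumB : ∀ B : Finset (Fin n), ∑ k ∈ B, w' k
      = ∑ k ∈ B, w k + (if j ∈ B then 1 else 0) - (if i ∈ B then 1 else 0) := by
    intro B
    simp only [hw'app]
    rw [Finset.sum_sub_distrib, Finset.sum_add_distrib, sum_ind, sum_ind]
  constructor
  · constructor
    · intro B
      by_cases hjB : j ∈ B
      · by_cases hiB : i ∈ B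
        · refine ⟨B, rfl, ?_⟩
          rw [hsumB, if_pos hjB, if_pos hiB]; linarith
        · refine ⟨insert i (B.erase j), ?_, ?_⟩
          · rw [Finset.card_insert_of_notMem (fun h => hiB (Finset.mem_of_mem_erase h)),
              Finset.card_erase_of_mem hjB]
            have : 1 ≤ B.card := Finset.card_pos.mpr ⟨j, hjB⟩
            omega
          · rw [hsumB, if_pos hjB, if_neg hiB,
              Finset.sum_insert (fun h => hiB (Finset.mem_of_mem_erase h)),
              Finset.sum_erase_eq_sub hjB]
            linarith
      · refine ⟨B, rfl, ?_⟩
        rw [hsumB, if_neg hjB]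
        split <;> linarith
    · have := hsumB Finset.univ
      rw [if_pos (Finset.mem_univ j), if_pos (Finset.mem_univ i)] at this
      rw [this]; ring
  · rintro ⟨hsub, -⟩
    set B₀ : Finset (Fin n) := Finset.univ.filter (fun k => w i ≤ w k) with hB₀
    obtain ⟨A, hcard, hle⟩ := hsub B₀
    have hiB₀ : i ∈ B₀ := by simp [hB₀]
    have hjB₀ : j ∉ B₀ := by simp [hB₀]; linarith
    have hw'lt : ∀ k, k ∉ B₀ → w' k < w i := by
      intro k hk
      have hkw : w k < w i := by
        by_contra h
        exact hk (by simp [hB₀]; linarith)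
      rw [hw'app]
      by_cases h1 : k = j
      · subst h1; rw [if_pos rfl, if_neg hji]; linarith
      · rw [if_neg h1]; split <;> linarith
    have hw'le : ∀ k, k ∈ B₀ → w' k ≤ w k := by
      intro k hk
      have : k ≠ j := fun h => hjB₀ (h ▸ hk)
      rw [hw'app, if_neg this]; split <;> linarith
    have hmain : ∑ k ∈ A, w' k < ∑ k ∈ B₀, w k := by
      by_cases hAB : A = B₀
      · rw [hAB]
        refine Finset.sum_lt_sum (fun k hk => hw'le k hk) ⟨i, hiB₀, ?_⟩
        rw [hw'app, if_neg hji.symm, if_pos rfl]; linarith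
      · have hm : (A \ B₀).card = (B₀ \ A).card := by
          have h1 := Finset.card_inter_add_card_sdiff A B₀
          have h2 := Finset.card_inter_add_card_sdiff B₀ A
          rw [Finset.inter_comm] at h2
          omega
        have hne : (A \ B₀).Nonempty := by
          rw [Finset.sdiff_nonempty]
          intro hsubA
          exact hAB (Finset.eq_of_subset_of_card_le hsubA (le_of_eq hcard.symm))
        have h1 : ∑ k ∈ A ∩ B₀, w' k ≤ ∑ k ∈ A ∩ B₀, w k :=
          Finset.sum_le_sum (fun k hk => hw'le k (Finset.mem_of_mem_inter_right hk))
        have h2 : ∑ k ∈ A \ B₀, w' k < ((A \ B₀).card : ℝ) * w i := by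
          have := Finset.sum_lt_sum_of_nonempty hne
            (f := w') (g := fun _ => w i) (fun k hk => hw'lt k (Finset.mem_sdiff.mp hk).2)
          simpa [Finset.sum_const, nsmul_eq_mul] using this
        have h3 : ((B₀ \ A).card : ℝ) * w i ≤ ∑ k ∈ B₀ \ A, w k := by
          have := Finset.card_nsmul_le_sum (B₀ \ A) w (w i)
            (fun k hk => by
              have := (Finset.mem_sdiff.mp hk).1
              rw [hB₀] at this
              exact (Finset.mem_filter.mp this).2)
          simpa [nsmul_eq_mul] using this
        have hsplit1 := Finset.sum_inter_add_sum_sdiff A B₀ w'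
        have hsplit2 := Finset.sum_inter_add_sum_sdiff B₀ A w
        have hAc : ∑ k ∈ B₀ ∩ A, w k = ∑ k ∈ A ∩ B₀, w k := by rw [Finset.inter_comm]
        rw [hm] at h2
        linarith
    linarith

lemma memF_of_perm {n : ℕ} {q : ℕ} {b : Fin n → ℝ} {x y v : Fin n → ℤ}
    (hy : memF q b x y) (hv : memB q x v) (hsq : ∑ k, v k = (q : ℤ))
    (π : Equiv.Perm (Fin n)) (h : ∀ k, Tb b v k = Tb b y (π k)) : memF q b x v := by
  refine ⟨hv, ?_⟩
  rintro ⟨z, hzB, hz | hz⟩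
  · obtain ⟨hle, hne⟩ := hz
    obtain ⟨k, hk⟩ := Function.ne_iff.mp hne
    have h1 : ∑ k, v k < ∑ k, z k :=
      Finset.sum_lt_sum (fun k _ => hle k) ⟨k, Finset.mem_univ k, lt_of_le_of_ne (hle k) hk⟩
    have h2 := hzB.2.2
    omega
  · exact hy.2 ⟨z, hzB, Or.inr (smaj_congr π (fun k => (h k)) hz)⟩

lemma sum_eq_q {n : ℕ} {q : ℕ} {b : Fin n → ℝ} {x y y' : Fin n → ℤ}
    (hF : memF q b x y) (hF' : memF q b x y') (hne : y ≠ y') : ∑ k, y k = (q : ℤ) := by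
  rcases lt_or_eq_of_le hF.1.2.2 with hlt | heq
  · exfalso
    have hyx : y = x := by
      funext k
      refine le_antisymm (hF.1.2.1 k) ?_
      by_contra hk
      push_neg at hk
      obtain ⟨z, hzapp⟩ : ∃ z : Fin n → ℤ, ∀ l, z l = y l + (if l = k then 1 else 0) :=
        ⟨_, fun _ => rfl⟩
      refine hF.2 ⟨z, ⟨?_, ?_, ?_⟩, Or.inl ⟨?_, ?_⟩⟩
      · intro l; rw [hzapp]; have := hF.1.1 l
        by_cases hlk : l = k
        · rw [if_pos hlk]; linarith
        · rw [if_neg hlk]; linarith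
      · intro l; rw [hzapp]; have := hF.1.2.1 l
        by_cases hlk : l = k
        · rw [if_pos hlk, hlk]; linarith
        · rw [if_neg hlk]; linarith
      · have hzy : ∑ l, z l = ∑ l, y l + 1 := by
          simp only [hzapp]
          rw [Finset.sum_add_distrib, Finset.sum_ite_eq' Finset.univ k (fun _ => (1:ℤ)),
            if_pos (Finset.mem_univ k)]
        rw [hzy]; linarith
      · intro l; rw [hzapp]
        by_cases hlk : l = k
        · rw [if_pos hlk]; linarith
        · rw [if_neg hlk]; linarith
      · intro hyz
        have := congrFun hyz k
        rw [hzapp, if_pos rfl] at this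
        linarith
    refine hF'.2 ⟨y, hF.1, Or.inl ⟨?_, hne.symm⟩⟩
    intro l
    rw [hyx]
    exact hF'.1.2.1 l
  · exact heq

lemma Tb_app {n : ℕ} {q : ℕ} {b : Fin n → ℝ} {y : Fin n → ℤ}
    (hsq : ∑ k, y k = (q : ℤ)) (k : Fin n) : Tb b y k = (y k : ℝ) + (q : ℝ) * b k := by
  unfold Tb
  have : (∑ j, ((y j : ℤ) : ℝ)) = (q : ℝ) := by
    rw [← Int.cast_sum, hsq]; norm_num
  rw [this]

lemma local_ineq {n : ℕ} {q : ℕ} {b : Fin n → ℝ} {x y : Fin n → ℤ}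
    (hF : memF q b x y) (hsq : ∑ k, y k = (q : ℤ)) (i j : Fin n)
    (hi : 0 < y i) (hj : y j < x j) : Tb b y i ≤ Tb b y j + 1 := by
  by_contra hcon
  push_neg at hcon
  have hij : i ≠ j := by
    intro h; rw [h] at hcon; linarith
  obtain ⟨z, hzapp⟩ :
      ∃ z : Fin n → ℤ, ∀ l, z l = y l + (if l = j then 1 else 0) - (if l = i then 1 else 0) :=
    ⟨_, fun _ => rfl⟩
  have hzsum : ∑ l, z l = (q : ℤ) := by
    simp only [hzapp]
    rw [Finset.sum_sub_distrib, Finset.sum_add_distrib,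
      Finset.sum_ite_eq' Finset.univ j (fun _ => (1:ℤ)),
      Finset.sum_ite_eq' Finset.univ i (fun _ => (1:ℤ)),
      if_pos (Finset.mem_univ j), if_pos (Finset.mem_univ i), hsq]
    ring
  have hzB : memB q x z := by
    refine ⟨?_, ?_, ?_⟩
    · intro l; rw [hzapp]; have h0 := hF.1.1 l
      by_cases hli : l = i
      · rw [if_pos hli, if_neg (by rw [hli]; exact hij)]
        rw [hli]; linarith
      · rw [if_neg hli]
        by_cases hlj : l = j
        · rw [if_pos hlj]; linarith
        · rw [if_neg hlj]; linarith
    · intro l; rw [hzapp]; have h0 := hF.1.2.1 l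
      by_cases hli : l = i
      · rw [if_pos hli, if_neg (by rw [hli]; exact hij)]; linarith
      · rw [if_neg hli]
        by_cases hlj : l = j
        · rw [if_pos hlj, hlj]; linarith
        · rw [if_neg hlj]; linarith
    · rw [hzsum]
  have hTbz : ∀ k, Tb b z k
      = Tb b y k + (if k = j then 1 else 0) - (if k = i then 1 else 0) := by
    intro k
    rw [Tb_app hzsum, Tb_app hsq, hzapp]
    by_cases hkj : k = j
    · rw [if_pos hkj, if_pos hkj]
      by_cases hki : k = i
      · rw [if_pos hki, if_pos hki]; push_cast; ring
      · rw [if_neg hki, if_neg hki]; push_cast; ring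
    · rw [if_neg hkj, if_neg hkj]
      by_cases hki : k = i
      · rw [if_pos hki, if_pos hki]; push_cast; ring
      · rw [if_neg hki, if_neg hki]; push_cast; ring
  refine hF.2 ⟨z, hzB, Or.inr ?_⟩
  have := smaj_transfer (w := Tb b y) (i := i) (j := j) (by linarith)
  have hfun : (fun k => Tb b y k + (if k = j then 1 else 0) - (if k = i then 1 else 0))
      = Tb b z := by
    funext k; rw [hTbz]
  rwa [hfun] at this

lemma xi_swap {σ : Type} [DecidableEq σ] {n : ℕ} (typ : σ → Fin n) {R : Finset σ} {s t : σ}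
    (hs : s ∈ R) (ht : t ∉ R) :
    ∀ k, xi typ (insert t (R.erase s)) k
      = xi typ R k + (if typ t = k then 1 else 0) - (if typ s = k then 1 else 0) := by
  intro k
  have ht' : t ∉ R.erase s := fun h => ht (Finset.mem_of_mem_erase h)
  unfold xi
  rw [Finset.filter_insert]
  by_cases h1 : typ t = k
  · rw [if_pos h1, if_pos h1]
    have htf : t ∉ (R.erase s).filter (fun a => typ a = k) :=
      fun h => ht' (Finset.mem_filter.mp h).1
    rw [Finset.card_insert_of_notMem htf, Finset.filter_erase]
    by_cases h2 : typ s = k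
    · rw [if_pos h2]
      have hsf : s ∈ R.filter (fun a => typ a = k) := Finset.mem_filter.mpr ⟨hs, h2⟩
      rw [Finset.card_erase_of_mem hsf]
      have hpos : 1 ≤ (R.filter (fun a => typ a = k)).card := Finset.card_pos.mpr ⟨s, hsf⟩
      push_cast [Nat.sub_add_cancel hpos]
      ring
    · rw [if_neg h2]
      have hsf : s ∉ R.filter (fun a => typ a = k) :=
        fun h => h2 (Finset.mem_filter.mp h).2
      rw [Finset.erase_eq_of_notMem hsf]
      push_cast; ring
  · rw [if_neg h1, if_neg h1, Finset.filter_erase]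
    by_cases h2 : typ s = k
    · rw [if_pos h2]
      have hsf : s ∈ R.filter (fun a => typ a = k) := Finset.mem_filter.mpr ⟨hs, h2⟩
      rw [Finset.card_erase_of_mem hsf]
      have hpos : 1 ≤ (R.filter (fun a => typ a = k)).card := Finset.card_pos.mpr ⟨s, hsf⟩
      push_cast [Nat.cast_sub hpos]
      ring
    · rw [if_neg h2]
      have hsf : s ∉ R.filter (fun a => typ a = k) :=
        fun h => h2 (Finset.mem_filter.mp h).2
      rw [Finset.erase_eq_of_notMem hsf]
      push_cast; ring


/-- Exchange property between two frontier-achieving subsets of students. -/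
theorem stmt8 {σ : Type} [DecidableEq σ] {n : ℕ} (q : ℕ) (hq : 0 < q)
    (b : Fin n → ℝ) (hb : ∑ i, b i = 0) (typ : σ → Fin n)
    (S R R' : Finset σ) (hR : R ⊆ S) (hR' : R' ⊆ S)
    (hRF : memF q b (xi typ S) (xi typ R)) (hR'F : memF q b (xi typ S) (xi typ R'))
    (hne : R ≠ R') :
    ∀ s ∈ R \ R', ∃ s' ∈ R' \ R,
      memF q b (xi typ S) (xi typ (insert s' (R.erase s))) ∧
      memF q b (xi typ S) (xi typ (insert s (R'.erase s'))) := by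
  intro s hs
  obtain ⟨hsR, hsR'⟩ := Finset.mem_sdiff.mp hs
  by_cases hex : ∃ s' ∈ R' \ R, typ s' = typ s
  · obtain ⟨t, htmem, htt⟩ := hex
    obtain ⟨htR', htR⟩ := Finset.mem_sdiff.mp htmem
    have h1 : xi typ (insert t (R.erase s)) = xi typ R := by
      funext k
      rw [xi_swap typ hsR htR, htt]
      ring
    have h2 : xi typ (insert s (R'.erase t)) = xi typ R' := by
      funext k
      rw [xi_swap typ htR' hsR', htt]
      ring
    exact ⟨t, htmem, by rw [h1]; exact hRF, by rw [h2]; exact hR'F⟩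
  · push_neg at hex
    have hsub : R'.filter (fun a => typ a = typ s)
        ⊆ (R.filter (fun a => typ a = typ s)).erase s := by
      intro t ht
      obtain ⟨htR', htyp⟩ := Finset.mem_filter.mp ht
      have htR : t ∈ R := by
        by_contra htR
        exact hex t (Finset.mem_sdiff.mpr ⟨htR', htR⟩) htyp
      exact Finset.mem_erase.mpr ⟨fun h => hsR' (h ▸ htR'), Finset.mem_filter.mpr ⟨htR, htyp⟩⟩
    have hy'i : xi typ R' (typ s) < xi typ R (typ s) := by
      have hsf : s ∈ R.filter (fun a => typ a = typ s) := Finset.mem_filter.mpr ⟨hsR, rfl⟩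
      have h1 : (R'.filter (fun a => typ a = typ s)).card
          < (R.filter (fun a => typ a = typ s)).card := by
        have h2 := Finset.card_le_card hsub
        rw [Finset.card_erase_of_mem hsf] at h2
        have h3 : 1 ≤ (R.filter (fun a => typ a = typ s)).card :=
          Finset.card_pos.mpr ⟨s, hsf⟩
        omega
      unfold xi
      exact_mod_cast h1
    have hyy' : xi typ R ≠ xi typ R' := fun h => by
      rw [h] at hy'i; exact lt_irrefl _ hy'i
    have hsq : ∑ k, xi typ R k = (q : ℤ) := sum_eq_q hRF hR'F hyy'
    have hsq' : ∑ k, xi typ R' k = (q : ℤ) := sum_eq_q hR'F hRF hyy'.symm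
    obtain ⟨j, hj⟩ : ∃ j, xi typ R j < xi typ R' j := by
      by_contra hcon
      push_neg at hcon
      have := Finset.sum_lt_sum (fun k _ => hcon k) ⟨typ s, Finset.mem_univ _, hy'i⟩
      rw [hsq, hsq'] at this
      exact lt_irrefl _ this
    have hij : typ s ≠ j := fun h => by
      rw [← h] at hj; exact absurd hj (not_lt.mpr hy'i.le)
    -- local inequalities
    have e1 : Tb b (xi typ R) (typ s) ≤ Tb b (xi typ R) j + 1 :=
      local_ineq hRF hsq (typ s) j
        (lt_of_le_of_lt (hR'F.1.1 (typ s)) hy'i)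
        (lt_of_lt_of_le hj (hR'F.1.2.1 j))
    have e2 : Tb b (xi typ R') j ≤ Tb b (xi typ R') (typ s) + 1 :=
      local_ineq hR'F hsq' j (typ s)
        (lt_of_le_of_lt (hRF.1.1 j) hj)
        (lt_of_lt_of_le hy'i (hRF.1.2.1 (typ s)))
    rw [Tb_app hsq (typ s), Tb_app hsq j] at e1
    rw [Tb_app hsq' j, Tb_app hsq' (typ s)] at e2
    have c1 : ((xi typ R' (typ s) : ℤ) : ℝ) + 1 ≤ ((xi typ R (typ s) : ℤ) : ℝ) := by
      exact_mod_cast Int.add_one_le_iff.mpr hy'i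
    have c2 : ((xi typ R j : ℤ) : ℝ) + 1 ≤ ((xi typ R' j : ℤ) : ℝ) := by
      exact_mod_cast Int.add_one_le_iff.mpr hj
    have keyw : ((xi typ R (typ s) : ℤ) : ℝ) + (q : ℝ) * b (typ s)
        = ((xi typ R j : ℤ) : ℝ) + (q : ℝ) * b j + 1 := by linarith
    have keyw' : ((xi typ R' j : ℤ) : ℝ) + (q : ℝ) * b j
        = ((xi typ R' (typ s) : ℤ) : ℝ) + (q : ℝ) * b (typ s) + 1 := by linarith
    -- choose the student t of type j
    have hcard : (R.filter (fun a => typ a = j)).card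
        < (R'.filter (fun a => typ a = j)).card := by
      have hj2 := hj
      unfold xi at hj2
      exact_mod_cast hj2
    have hnotsub : ¬ R'.filter (fun a => typ a = j) ⊆ R.filter (fun a => typ a = j) :=
      fun h => absurd (Finset.card_le_card h) (not_le.mpr hcard)
    obtain ⟨t, ht1, ht2⟩ := Finset.not_subset.mp hnotsub
    obtain ⟨htR', httyp⟩ := Finset.mem_filter.mp ht1
    have htR : t ∉ R := fun h => ht2 (Finset.mem_filter.mpr ⟨h, httyp⟩)
    -- the new count vector for R
    obtain ⟨V, hV⟩ : ∃ V : Fin n → ℤ, ∀ k, V k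
        = xi typ R k + (if j = k then 1 else 0) - (if typ s = k then 1 else 0) :=
      ⟨_, fun _ => rfl⟩
    have hxiV : xi typ (insert t (R.erase s)) = V := by
      funext k
      rw [xi_swap typ hsR htR, httyp, hV]
    have hVsum : ∑ k, V k = (q : ℤ) := by
      simp only [hV]
      rw [Finset.sum_sub_distrib, Finset.sum_add_distrib,
        Finset.sum_ite_eq Finset.univ j (fun _ => (1:ℤ)),
        Finset.sum_ite_eq Finset.univ (typ s) (fun _ => (1:ℤ)),
        if_pos (Finset.mem_univ j), if_pos (Finset.mem_univ (typ s)), hsq]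
      ring
    have hVB : memB q (xi typ S) V := by
      refine ⟨?_, ?_, le_of_eq hVsum⟩
      · intro k
        rw [hV]
        by_cases hk1 : typ s = k
        · rw [if_pos hk1, if_neg (fun h : j = k => hij (hk1 ▸ h.symm ▸ rfl))]
          rw [← hk1]
          have h0 := hR'F.1.1 (typ s)
          linarith [hy'i]
        · rw [if_neg hk1]
          have h0 := hRF.1.1 k
          by_cases hk2 : j = k
          · rw [if_pos hk2]; linarith
          · rw [if_neg hk2]; linarith
      · intro k
        rw [hV]
        have hle := hRF.1.2.1 k
        by_cases hk1 : typ s = k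
        · rw [if_pos hk1, if_neg (fun h : j = k => hij (hk1 ▸ h.symm ▸ rfl))]
          linarith
        · rw [if_neg hk1]
          by_cases hk2 : j = k
          · rw [if_pos hk2, ← hk2]
            have := hR'F.1.2.1 j
            linarith [hj]
          · rw [if_neg hk2]; linarith
    have hTbV : ∀ k, Tb b V k = Tb b (xi typ R) (Equiv.swap (typ s) j k) := by
      intro k
      by_cases hk1 : k = typ s
      · rw [hk1, Equiv.swap_apply_left, Tb_app hVsum, Tb_app hsq, hV,
          if_neg (fun h : j = typ s => hij h.symm), if_pos rfl]
        push_cast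
        linarith [keyw]
      · by_cases hk2 : k = j
        · rw [hk2, Equiv.swap_apply_right, Tb_app hVsum, Tb_app hsq, hV,
            if_pos rfl, if_neg hij]
          push_cast
          linarith [keyw]
        · rw [Equiv.swap_apply_of_ne_of_ne hk1 hk2, Tb_app hVsum, Tb_app hsq, hV,
            if_neg (fun h : j = k => hk2 h.symm), if_neg (fun h : typ s = k => hk1 h.symm)]
          push_cast
          ring
    have hFV : memF q b (xi typ S) V :=
      memF_of_perm hRF hVB hVsum (Equiv.swap (typ s) j) hTbV
    -- the new count vector for R'
    obtain ⟨V', hV'⟩ : ∃ V' : Fin n → ℤ, ∀ k, V' k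
        = xi typ R' k + (if typ s = k then 1 else 0) - (if j = k then 1 else 0) :=
      ⟨_, fun _ => rfl⟩
    have hxiV' : xi typ (insert s (R'.erase t)) = V' := by
      funext k
      rw [xi_swap typ htR' hsR', httyp, hV']
    have hV'sum : ∑ k, V' k = (q : ℤ) := by
      simp only [hV']
      rw [Finset.sum_sub_distrib, Finset.sum_add_distrib,
        Finset.sum_ite_eq Finset.univ (typ s) (fun _ => (1:ℤ)),
        Finset.sum_ite_eq Finset.univ j (fun _ => (1:ℤ)),
        if_pos (Finset.mem_univ j), if_pos (Finset.mem_univ (typ s)), hsq']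
      ring
    have hV'B : memB q (xi typ S) V' := by
      refine ⟨?_, ?_, le_of_eq hV'sum⟩
      · intro k
        rw [hV']
        by_cases hk2 : j = k
        · rw [if_pos hk2, if_neg (fun h : typ s = k => hij (h.trans hk2.symm)), ← hk2]
          have h0 := hRF.1.1 j
          linarith [hj]
        · rw [if_neg hk2]
          have h0 := hR'F.1.1 k
          by_cases hk1 : typ s = k
          · rw [if_pos hk1]; linarith
          · rw [if_neg hk1]; linarith
      · intro k
        rw [hV']
        have hle := hR'F.1.2.1 k
        by_cases hk2 : j = k
        · rw [if_pos hk2, if_neg (fun h : typ s = k => hij (h.trans hk2.symm))]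
          linarith
        · rw [if_neg hk2]
          by_cases hk1 : typ s = k
          · rw [if_pos hk1, ← hk1]
            have := hRF.1.2.1 (typ s)
            linarith [hy'i]
          · rw [if_neg hk1]; linarith
    have hTbV' : ∀ k, Tb b V' k = Tb b (xi typ R') (Equiv.swap (typ s) j k) := by
      intro k
      by_cases hk1 : k = typ s
      · rw [hk1, Equiv.swap_apply_left, Tb_app hV'sum, Tb_app hsq', hV',
          if_neg (fun h : j = typ s => hij h.symm), if_pos rfl]
        push_cast
        linarith [keyw']
      · by_cases hk2 : k = j
        · rw [hk2, Equiv.swap_apply_right, Tb_app hV'sum, Tb_app hsq', hV',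
            if_pos rfl, if_neg hij]
          push_cast
          linarith [keyw']
        · rw [Equiv.swap_apply_of_ne_of_ne hk1 hk2, Tb_app hV'sum, Tb_app hsq', hV',
            if_neg (fun h : j = k => hk2 h.symm), if_neg (fun h : typ s = k => hk1 h.symm)]
          push_cast
          ring
    have hFV' : memF q b (xi typ S) V' :=
      memF_of_perm hR'F hV'B hV'sum (Equiv.swap (typ s) j) hTbV'
    exact ⟨t, Finset.mem_sdiff.mpr ⟨htR', htR⟩,
      by rw [hxiV]; exact hFV, by rw [hxiV']; exact hFV'⟩
end

section
/- Let S be a finite set of typed students and define B(S) = {R ⊆ S : ξ(R) ∈ F_b(ξ(S))}. Then B(S) satisfies the matroid base axioms: B(S) is nonempty, and for every R, R' ∈ B(S) and s ∈ R \ R', there exists s' ∈ R' \ R such that (R \ {s}) ∪ {s'} ∈ B(S) and (R' \ {s'}) ∪ {s} ∈ B(S). -/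
open Finset

namespace StmtAux

variable {n : ℕ}

lemma maj_refl (u : Fin n → ℝ) : maj u u := ⟨fun B => ⟨B, rfl, le_refl _⟩, rfl⟩

lemma maj_comp {u v : Fin n → ℝ} (σ τ : Equiv.Perm (Fin n)) (h : maj u v) :
    maj (u ∘ σ) (v ∘ τ) := by
  constructor
  · intro B
    obtain ⟨A, hA, hle⟩ := h.1 (B.image τ)
    refine ⟨A.image σ.symm, ?_, ?_⟩
    · rw [Finset.card_image_of_injective _ σ.symm.injective, hA,
        Finset.card_image_of_injective _ τ.injective]
    · have e1 : ∑ i ∈ B, (v ∘ τ) i = ∑ i ∈ B.image τ, v i := by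
        rw [Finset.sum_image (fun a _ b _ h => τ.injective h)]; rfl
      have e2 : ∑ i ∈ A.image σ.symm, (u ∘ σ) i = ∑ i ∈ A, u i := by
        rw [Finset.sum_image (fun a _ b _ h => σ.symm.injective h)]
        exact Finset.sum_congr rfl (fun a _ => by simp)
      rw [e1, e2]; exact hle
  · have e1 : ∑ i, (u ∘ σ) i = ∑ i, u i := Equiv.sum_comp σ u
    have e2 : ∑ i, (v ∘ τ) i = ∑ i, v i := Equiv.sum_comp τ v
    rw [e1, e2]; exact h.2

/-- extend a `Fin n` tuple to `ℕ` by zero -/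
noncomputable def ext (w : Fin n → ℝ) : ℕ → ℝ := fun i => if h : i < n then w ⟨i, h⟩ else 0

lemma ext_val (w : Fin n → ℝ) (i : Fin n) : ext w i.val = w i := by
  simp [ext, i.isLt]

lemma sum_ext (w : Fin n → ℝ) : ∑ i ∈ range n, ext w i = ∑ i, w i := by
  rw [← Fin.sum_univ_eq_sum_range (ext w) n]
  exact Finset.sum_congr rfl (fun i _ => ext_val w i)

/-- any `k`-subset sum is at most the sum over the top window, for a monotone sequence -/
lemma sum_le_topwindow : ∀ (N : ℕ) (U : ℕ → ℝ), (∀ i j, i ≤ j → j < N → U i ≤ U j) →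
    ∀ A : Finset ℕ, A ⊆ range N → ∑ i ∈ A, U i ≤ ∑ i ∈ Ico (N - A.card) N, U i := by
  intro N
  induction N with
  | zero =>
    intro U _ A hA
    have : A = ∅ := Finset.subset_empty.mp (by simpa using hA)
    simp [this]
  | succ N ih =>
    intro U hU A hA
    have hUm : ∀ i j, i ≤ j → j < N → U i ≤ U j := fun i j h1 h2 => hU i j h1 (by omega)
    have hcard : A.card ≤ N + 1 := by
      calc A.card ≤ (range (N+1)).card := Finset.card_le_card hA
      _ = N + 1 := by simp
    by_cases hN : N ∈ A
    · have h1 : A.erase N ⊆ range N := by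
        intro a ha
        have h2 := hA (Finset.erase_subset _ _ ha)
        have h3 : a ≠ N := Finset.ne_of_mem_erase ha
        simp only [Finset.mem_range] at h2 ⊢; omega
      have h2 := ih U hUm (A.erase N) h1
      have hk1 : 1 ≤ A.card := Finset.card_pos.mpr ⟨N, hN⟩
      have hce : (A.erase N).card = A.card - 1 := Finset.card_erase_of_mem hN
      have e2 : ∑ i ∈ Ico (N + 1 - A.card) (N + 1), U i
          = ∑ i ∈ Ico (N + 1 - A.card) N, U i + U N :=
        Finset.sum_Ico_succ_top (by omega) U
      have e3 : N - (A.card - 1) = N + 1 - A.card := by omega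
      rw [hce, e3] at h2
      rw [← Finset.add_sum_erase A U hN, e2]
      linarith
    · have hsub : A ⊆ range N := by
        intro a ha
        have h2 := hA ha
        simp only [Finset.mem_range] at h2 ⊢
        rcases Nat.lt_succ_iff_lt_or_eq.mp h2 with h | h
        · exact h
        · exact absurd (h ▸ ha) hN
      have h2 := ih U hUm A hsub
      rcases Nat.eq_zero_or_pos A.card with hk | hk
      · rw [Finset.card_eq_zero.mp hk]; simp
      · have hkN : A.card ≤ N := by
          calc A.card ≤ (range N).card := Finset.card_le_card hsub
          _ = N := by simp
        have e1 : ∑ i ∈ Ico (N - A.card) N, U i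
            = U (N - A.card) + ∑ i ∈ Ico (N - A.card + 1) N, U i :=
          Finset.sum_eq_sum_Ico_succ_bot (by omega) U
        have e2 : ∑ i ∈ Ico (N + 1 - A.card) (N + 1), U i
            = ∑ i ∈ Ico (N + 1 - A.card) N, U i + U N :=
          Finset.sum_Ico_succ_top (by omega) U
        have e3 : N - A.card + 1 = N + 1 - A.card := by omega
        have e4 : U (N - A.card) ≤ U N := hU _ _ (by omega) (by omega)
        rw [e1, e3] at h2
        rw [e2]
        linarith

/-- Abel summation bound -/
lemma abel_aux (V d : ℕ → ℝ) (N : ℕ) (hV : ∀ i j, i ≤ j → j < N → V i ≤ V j)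
    (hD : ∀ k, k ≤ N → ∑ i ∈ range k, d i ≤ 0) :
    ∀ m, 1 ≤ m → m ≤ N → V (m-1) * ∑ i ∈ range m, d i ≤ ∑ i ∈ range m, V i * d i := by
  intro m
  induction m with
  | zero => omega
  | succ m ihm =>
    intro _ hmN
    rcases Nat.eq_zero_or_pos m with hm | hm
    · subst hm; simp
    · have h1 := ihm hm (by omega)
      have h2 : V (m - 1) ≤ V m := hV _ _ (by omega) (by omega)
      have h3 : ∑ i ∈ range m, d i ≤ 0 := hD m (by omega)
      rw [Finset.sum_range_succ, Finset.sum_range_succ]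
      have h4 : 0 ≤ (V (m-1) - V m) * ∑ i ∈ range m, d i := by nlinarith
      have : (m + 1 - 1) = m := by omega
      rw [this]
      nlinarith [h1, h4]

end StmtAux

namespace StmtAux
variable {n : ℕ}

lemma window_eq (w : Fin n → ℝ) (a : ℕ) :
    ∑ i ∈ Ico a n, ext w i = ∑ i ∈ univ.filter (fun i : Fin n => a ≤ i.val), w i := by
  have e0 : Ico a n = (range n).filter (fun i => a ≤ i) := by
    ext i; simp only [Finset.mem_Ico, Finset.mem_filter, Finset.mem_range]; omega
  rw [e0, Finset.sum_filter, Finset.sum_filter,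
    ← Fin.sum_univ_eq_sum_range (fun j => if a ≤ j then ext w j else 0) n]
  exact Finset.sum_congr rfl (fun i _ => by by_cases h : a ≤ i.val <;> simp [h, ext_val])

lemma card_window (k : ℕ) (hk : k ≤ n) :
    (univ.filter (fun i : Fin n => n - k ≤ i.val)).card = k := by
  have himg : (univ.filter (fun i : Fin n => n - k ≤ i.val)).image Fin.val = Ico (n - k) n := by
    ext m
    simp only [Finset.mem_image, Finset.mem_filter, Finset.mem_univ, true_and, Finset.mem_Ico]
    constructor
    · rintro ⟨i, hi, rfl⟩; exact ⟨hi, i.isLt⟩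
    · rintro ⟨h1, h2⟩; exact ⟨⟨m, h2⟩, h1, rfl⟩
  have h := Finset.card_image_of_injective
    (univ.filter (fun i : Fin n => n - k ≤ i.val)) Fin.val_injective
  rw [himg, Nat.card_Ico] at h
  omega

lemma sum_le_window (w : Fin n → ℝ) (hw : Monotone w) (C : Finset (Fin n)) :
    ∑ i ∈ C, w i ≤ ∑ i ∈ Ico (n - C.card) n, ext w i := by
  have hmono : ∀ i j, i ≤ j → j < n → ext w i ≤ ext w j := by
    intro i j hij hj
    have hi : i < n := lt_of_le_of_lt hij hj
    simp only [ext, dif_pos hi, dif_pos hj]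
    exact hw (Fin.mk_le_mk.mpr hij)
  have hC : C.image Fin.val ⊆ range n := by
    intro m hm
    obtain ⟨i, _, rfl⟩ := Finset.mem_image.mp hm
    exact Finset.mem_range.mpr i.isLt
  have hcard : (C.image Fin.val).card = C.card :=
    Finset.card_image_of_injective _ Fin.val_injective
  have h := sum_le_topwindow n (ext w) hmono (C.image Fin.val) hC
  rw [hcard] at h
  calc ∑ i ∈ C, w i = ∑ m ∈ C.image Fin.val, ext w m := by
        rw [Finset.sum_image (fun a _ b _ h => Fin.val_injective h)]
        exact (Finset.sum_congr rfl (fun i _ => ext_val w i)).symm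
    _ ≤ _ := h

lemma maj_window {u v : Fin n → ℝ} (h : maj u v) (k : ℕ) (hk : k ≤ n) :
    ∑ i ∈ Ico (n - k) n, ext (v ∘ ⇑(Tuple.sort v)) i
      ≤ ∑ i ∈ Ico (n - k) n, ext (u ∘ ⇑(Tuple.sort u)) i := by
  set σu := Tuple.sort u with hσu
  set σv := Tuple.sort v with hσv
  rw [window_eq]
  set Bf := univ.filter (fun i : Fin n => n - k ≤ i.val) with hBf
  have hBcard : Bf.card = k := card_window k hk
  have e1 : ∑ i ∈ Bf, (v ∘ ⇑σv) i = ∑ i ∈ Bf.image ⇑σv, v i := by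
    rw [Finset.sum_image (fun a _ b _ h => σv.injective h)]; rfl
  obtain ⟨A, hcard, hle⟩ := h.1 (Bf.image ⇑σv)
  have hAcard : A.card = k := by
    rw [hcard, Finset.card_image_of_injective _ σv.injective, hBcard]
  have e2 : ∑ i ∈ A, u i = ∑ i ∈ A.image ⇑σu.symm, (u ∘ ⇑σu) i := by
    rw [Finset.sum_image (fun a _ b _ h => σu.symm.injective h)]
    exact (Finset.sum_congr rfl (fun a _ => by simp)).symm
  have h3 := sum_le_window (u ∘ ⇑σu) (Tuple.monotone_sort u) (A.image ⇑σu.symm)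
  have hc3 : (A.image ⇑σu.symm).card = k := by
    rw [Finset.card_image_of_injective _ σu.symm.injective, hAcard]
  rw [hc3] at h3
  calc ∑ i ∈ Bf, (v ∘ ⇑σv) i = ∑ i ∈ Bf.image ⇑σv, v i := e1
    _ ≤ ∑ i ∈ A, u i := hle
    _ = ∑ i ∈ A.image ⇑σu.symm, (u ∘ ⇑σu) i := e2
    _ ≤ _ := h3

lemma sum_sq_sorted (u : Fin n → ℝ) :
    ∑ i, u i ^ 2 = ∑ i ∈ range n, (ext (u ∘ ⇑(Tuple.sort u)) i) ^ 2 := by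
  rw [← Fin.sum_univ_eq_sum_range (fun j => (ext (u ∘ ⇑(Tuple.sort u)) j) ^ 2) n]
  rw [← Equiv.sum_comp (Tuple.sort u) (fun i => u i ^ 2)]
  exact Finset.sum_congr rfl (fun i _ => by rw [ext_val]; rfl)

lemma sum_sorted_ext (u : Fin n → ℝ) :
    ∑ i ∈ range n, ext (u ∘ ⇑(Tuple.sort u)) i = ∑ i, u i := by
  rw [sum_ext]
  exact Equiv.sum_comp (Tuple.sort u) u

lemma karamata_aux {u v : Fin n → ℝ} (h : maj u v) :
    ∑ i, v i ^ 2
      + ∑ i ∈ range n, (ext (u ∘ ⇑(Tuple.sort u)) i - ext (v ∘ ⇑(Tuple.sort v)) i) ^ 2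
      ≤ ∑ i, u i ^ 2 := by
  set U := ext (u ∘ ⇑(Tuple.sort u)) with hU
  set V := ext (v ∘ ⇑(Tuple.sort v)) with hV
  have hD : ∀ k, k ≤ n → ∑ i ∈ range k, (U i - V i) ≤ 0 := by
    intro k hkn
    have hw := maj_window h (n - k) (Nat.sub_le n k)
    have hnn : n - (n - k) = k := by omega
    rw [hnn] at hw
    have hsplitU : ∑ i ∈ range k, U i + ∑ i ∈ Ico k n, U i = ∑ i ∈ range n, U i := by
      simp only [Finset.range_eq_Ico]
      exact Finset.sum_Ico_consecutive U (Nat.zero_le k) hkn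
    have hsplitV : ∑ i ∈ range k, V i + ∑ i ∈ Ico k n, V i = ∑ i ∈ range n, V i := by
      simp only [Finset.range_eq_Ico]
      exact Finset.sum_Ico_consecutive V (Nat.zero_le k) hkn
    have htotU : ∑ i ∈ range n, U i = ∑ i, u i := sum_sorted_ext u
    have htotV : ∑ i ∈ range n, V i = ∑ i, v i := sum_sorted_ext v
    have htot : ∑ i, u i = ∑ i, v i := h.2
    rw [Finset.sum_sub_distrib]
    linarith
  have hVmono : ∀ i j, i ≤ j → j < n → V i ≤ V j := by
    intro i j hij hj
    have hi : i < n := lt_of_le_of_lt hij hj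
    simp only [hV, ext, dif_pos hi, dif_pos hj]
    exact Tuple.monotone_sort v (Fin.mk_le_mk.mpr hij)
  have hT : 0 ≤ ∑ i ∈ range n, V i * (U i - V i) := by
    rcases Nat.eq_zero_or_pos n with hn | hn
    · subst hn; simp
    · have := abel_aux V (fun i => U i - V i) n hVmono hD n hn (le_refl n)
      have h0 : ∑ i ∈ range n, (U i - V i) = 0 := by
        rw [Finset.sum_sub_distrib, sum_sorted_ext, sum_sorted_ext, h.2, sub_self]
      rw [h0, mul_zero] at this
      exact this
  have hident : ∑ i ∈ range n, U i ^ 2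
      = ∑ i ∈ range n, V i ^ 2 + (∑ i ∈ range n, (U i - V i) ^ 2
        + 2 * ∑ i ∈ range n, V i * (U i - V i)) := by
    rw [Finset.mul_sum, ← Finset.sum_add_distrib, ← Finset.sum_add_distrib]
    exact Finset.sum_congr rfl (fun i _ => by ring)
  rw [sum_sq_sorted u, sum_sq_sorted v, hident]
  linarith

lemma sq_sum_le_of_maj {u v : Fin n → ℝ} (h : maj u v) : ∑ i, v i ^ 2 ≤ ∑ i, u i ^ 2 := by
  have hk := karamata_aux h
  have : 0 ≤ ∑ i ∈ range n,
      (ext (u ∘ ⇑(Tuple.sort u)) i - ext (v ∘ ⇑(Tuple.sort v)) i) ^ 2 :=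
    Finset.sum_nonneg (fun i _ => sq_nonneg _)
  linarith

lemma sq_sum_lt_of_smaj {u v : Fin n → ℝ} (h : smaj u v) : ∑ i, v i ^ 2 < ∑ i, u i ^ 2 := by
  have hk := karamata_aux h.1
  set σu := Tuple.sort u
  set σv := Tuple.sort v
  by_cases hd : ∀ i ∈ range n, ext (u ∘ ⇑σu) i = ext (v ∘ ⇑σv) i
  · exfalso
    apply h.2
    have hfe : u ∘ ⇑σu = v ∘ ⇑σv := funext fun i => by
      have := hd i.val (Finset.mem_range.mpr i.isLt)
      rwa [ext_val, ext_val] at this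
    have hveq : v = u ∘ ⇑(σv.symm.trans σu) := by
      funext i
      have h1 := congrFun hfe (σv.symm i)
      simp only [Function.comp_apply, Equiv.apply_symm_apply] at h1
      simp only [Function.comp_apply, Equiv.trans_apply]
      exact h1.symm
    rw [hveq]
    have := maj_comp (σv.symm.trans σu) (Equiv.refl _) (maj_refl u)
    simpa using this
  · push_neg at hd
    obtain ⟨i, hi, hne⟩ := hd
    have hpos : 0 < ∑ i ∈ range n, (ext (u ∘ ⇑σu) i - ext (v ∘ ⇑σv) i) ^ 2 := by
      apply Finset.sum_pos' (fun _ _ => sq_nonneg _)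
      exact ⟨i, hi, lt_of_le_of_ne (sq_nonneg _)
        (Ne.symm (pow_ne_zero 2 (sub_ne_zero.mpr hne)))⟩
    linarith

end StmtAux

namespace StmtAux
variable {n : ℕ}

/-- the target size -/
def mm (q : ℕ) (x : Fin n → ℤ) : ℤ := min (q : ℤ) (∑ i, x i)

/-- the shift vector -/
noncomputable def cc (q : ℕ) (b : Fin n → ℝ) (x : Fin n → ℤ) : Fin n → ℝ :=
  fun i => (mm q x : ℝ) * b i

/-- the quadratic potential -/
noncomputable def ff (q : ℕ) (b : Fin n → ℝ) (x : Fin n → ℤ) (y : Fin n → ℤ) : ℝ :=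
  ∑ i, ((y i : ℝ) + cc q b x i) ^ 2

/-- maximum-size feasible vectors -/
def slice (q : ℕ) (x y : Fin n → ℤ) : Prop := memB q x y ∧ ∑ i, y i = mm q x

/-- minimizers of the potential among maximum-size feasible vectors -/
def isMin (q : ℕ) (b : Fin n → ℝ) (x y : Fin n → ℤ) : Prop :=
  slice q x y ∧ ∀ z, slice q x z → ff q b x y ≤ ff q b x z

lemma Tb_slice {q : ℕ} {b : Fin n → ℝ} {x y : Fin n → ℤ} (h : slice q x y) :
    Tb b y = fun i => (y i : ℝ) + cc q b x i := by
  funext i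
  have : ∑ j, ((y j : ℤ) : ℝ) = ((mm q x : ℤ) : ℝ) := by
    rw [← Int.cast_sum]
    exact_mod_cast congrArg (Int.cast : ℤ → ℝ) h.2
  simp only [Tb, cc, this]

lemma sum_Tb {b : Fin n → ℝ} (hb : ∑ i, b i = 0) (y : Fin n → ℤ) :
    ∑ i, Tb b y i = ∑ i, (y i : ℝ) := by
  simp only [Tb]
  rw [Finset.sum_add_distrib, ← Finset.mul_sum, hb, mul_zero, add_zero]

lemma exists_slice {q : ℕ} {x : Fin n → ℤ} (hx : ∀ i, 0 ≤ x i) : ∃ y, slice q x y := by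
  have hxs : (0:ℤ) ≤ ∑ i, x i := Finset.sum_nonneg (fun i _ => hx i)
  have key : ∀ k : ℕ, (k : ℤ) ≤ ∑ i, x i →
      ∃ y : Fin n → ℤ, (∀ i, 0 ≤ y i) ∧ (∀ i, y i ≤ x i) ∧ ∑ i, y i = (k : ℤ) := by
    intro k
    induction k with
    | zero => intro _; exact ⟨fun _ => 0, fun i => le_refl _, fun i => hx i, by simp⟩
    | succ k ih =>
      intro hk
      obtain ⟨y, h1, h2, h3⟩ := ih (by push_cast at hk ⊢; linarith)
      have hlt : ∑ i, y i < ∑ i, x i := by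
        rw [h3]; push_cast at hk ⊢; linarith
      have : ∃ i, y i < x i := by
        by_contra hcon
        push_neg at hcon
        exact absurd (Finset.sum_le_sum (fun i _ => hcon i)) (not_le.mpr hlt)
      obtain ⟨i, hi⟩ := this
      refine ⟨fun j => y j + if j = i then 1 else 0, ?_, ?_, ?_⟩
      · intro j
        by_cases h : j = i
        · simp only [h, if_pos]; linarith [h1 i]
        · simp only [if_neg h, add_zero]; exact h1 j
      · intro j
        by_cases h : j = i
        · simp only [h, if_pos]; linarith [hi]
        · simp only [if_neg h, add_zero]; exact h2 j
      · rw [Finset.sum_add_distrib, h3, Finset.sum_ite_eq' univ i (fun _ => (1:ℤ))]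
        simp only [Finset.mem_univ, if_true]
        push_cast; ring
  have hmnonneg : 0 ≤ mm q x := le_min (by positivity) hxs
  obtain ⟨y, h1, h2, h3⟩ := key (mm q x).toNat
    (by rw [Int.toNat_of_nonneg hmnonneg]; exact min_le_right _ _)
  rw [Int.toNat_of_nonneg hmnonneg] at h3
  exact ⟨y, ⟨h1, h2, h3 ▸ min_le_left _ _⟩, h3⟩

lemma exists_isMin {q : ℕ} (b : Fin n → ℝ) {x : Fin n → ℤ} (hx : ∀ i, 0 ≤ x i) :
    ∃ y, isMin q b x y := by
  classical
  set Dfin : Finset (Fin n → ℤ) :=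
    (Fintype.piFinset fun i => Finset.Icc 0 (x i)).filter (fun y => ∑ i, y i = mm q x)
    with hD
  have hmem : ∀ y, y ∈ Dfin ↔ slice q x y := by
    intro y
    simp only [hD, Finset.mem_filter, Fintype.mem_piFinset, Finset.mem_Icc]
    constructor
    · rintro ⟨h1, h2⟩
      exact ⟨⟨fun i => (h1 i).1, fun i => (h1 i).2, h2 ▸ min_le_left _ _⟩, h2⟩
    · rintro ⟨⟨h1, h2, _⟩, h3⟩
      exact ⟨fun i => ⟨h1 i, h2 i⟩, h3⟩
  obtain ⟨y0, hy0⟩ := exists_slice (q := q) hx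
  obtain ⟨y, hy, hmin⟩ := Finset.exists_min_image Dfin (ff q b x) ⟨y0, (hmem y0).mpr hy0⟩
  exact ⟨y, (hmem y).mp hy, fun z hz => hmin z ((hmem z).mpr hz)⟩

/-- one-unit transfer from `t` to `t'` -/
def stepv (y : Fin n → ℤ) (t t' : Fin n) : Fin n → ℤ :=
  fun i => y i + (if i = t' then 1 else 0) - (if i = t then 1 else 0)

/-- real version -/
def stepR (a : Fin n → ℝ) (t t' : Fin n) : Fin n → ℝ :=
  fun i => a i + (if i = t' then 1 else 0) - (if i = t then 1 else 0)

lemma sum_stepv (y : Fin n → ℤ) (t t' : Fin n) : ∑ i, stepv y t t' i = ∑ i, y i := by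
  simp only [stepv]
  rw [Finset.sum_sub_distrib, Finset.sum_add_distrib,
    Finset.sum_ite_eq' univ t' (fun _ => (1:ℤ)), Finset.sum_ite_eq' univ t (fun _ => (1:ℤ))]
  simp

lemma slice_stepv {q : ℕ} {x y : Fin n → ℤ} {t t' : Fin n} (hy : slice q x y)
    (h1 : 1 ≤ y t) (h2 : y t' < x t') (h3 : t ≠ t') : slice q x (stepv y t t') := by
  obtain ⟨⟨hb1, hb2, hb3⟩, hs⟩ := hy
  refine ⟨⟨?_, ?_, ?_⟩, ?_⟩
  · intro i
    simp only [stepv]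
    split_ifs with e1 e2 e2
    · exact absurd (e2.symm.trans e1) h3
    · linarith [hb1 i]
    · have h1' : (1:ℤ) ≤ y i := by rw [e2]; exact h1
      linarith
    · linarith [hb1 i]
  · intro i
    simp only [stepv]
    split_ifs with e1 e2 e2
    · exact absurd (e2.symm.trans e1) h3
    · have h2' : y i < x i := by rw [e1]; exact h2
      linarith
    · linarith [hb2 i]
    · linarith [hb2 i]
  · rw [sum_stepv, hs]; exact min_le_left _ _
  · rw [sum_stepv]; exact hs

lemma Tb_stepv (b : Fin n → ℝ) (y : Fin n → ℤ) (t t' : Fin n) :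
    Tb b (stepv y t t') = stepR (Tb b y) t t' := by
  funext i
  have hsum2 : (∑ j, ((stepv y t t' j : ℤ) : ℝ)) = ∑ j, ((y j : ℤ) : ℝ) := by
    rw [← Int.cast_sum, ← Int.cast_sum, sum_stepv]
  simp only [Tb]
  rw [hsum2]
  simp only [stepR, stepv, Tb]
  split_ifs <;> push_cast <;> ring

lemma sum_sq_stepR (a : Fin n → ℝ) {t t' : Fin n} (h : t ≠ t') :
    ∑ i, stepR a t t' i ^ 2 = ∑ i, a i ^ 2 + 2 * a t' - 2 * a t + 2 := by
  have key : ∀ i, stepR a t t' i ^ 2 = a i ^ 2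
      + ((if i = t' then 2 * a i + 1 else 0)
      + (if i = t then - 2 * a i + 1 else 0)) := by
    intro i
    simp only [stepR]
    split_ifs with e1 e2 e2
    · exact absurd (e2.symm.trans e1) h
    · ring
    · ring
    · ring
  rw [Finset.sum_congr rfl (fun i _ => key i)]
  rw [Finset.sum_add_distrib, Finset.sum_add_distrib,
    Finset.sum_ite_eq' univ t' (fun i => 2 * a i + 1),
    Finset.sum_ite_eq' univ t (fun i => - 2 * a i + 1)]
  simp only [Finset.mem_univ, if_true]
  ring

lemma smaj_stepR (a : Fin n → ℝ) {t t' : Fin n} (h : a t' + 1 < a t) :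
    smaj a (stepR a t t') := by
  have htt' : t ≠ t' := by intro he; rw [he] at h; linarith
  constructor
  · constructor
    · intro B
      have hsB : ∀ C : Finset (Fin n), ∑ i ∈ C, stepR a t t' i
          = ∑ i ∈ C, a i + (if t' ∈ C then 1 else 0) - (if t ∈ C then 1 else 0) := by
        intro C
        simp only [stepR]
        rw [Finset.sum_sub_distrib, Finset.sum_add_distrib,
          Finset.sum_ite_eq' C t' (fun _ => (1:ℝ)), Finset.sum_ite_eq' C t (fun _ => (1:ℝ))]
      by_cases ht : t ∈ B
      · refine ⟨B, rfl, ?_⟩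
        rw [hsB B, if_pos ht]
        by_cases ht' : t' ∈ B <;> simp [ht'] <;> linarith
      · by_cases ht' : t' ∈ B
        · refine ⟨insert t (B.erase t'), ?_, ?_⟩
          · rw [Finset.card_insert_of_notMem (fun hc => ht (Finset.mem_of_mem_erase hc)),
              Finset.card_erase_of_mem ht']
            have : 1 ≤ B.card := Finset.card_pos.mpr ⟨t', ht'⟩
            omega
          · rw [hsB B, if_pos ht', if_neg ht]
            rw [Finset.sum_insert (fun hc => ht (Finset.mem_of_mem_erase hc))]
            have herase : a t' + ∑ i ∈ B.erase t', a i = ∑ i ∈ B, a i :=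
              Finset.add_sum_erase B a ht'
            linarith
        · refine ⟨B, rfl, ?_⟩
          rw [hsB B, if_neg ht, if_neg ht']
          simp
    · have : ∑ i, stepR a t t' i = ∑ i, a i + 1 - 1 := by
        simp only [stepR]
        rw [Finset.sum_sub_distrib, Finset.sum_add_distrib,
          Finset.sum_ite_eq' univ t' (fun _ => (1:ℝ)), Finset.sum_ite_eq' univ t (fun _ => (1:ℝ))]
        simp
      rw [this]; ring
  · intro hmaj
    have h1 := sq_sum_le_of_maj hmaj
    rw [sum_sq_stepR a htt'] at h1
    linarith

end StmtAux

namespace StmtAux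
variable {n : ℕ}

lemma intsq (k : ℤ) : |k| ≤ k ^ 2 := by
  rcases eq_or_ne k 0 with rfl | hk
  · simp
  · have h1 : 1 ≤ |k| := Int.one_le_abs hk
    calc |k| = 1 * |k| := (one_mul _).symm
      _ ≤ |k| * |k| := by
          apply mul_le_mul_of_nonneg_right h1 (abs_nonneg k)
      _ = k ^ 2 := by rw [← abs_mul, ← sq, abs_of_nonneg (sq_nonneg k)]

lemma ff_stepv (q : ℕ) (b : Fin n → ℝ) (x : Fin n → ℤ) (y : Fin n → ℤ) {t t' : Fin n}
    (h : t ≠ t') :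
    ff q b x (stepv y t t') = ff q b x y + 2 * ((y t' : ℝ) + cc q b x t')
      - 2 * ((y t : ℝ) + cc q b x t) + 2 := by
  have hcast : ∀ i, ((stepv y t t' i : ℤ) : ℝ) + cc q b x i
      = stepR (fun j => (y j : ℝ) + cc q b x j) t t' i := by
    intro i
    simp only [stepv, stepR]
    split_ifs <;> push_cast <;> ring
  have h1 : ff q b x (stepv y t t')
      = ∑ i, stepR (fun j => (y j : ℝ) + cc q b x j) t t' i ^ 2 := by
    unfold ff
    exact Finset.sum_congr rfl (fun i _ => by rw [hcast i])
  rw [h1, sum_sq_stepR _ h]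
  simp only [ff]

lemma toMin {q : ℕ} {b : Fin n → ℝ} {x : Fin n → ℤ} :
    ∀ (N : ℕ) (y z : Fin n → ℤ), slice q x y → isMin q b x z →
      (∑ i, |y i - z i|) ≤ (N : ℤ) →
      ff q b x y = ff q b x z ∨ ∃ w, slice q x w ∧ smaj (Tb b y) (Tb b w) := by
  intro N
  induction N using Nat.strong_induction_on with
  | _ N ih =>
    intro y z hy hz hN
    by_cases hfe : ff q b x y = ff q b x z
    · exact Or.inl hfe
    have hflt : ff q b x z < ff q b x y := lt_of_le_of_ne (hz.2 y hy) (fun h => hfe h.symm)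
    have hyne : y ≠ z := fun h => hfe (by rw [h])
    have hsum : ∑ i, y i = ∑ i, z i := hy.2.trans hz.1.2.symm
    set a : Fin n → ℝ := fun i => (y i : ℝ) + cc q b x i with ha
    have hPne : (univ.filter (fun i => z i < y i)).Nonempty := by
      rw [Finset.filter_nonempty_iff]
      by_contra hcon
      push_neg at hcon
      have hle : ∀ i ∈ univ, y i ≤ z i := fun i hi => hcon i hi
      obtain ⟨j, hj⟩ := Function.ne_iff.mp hyne
      have hlt : ∑ i, y i < ∑ i, z i :=
        Finset.sum_lt_sum hle ⟨j, mem_univ j, lt_of_le_of_ne (hle j (mem_univ j)) hj⟩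
      exact (ne_of_lt hlt) hsum
    have hNne : (univ.filter (fun i => y i < z i)).Nonempty := by
      rw [Finset.filter_nonempty_iff]
      by_contra hcon
      push_neg at hcon
      have hle : ∀ i ∈ univ, z i ≤ y i := fun i hi => hcon i hi
      obtain ⟨j, hj⟩ := Function.ne_iff.mp hyne
      have hlt : ∑ i, z i < ∑ i, y i :=
        Finset.sum_lt_sum hle ⟨j, mem_univ j, lt_of_le_of_ne (hle j (mem_univ j)) (Ne.symm hj)⟩
      exact (ne_of_lt hlt) hsum.symm
    obtain ⟨t, htP, htmax⟩ := Finset.exists_max_image _ a hPne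
    obtain ⟨t', ht'N, ht'min⟩ := Finset.exists_min_image _ a hNne
    rw [Finset.mem_filter] at htP ht'N
    have hty : z t < y t := htP.2
    have ht'y : y t' < z t' := ht'N.2
    have htt' : t ≠ t' := by intro h; rw [h] at hty; omega
    have hyt1 : 1 ≤ y t := by have := hz.1.1.1 t; omega
    have hyt'x : y t' < x t' := by have := hz.1.1.2.1 t'; omega
    have hwslice : slice q x (stepv y t t') := slice_stepv hy hyt1 hyt'x htt'
    have hTby : Tb b y = a := Tb_slice hy
    rcases lt_trichotomy (a t - a t') 1 with hc | hc | hc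
    · exfalso
      set d : Fin n → ℝ := fun i => ((z i : ℝ) - (y i : ℝ)) with hd
      have hident : ff q b x z = ff q b x y + (∑ i, d i ^ 2 + 2 * ∑ i, a i * d i) := by
        unfold ff
        rw [Finset.mul_sum, ← Finset.sum_add_distrib, ← Finset.sum_add_distrib]
        exact Finset.sum_congr rfl (fun i _ => by simp only [ha, hd]; ring)
      have hdsum : ∑ i, d i = 0 := by
        simp only [hd]
        rw [Finset.sum_sub_distrib, ← Int.cast_sum, ← Int.cast_sum, hsum, sub_self]
      set K := ∑ i, max (d i) 0 with hK
      have hKneg : ∑ i, min (d i) 0 = -K := by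
        have h1 : ∑ i, (max (d i) 0 + min (d i) 0) = ∑ i, d i :=
          Finset.sum_congr rfl (fun i _ => (max_add_min _ _).trans (add_zero _))
        rw [Finset.sum_add_distrib, hdsum, ← hK] at h1
        linarith
      have hKpos : 0 < K := by
        apply Finset.sum_pos' (fun i _ => le_max_right _ _)
        refine ⟨t', mem_univ t', ?_⟩
        have h1 : (0:ℝ) < d t' := by
          simp only [hd]
          have h2 : (0:ℤ) < z t' - y t' := by omega
          have h3 : ((0:ℤ):ℝ) < ((z t' - y t' : ℤ):ℝ) := Int.cast_lt.mpr h2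
          push_cast at h3
          linarith
        exact lt_max_iff.mpr (Or.inl h1)
      have hbound : ∀ i ∈ univ, a t' * max (d i) 0 + a t * min (d i) 0 ≤ a i * d i := by
        intro i _
        rcases lt_trichotomy (d i) 0 with h0 | h0 | h0
        · have hzi : z i < y i := by
            have h1 : ((z i : ℤ):ℝ) < ((y i : ℤ):ℝ) := by simp only [hd] at h0; linarith
            exact_mod_cast h1
          have hai : a i ≤ a t := htmax i (Finset.mem_filter.mpr ⟨mem_univ i, hzi⟩)
          rw [max_eq_right (le_of_lt h0), min_eq_left (le_of_lt h0)]
          nlinarith [mul_nonneg (sub_nonneg.mpr hai) (neg_nonneg.mpr (le_of_lt h0))]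
        · rw [h0]; simp
        · have hzi : y i < z i := by
            have h1 : ((y i : ℤ):ℝ) < ((z i : ℤ):ℝ) := by simp only [hd] at h0; linarith
            exact_mod_cast h1
          have hai : a t' ≤ a i := ht'min i (Finset.mem_filter.mpr ⟨mem_univ i, hzi⟩)
          rw [max_eq_left (le_of_lt h0), min_eq_right (le_of_lt h0)]
          nlinarith [mul_nonneg (sub_nonneg.mpr hai) (le_of_lt h0)]
      have hsum_ad : a t' * K + a t * (-K) ≤ ∑ i, a i * d i := by
        have h1 := Finset.sum_le_sum hbound
        rw [Finset.sum_add_distrib, ← Finset.mul_sum, ← Finset.mul_sum, ← hK, hKneg] at h1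
        exact h1
      have hd2 : ∀ i ∈ univ, max (d i) 0 - min (d i) 0 ≤ d i ^ 2 := by
        intro i _
        have h2 := intsq (z i - y i)
        have h3 : (|z i - y i| : ℝ) ≤ (((z i - y i) : ℤ):ℝ) ^ 2 := by exact_mod_cast h2
        push_cast at h3
        have h1 : |d i| ≤ d i ^ 2 := by simp only [hd]; exact h3
        have h4 : max (d i) 0 - min (d i) 0 = |d i| := by
          rw [max_sub_min_eq_abs]
          simp [abs_sub_comm]
        linarith
      have hsum_d2 : 2 * K ≤ ∑ i, d i ^ 2 := by
        have h1 := Finset.sum_le_sum hd2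
        rw [Finset.sum_sub_distrib, ← hK, hKneg] at h1
        linarith
      nlinarith [mul_pos (by linarith : (0:ℝ) < 1 - (a t - a t')) hKpos]
    · -- equal case: transfer is a swap
      set w := stepv y t t' with hw
      have hffw : ff q b x w = ff q b x y := by
        rw [hw, ff_stepv q b x y htt']
        have e1 : (y t' : ℝ) + cc q b x t' = a t' := rfl
        have e2 : (y t : ℝ) + cc q b x t = a t := rfl
        rw [e1, e2]
        linarith
      have hdist : ∑ i, |w i - z i| = ∑ i, |y i - z i| - 2 := by
        have key : ∀ i, |w i - z i|
            = |y i - z i| - ((if i = t' then 1 else 0) + (if i = t then 1 else 0)) := by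
          intro i
          simp only [hw, stepv]
          split_ifs with e1 e2 e2
          · exact absurd (e2.symm.trans e1) htt'
          · have h1 : y i < z i := by rw [e1]; exact ht'y
            rw [abs_of_nonpos (by omega), abs_of_nonpos (by omega)]; ring
          · have h1 : z i < y i := by rw [e2]; exact hty
            rw [abs_of_nonneg (by omega), abs_of_nonneg (by omega)]; ring
          · simp
        rw [Finset.sum_congr rfl (fun i _ => key i), Finset.sum_sub_distrib,
          Finset.sum_add_distrib, Finset.sum_ite_eq' univ t' (fun _ => (1:ℤ)),
          Finset.sum_ite_eq' univ t (fun _ => (1:ℤ))]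
        simp only [Finset.mem_univ, if_true]
        ring
      have hpair : ∑ i ∈ ({t, t'} : Finset (Fin n)), |y i - z i|
          = |y t - z t| + |y t' - z t'| := Finset.sum_pair htt'
      have hs2 : ∑ i ∈ ({t, t'} : Finset (Fin n)), |y i - z i| ≤ ∑ i, |y i - z i| :=
        Finset.sum_le_sum_of_subset_of_nonneg (subset_univ _) (fun i _ _ => abs_nonneg _)
      have hN2 : 2 ≤ N := by
        have e1 : (1:ℤ) ≤ |y t - z t| := Int.one_le_abs (by omega)
        have e2 : (1:ℤ) ≤ |y t' - z t'| := Int.one_le_abs (by omega)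
        have h3 : (2:ℤ) ≤ (N:ℤ) := by rw [hpair] at hs2; linarith
        exact_mod_cast h3
      have hcast1 : ((N - 1 : ℕ):ℤ) = (N:ℤ) - 1 := by
        have : 1 ≤ N := by omega
        push_cast [this]
        ring
      have hdist2 : ∑ i, |w i - z i| ≤ ((N - 1 : ℕ) : ℤ) := by
        rw [hdist, hcast1]; linarith
      rcases ih (N-1) (by omega) w z hwslice hz hdist2 with hor | ⟨v, hv, hsv⟩
      · exact Or.inl (hffw.symm.trans hor)
      · right
        have hTbw : Tb b w = a ∘ ⇑(Equiv.swap t t') := by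
          rw [hw, Tb_stepv, hTby]
          funext i
          simp only [stepR, Function.comp_apply]
          rcases eq_or_ne i t with rfl | hit
          · rw [if_neg htt', if_pos rfl, Equiv.swap_apply_left]; linarith
          · rcases eq_or_ne i t' with rfl | hit'
            · rw [if_pos rfl, if_neg hit, Equiv.swap_apply_right]; linarith
            · rw [if_neg hit', if_neg hit, Equiv.swap_apply_of_ne_of_ne hit hit']; ring
        refine ⟨v, hv, ?_, ?_⟩
        · have h1 := maj_comp (Equiv.swap t t') (Equiv.refl _) hsv.1
          have he : Tb b w ∘ ⇑(Equiv.swap t t') = Tb b y := by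
            rw [hTbw, hTby]
            funext i
            simp [Equiv.swap_apply_self]
          rw [he] at h1
          simpa using h1
        · intro hcon
          apply hsv.2
          have h1 := maj_comp (Equiv.refl _) (Equiv.swap t t') hcon
          have he : Tb b y ∘ ⇑(Equiv.swap t t') = Tb b w := by
            rw [hTbw, hTby]
          rw [he] at h1
          simpa using h1
    · right
      refine ⟨stepv y t t', hwslice, ?_⟩
      rw [Tb_stepv, hTby]
      exact smaj_stepR a (by linarith)

end StmtAux

namespace StmtAux
variable {n : ℕ}

lemma memF_iff {q : ℕ} {b : Fin n → ℝ} {x : Fin n → ℤ} (hb : ∑ i, b i = 0)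
    (hx : ∀ i, 0 ≤ x i) (y : Fin n → ℤ) :
    memF q b x y ↔ isMin q b x y := by
  constructor
  · rintro ⟨hyB, hno⟩
    have hys : ∑ i, y i = mm q x := by
      rcases lt_or_ge (∑ i, y i) (mm q x) with hlt | hge
      · exfalso
        have h1 : ∑ i, y i < (q:ℤ) := lt_of_lt_of_le hlt (min_le_left _ _)
        have h2 : ∑ i, y i < ∑ i, x i := lt_of_lt_of_le hlt (min_le_right _ _)
        have h3 : ∃ i, y i < x i := by
          by_contra hcon
          push_neg at hcon
          exact absurd (Finset.sum_le_sum (fun i (_ : i ∈ univ) => hcon i)) (not_le.mpr h2)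
        obtain ⟨i, hi⟩ := h3
        apply hno
        refine ⟨fun j => y j + if j = i then 1 else 0, ⟨?_, ?_, ?_⟩, Or.inl ⟨?_, ?_⟩⟩
        · intro j
          by_cases h : j = i
          · simp only [h, if_pos]; linarith [hyB.1 i]
          · simp only [if_neg h, add_zero]; exact hyB.1 j
        · intro j
          by_cases h : j = i
          · simp only [h, if_pos]; omega
          · simp only [if_neg h, add_zero]; exact hyB.2.1 j
        · rw [Finset.sum_add_distrib, Finset.sum_ite_eq' univ i (fun _ => (1:ℤ))]
          simp only [Finset.mem_univ, if_true]
          omega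
        · intro j
          by_cases h : j = i <;> simp [h]
        · intro hcon2
          have := congrFun hcon2 i
          simp at this
      · have h1 : mm q x ≤ ∑ i, y i → ∑ i, y i ≤ mm q x → ∑ i, y i = mm q x :=
          fun h1 h2 => le_antisymm h2 h1
        apply h1 hge
        exact le_min hyB.2.2 (Finset.sum_le_sum (fun i _ => hyB.2.1 i))
    have hslice : slice q x y := ⟨hyB, hys⟩
    refine ⟨hslice, ?_⟩
    obtain ⟨z0, hz0⟩ := exists_isMin b hx
    have hdist : ∑ i, |y i - z0 i| ≤ (((∑ i, |y i - z0 i|).toNat : ℕ) : ℤ) := by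
      rw [Int.toNat_of_nonneg (Finset.sum_nonneg (fun i _ => abs_nonneg _))]
    rcases toMin _ y z0 hslice hz0 hdist with heq | ⟨w, hw, hsw⟩
    · intro z hz
      rw [heq]
      exact hz0.2 z hz
    · exact absurd ⟨w, hw.1, Or.inr hsw⟩ hno
  · rintro ⟨hslice, hmin⟩
    refine ⟨hslice.1, ?_⟩
    rintro ⟨z, hzB, hor | hsmaj⟩
    · obtain ⟨hle, hne⟩ := hor
      obtain ⟨j, hj⟩ := Function.ne_iff.mp hne
      have h1 : ∑ i, y i < ∑ i, z i :=
        Finset.sum_lt_sum (fun i _ => hle i)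
          ⟨j, mem_univ j, lt_of_le_of_ne (hle j) hj⟩
      have h2 : ∑ i, z i ≤ mm q x :=
        le_min hzB.2.2 (Finset.sum_le_sum (fun i _ => hzB.2.1 i))
      rw [hslice.2] at h1
      omega
    · have h1 : ∑ i, Tb b y i = ∑ i, Tb b z i := hsmaj.1.2
      rw [sum_Tb hb, sum_Tb hb] at h1
      have h2 : ∑ i, y i = ∑ i, z i := by
        rw [← Int.cast_sum, ← Int.cast_sum] at h1
        exact_mod_cast h1
      have hzslice : slice q x z := ⟨hzB, h2 ▸ hslice.2⟩
      have h3 : ∑ i, Tb b z i ^ 2 < ∑ i, Tb b y i ^ 2 := sq_sum_lt_of_smaj hsmaj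
      rw [Tb_slice hslice, Tb_slice hzslice] at h3
      have h4 : ff q b x z < ff q b x y := by simpa [ff] using h3
      exact absurd (hmin z hzslice) (not_le.mpr h4)

lemma exchangeVec {q : ℕ} {b : Fin n → ℝ} {x : Fin n → ℤ} {y y' : Fin n → ℤ} {t : Fin n}
    (hy : isMin q b x y) (hy' : isMin q b x y') (ht : y' t < y t) :
    ∃ t', y t' < y' t' ∧ isMin q b x (stepv y t t') ∧ isMin q b x (stepv y' t' t) := by
  have hsum : ∑ i, y i = ∑ i, y' i := hy.1.2.trans hy'.1.2.symm
  have hex : ∃ t', y t' < y' t' := by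
    by_contra hcon
    push_neg at hcon
    have h1 : ∑ i, y' i < ∑ i, y i :=
      Finset.sum_lt_sum (fun i _ => hcon i) ⟨t, mem_univ t, ht⟩
    exact (ne_of_lt h1) hsum.symm
  obtain ⟨t', ht'⟩ := hex
  have htt' : t ≠ t' := by intro h; rw [h] at ht; omega
  have hs1 : slice q x (stepv y t t') := by
    apply slice_stepv hy.1
    · have := hy'.1.1.1 t; omega
    · have := hy'.1.1.2.1 t'; omega
    · exact htt'
  have hs2 : slice q x (stepv y' t' t) := by
    apply slice_stepv hy'.1
    · have := hy.1.1.1 t'; omega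
    · have := hy.1.1.2.1 t; omega
    · exact htt'.symm
  have hf1 := hy.2 _ hs1
  have hf2 := hy'.2 _ hs2
  have he1 := ff_stepv q b x y htt'
  have he2 := ff_stepv q b x y' htt'.symm
  -- cast facts
  have hc1 : (y' t : ℝ) + 1 ≤ (y t : ℝ) := by exact_mod_cast ht
  have hc2 : (y t' : ℝ) + 1 ≤ (y' t' : ℝ) := by exact_mod_cast ht'
  have heq1 : ff q b x (stepv y t t') = ff q b x y := by
    apply le_antisymm _ hf1
    rw [he1] at hf1 ⊢
    rw [he2] at hf2
    linarith
  have heq2 : ff q b x (stepv y' t' t) = ff q b x y' := by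
    apply le_antisymm _ hf2
    rw [he1] at hf1
    rw [he2] at hf2 ⊢
    linarith
  refine ⟨t', ht', ⟨hs1, fun z hz => ?_⟩, ⟨hs2, fun z hz => ?_⟩⟩
  · rw [heq1]; exact hy.2 z hz
  · rw [heq2]; exact hy'.2 z hz

end StmtAux

namespace StmtAux
variable {σ : Type} [DecidableEq σ] {n : ℕ} (typ : σ → Fin n)

lemma xi_realize {S : Finset σ} {y : Fin n → ℤ} (h0 : ∀ i, 0 ≤ y i)
    (h1 : ∀ i, y i ≤ xi typ S i) : ∃ R, R ⊆ S ∧ xi typ R = y := by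
  have hch : ∀ i : Fin n, ∃ T : Finset σ,
      T ⊆ S.filter (fun s => typ s = i) ∧ T.card = (y i).toNat := by
    intro i
    have hle : (y i).toNat ≤ (S.filter (fun s => typ s = i)).card := by
      have h2 := h1 i
      simp only [xi] at h2
      omega
    obtain ⟨T, hT1, hT2⟩ := Finset.exists_subset_card_eq hle
    exact ⟨T, hT1, hT2⟩
  choose T hT1 hT2 using hch
  refine ⟨univ.biUnion T, ?_, ?_⟩
  · intro s hs
    obtain ⟨i, _, hi⟩ := Finset.mem_biUnion.mp hs
    exact (Finset.mem_filter.mp (hT1 i hi)).1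
  · funext i
    have hfil : (univ.biUnion T).filter (fun s => typ s = i) = T i := by
      ext s
      simp only [Finset.mem_filter, Finset.mem_biUnion, Finset.mem_univ, true_and]
      constructor
      · rintro ⟨⟨j, hj⟩, hts⟩
        have htj : typ s = j := (Finset.mem_filter.mp (hT1 j hj)).2
        exact (htj.symm.trans hts) ▸ hj
      · intro hs
        exact ⟨⟨i, hs⟩, (Finset.mem_filter.mp (hT1 i hs)).2⟩
    simp only [xi, hfil, hT2 i]
    exact Int.toNat_of_nonneg (h0 i)

lemma xi_swap {R : Finset σ} {s s' : σ} (hs : s ∈ R) (hs' : s' ∉ R) :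
    xi typ (insert s' (R.erase s)) = stepv (xi typ R) (typ s) (typ s') := by
  funext i
  simp only [xi, stepv]
  rw [Finset.filter_insert, Finset.filter_erase]
  by_cases h1 : typ s' = i
  · rw [if_pos h1, if_pos h1.symm]
    have hs'ne : s' ∉ (R.filter (fun u => typ u = i)).erase s :=
      fun hc => hs' (Finset.mem_filter.mp (Finset.mem_of_mem_erase hc)).1
    rw [Finset.card_insert_of_notMem hs'ne]
    by_cases h2 : typ s = i
    · rw [if_pos h2.symm]
      have hsf : s ∈ R.filter (fun u => typ u = i) := Finset.mem_filter.mpr ⟨hs, h2⟩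
      have hpos : 1 ≤ (R.filter (fun u => typ u = i)).card := Finset.card_pos.mpr ⟨s, hsf⟩
      rw [Finset.card_erase_of_mem hsf]
      omega
    · rw [if_neg (fun hc : i = typ s => h2 hc.symm)]
      rw [Finset.erase_eq_of_notMem
        (fun hc : s ∈ R.filter (fun u => typ u = i) => h2 (Finset.mem_filter.mp hc).2)]
      omega
  · rw [if_neg h1, if_neg (fun hc : i = typ s' => h1 hc.symm)]
    by_cases h2 : typ s = i
    · rw [if_pos h2.symm]
      have hsf : s ∈ R.filter (fun u => typ u = i) := Finset.mem_filter.mpr ⟨hs, h2⟩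
      have hpos : 1 ≤ (R.filter (fun u => typ u = i)).card := Finset.card_pos.mpr ⟨s, hsf⟩
      rw [Finset.card_erase_of_mem hsf]
      omega
    · rw [if_neg (fun hc : i = typ s => h2 hc.symm)]
      rw [Finset.erase_eq_of_notMem
        (fun hc : s ∈ R.filter (fun u => typ u = i) => h2 (Finset.mem_filter.mp hc).2)]
      omega

lemma partnerA {R R' : Finset σ} {t' : Fin n} (h : xi typ R t' < xi typ R' t') :
    ∃ s', s' ∈ R' \ R ∧ typ s' = t' := by
  have hsub : R'.filter (fun u => typ u = t') ⊆
      R.filter (fun u => typ u = t') ∪ (R' \ R).filter (fun u => typ u = t') := by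
    intro u hu
    rw [Finset.mem_filter] at hu
    rw [Finset.mem_union, Finset.mem_filter, Finset.mem_filter, Finset.mem_sdiff]
    by_cases hR : u ∈ R
    · exact Or.inl ⟨hR, hu.2⟩
    · exact Or.inr ⟨⟨hu.1, hR⟩, hu.2⟩
  have hcard := Finset.card_le_card hsub
  have hcu := Finset.card_union_le (R.filter (fun u => typ u = t'))
    ((R' \ R).filter (fun u => typ u = t'))
  have hne : ((R' \ R).filter (fun u => typ u = t')).Nonempty := by
    rw [← Finset.card_pos]
    simp only [xi] at h
    omega
  obtain ⟨s', hs'⟩ := hne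
  rw [Finset.mem_filter] at hs'
  exact ⟨s', hs'.1, hs'.2⟩

lemma partnerB {R R' : Finset σ} {s : σ} (hsR : s ∈ R) (hsR' : s ∉ R')
    (h : xi typ R (typ s) ≤ xi typ R' (typ s)) :
    ∃ s', s' ∈ R' \ R ∧ typ s' = typ s := by
  have hsub : R'.filter (fun u => typ u = typ s) ⊆
      (R.filter (fun u => typ u = typ s)).erase s ∪ (R' \ R).filter (fun u => typ u = typ s) := by
    intro u hu
    rw [Finset.mem_filter] at hu
    rw [Finset.mem_union, Finset.mem_erase, Finset.mem_filter, Finset.mem_filter,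
      Finset.mem_sdiff]
    by_cases hR : u ∈ R
    · exact Or.inl ⟨fun hc => hsR' (hc ▸ hu.1), hR, hu.2⟩
    · exact Or.inr ⟨⟨hu.1, hR⟩, hu.2⟩
  have hcard := Finset.card_le_card hsub
  have hcu := Finset.card_union_le ((R.filter (fun u => typ u = typ s)).erase s)
    ((R' \ R).filter (fun u => typ u = typ s))
  have hmem : s ∈ R.filter (fun u => typ u = typ s) := Finset.mem_filter.mpr ⟨hsR, rfl⟩
  have hpos : 1 ≤ (R.filter (fun u => typ u = typ s)).card := Finset.card_pos.mpr ⟨s, hmem⟩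
  have herase := Finset.card_erase_of_mem hmem
  have hne : ((R' \ R).filter (fun u => typ u = typ s)).Nonempty := by
    rw [← Finset.card_pos]
    simp only [xi] at h
    omega
  obtain ⟨s', hs'⟩ := hne
  rw [Finset.mem_filter] at hs'
  exact ⟨s', hs'.1, hs'.2⟩

end StmtAux

/-- The frontier-achieving subsets of `S` form the bases of a matroid:
nonemptiness and the symmetric base-exchange axiom. -/
theorem stmt9 {σ : Type} [DecidableEq σ] {n : ℕ} (q : ℕ) (hq : 0 < q)
    (b : Fin n → ℝ) (hb : ∑ i, b i = 0) (typ : σ → Fin n) (S : Finset σ) :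
    (∃ R : Finset σ, R ⊆ S ∧ memF q b (xi typ S) (xi typ R)) ∧
    (∀ R R' : Finset σ, R ⊆ S → R' ⊆ S →
      memF q b (xi typ S) (xi typ R) → memF q b (xi typ S) (xi typ R') →
      ∀ s ∈ R \ R', ∃ s' ∈ R' \ R,
        ((insert s' (R.erase s)) ⊆ S ∧
          memF q b (xi typ S) (xi typ (insert s' (R.erase s)))) ∧
        ((insert s (R'.erase s')) ⊆ S ∧
          memF q b (xi typ S) (xi typ (insert s (R'.erase s'))))) := by
  classical
  have hx0 : ∀ i, 0 ≤ xi typ S i := fun i => Int.natCast_nonneg _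
  constructor
  · obtain ⟨y, hy⟩ := StmtAux.exists_isMin (q := q) b hx0
    obtain ⟨R, hRS, hRy⟩ := StmtAux.xi_realize typ hy.1.1.1 hy.1.1.2.1
    refine ⟨R, hRS, ?_⟩
    apply (StmtAux.memF_iff hb hx0 _).mpr
    rw [hRy]
    exact hy
  · intro R R' hRS hR'S hFR hFR' s hs
    rw [Finset.mem_sdiff] at hs
    obtain ⟨hsR, hsR'⟩ := hs
    have hmR := (StmtAux.memF_iff hb hx0 _).mp hFR
    have hmR' := (StmtAux.memF_iff hb hx0 _).mp hFR'
    by_cases hc : xi typ R (typ s) ≤ xi typ R' (typ s)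
    · obtain ⟨s', hs'mem, hs'typ⟩ := StmtAux.partnerB typ hsR hsR' hc
      rw [Finset.mem_sdiff] at hs'mem
      refine ⟨s', Finset.mem_sdiff.mpr hs'mem, ⟨?_, ?_⟩, ⟨?_, ?_⟩⟩
      · intro u hu
        rcases Finset.mem_insert.mp hu with rfl | hu2
        · exact hR'S hs'mem.1
        · exact hRS (Finset.mem_of_mem_erase hu2)
      · have he : xi typ (insert s' (R.erase s)) = xi typ R := by
          rw [StmtAux.xi_swap typ hsR hs'mem.2, hs'typ]
          funext i
          simp only [StmtAux.stepv]
          ring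
        rw [he]; exact hFR
      · intro u hu
        rcases Finset.mem_insert.mp hu with rfl | hu2
        · exact hRS hsR
        · exact hR'S (Finset.mem_of_mem_erase hu2)
      · have he : xi typ (insert s (R'.erase s')) = xi typ R' := by
          rw [StmtAux.xi_swap typ hs'mem.1 hsR', hs'typ]
          funext i
          simp only [StmtAux.stepv]
          ring
        rw [he]; exact hFR'
    · push_neg at hc
      obtain ⟨t', ht'lt, hm1, hm2⟩ := StmtAux.exchangeVec hmR hmR' hc
      obtain ⟨s', hs'mem, hs'typ⟩ := StmtAux.partnerA typ ht'lt
      rw [Finset.mem_sdiff] at hs'mem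
      refine ⟨s', Finset.mem_sdiff.mpr hs'mem, ⟨?_, ?_⟩, ⟨?_, ?_⟩⟩
      · intro u hu
        rcases Finset.mem_insert.mp hu with rfl | hu2
        · exact hR'S hs'mem.1
        · exact hRS (Finset.mem_of_mem_erase hu2)
      · have he : xi typ (insert s' (R.erase s))
            = StmtAux.stepv (xi typ R) (typ s) t' := by
          rw [StmtAux.xi_swap typ hsR hs'mem.2, hs'typ]
        rw [he]
        exact (StmtAux.memF_iff hb hx0 _).mpr hm1
      · intro u hu
        rcases Finset.mem_insert.mp hu with rfl | hu2
        · exact hRS hsR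
        · exact hR'S (Finset.mem_of_mem_erase hu2)
      · have he : xi typ (insert s (R'.erase s'))
            = StmtAux.stepv (xi typ R') t' (typ s) := by
          rw [StmtAux.xi_swap typ hs'mem.1 hsR', hs'typ]
        rw [he]
        exact (StmtAux.memF_iff hb hx0 _).mpr hm2
end

section
/- All elements of F_b(x) have the same value of Σ_i T_b(y)_i^2; equivalently, any two elements of F_b(x) are equally b-diverse (each transformed vector majorizes the other). -/
open Finset

/-! A frontier element `y` admits no Robin Hood transfer: moving one unit from a coordinate `i`
with `y i > 0` to a coordinate `j` with `y j < x j` stays in `B(x)`, and if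
`T_b(y)_i > T_b(y)_j + 1` it makes `T_b(y)` strictly less spread out. Frontier elements also all
attain the maximal total, so `T_b` shifts any two of them, `y` and `z`, by the same multiple of `b`.
Applying the no-transfer property to `y` and to `z` at a coordinate where `z` falls below `y` and
one where it exceeds `y` forces both differences to be a single unit, with `T_b(y)` equal to `α`
on the first kind of coordinate and to `α - 1` on the second. Hence `T_b(z)` is `T_b(y)` with
these two equal-size level sets interchanged, a rearrangement of it. -/

section Transfer

variable {ι M : Type*} [DecidableEq ι] [AddCommGroup M]

def transfer (u : ι → M) (i j : ι) (δ : M) : ι → M :=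
  u + (Pi.single j δ - Pi.single i δ)

variable {u : ι → M} {i j : ι} {δ : M}

lemma transfer_apply_left (hij : i ≠ j) : transfer u i j δ i = u i - δ := by
  simp [transfer, hij, sub_eq_add_neg]

lemma transfer_apply_right (hij : i ≠ j) : transfer u i j δ j = u j + δ := by
  simp [transfer, hij.symm]

lemma transfer_apply_of_ne {k : ι} (hki : k ≠ i) (hkj : k ≠ j) : transfer u i j δ k = u k := by
  simp [transfer, hki, hkj]

lemma sum_transfer (B : Finset ι) :
    ∑ k ∈ B, transfer u i j δ k =
      ∑ k ∈ B, u k + ((if j ∈ B then δ else 0) - if i ∈ B then δ else 0) := by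
  simp [transfer, sum_add_distrib, sum_sub_distrib, sum_pi_single']

end Transfer

lemma sum_lt_sum_of_eq_on_of_lt_off {ι : Type*} [DecidableEq ι] {u w : ι → ℝ} {a : ℝ}
    {A B C : Finset ι} (hCB : C ⊆ B) (hcard : #C < #B) (hAB : #A = #B)
    (hu : ∀ k ∈ B, a ≤ u k) (hwC : ∀ k ∈ C, w k = u k) (hw : ∀ k ∉ C, w k < a) :
    ∑ k ∈ A, w k < ∑ k ∈ B, u k := by
  have hDB : A ∩ C ⊆ B := inter_subset_right.trans hCB
  have hcards : #(A ∩ C) + #(A \ C) = #A := card_inter_add_card_sdiff A C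
  have hDC : #(A ∩ C) ≤ #C := card_le_card inter_subset_right
  have hE : (A \ C).Nonempty := by rw [← card_pos]; omega
  have hBD : #(B \ (A ∩ C)) = #(A \ C) := by rw [card_sdiff_of_subset hDB]; omega
  have hwE : ∑ k ∈ A \ C, w k < #(A \ C) • a := by
    simpa using sum_lt_sum_of_nonempty hE fun k hk => hw k (mem_sdiff.1 hk).2
  have huBD : #(B \ (A ∩ C)) • a ≤ ∑ k ∈ B \ (A ∩ C), u k :=
    card_nsmul_le_sum _ _ _ fun k hk => hu k (mem_sdiff.1 hk).1
  have hwD : ∑ k ∈ A ∩ C, w k = ∑ k ∈ A ∩ C, u k :=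
    sum_congr rfl fun k hk => hwC k (mem_inter.1 hk).2
  rw [← sum_inter_add_sum_sdiff A C w, ← sum_sdiff hDB, hwD]
  rw [hBD] at huBD
  linarith

section Majorization

variable {n : ℕ} {u : Fin n → ℝ} {i j : Fin n} {δ : ℝ}

lemma maj_transfer (hδ : 0 ≤ δ) (h : u j + δ ≤ u i) :
    maj u (transfer u i j δ) := by
  refine ⟨fun B => ?_, by simp [sum_transfer]⟩
  by_cases hjB : j ∈ B <;> by_cases hiB : i ∈ B
  · exact ⟨B, rfl, by simp [sum_transfer, hiB, hjB]⟩
  · refine ⟨insert i (B.erase j), ?_, ?_⟩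
    · rw [card_insert_of_notMem fun hi => hiB (mem_of_mem_erase hi), card_erase_add_one hjB]
    · rw [sum_insert fun hi => hiB (mem_of_mem_erase hi), sum_transfer,
        ← add_sum_erase B u hjB]
      simp only [hiB, hjB, if_true, if_false]
      linarith
  · exact ⟨B, rfl, by simp [sum_transfer, hiB, hjB, hδ]⟩
  · exact ⟨B, rfl, by simp [sum_transfer, hiB, hjB]⟩

lemma not_maj_transfer (hij : i ≠ j) (hδ : 0 < δ) (h : u j + δ < u i) :
    ¬ maj (transfer u i j δ) u := by
  intro hm
  -- No `#B` coordinates of the transferred vector reach the total of `u` on this top set.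
  set B := univ.filter fun k => u i ≤ u k
  have hiB : i ∈ B := by simp [B]
  have hjB : j ∉ B := by simp [B]; linarith
  obtain ⟨A, hAB, hle⟩ := hm.1 B
  refine (sum_lt_sum_of_eq_on_of_lt_off (erase_subset i B) (card_erase_lt_of_mem hiB) hAB
    (fun k hk => (mem_filter.1 hk).2) (fun k hk => ?_) (fun k hk => ?_)).not_ge hle
  · exact transfer_apply_of_ne (ne_of_mem_erase hk) fun h => hjB (h ▸ mem_of_mem_erase hk)
  · by_cases hki : k = i
    · subst hki; rw [transfer_apply_left hij]; linarith
    by_cases hkj : k = j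
    · subst hkj; rwa [transfer_apply_right hij]
    rw [transfer_apply_of_ne hki hkj]
    simpa [B, hki] using hk

lemma smaj_transfer_s10 (hij : i ≠ j) (hδ : 0 < δ) (h : u j + δ < u i) :
    smaj u (transfer u i j δ) :=
  ⟨maj_transfer hδ.le h.le, not_maj_transfer hij hδ h⟩

end Majorization

lemma maj_comp_perm {n : ℕ} (u : Fin n → ℝ) (σ : Equiv.Perm (Fin n)) : maj u (u ∘ σ) := by
  refine ⟨fun B => ⟨B.map σ.toEmbedding, card_map _, ?_⟩, (Equiv.sum_comp σ u).symm⟩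
  simp

lemma Tb_add {n : ℕ} (b : Fin n → ℝ) (y w : Fin n → ℤ) (hw : ∑ k, w k = 0) :
    Tb b (y + w) = Tb b y + fun k => (w k : ℝ) := by
  have hw' : ∑ k, (w k : ℝ) = 0 := by exact_mod_cast hw
  ext k
  simp [Tb, sum_add_distrib, hw']
  ring

lemma Tb_transfer {n : ℕ} (b : Fin n → ℝ) (y : Fin n → ℤ) (i j : Fin n) :
    Tb b (transfer y i j 1) = transfer (Tb b y) i j 1 := by
  rw [transfer, Tb_add _ _ _ (by simp [sum_sub_distrib])]
  ext k
  simp [transfer, Pi.single_apply]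

lemma Tb_eq_add_sub {n : ℕ} (b : Fin n → ℝ) {y z : Fin n → ℤ} (h : ∑ k, z k = ∑ k, y k)
    (k : Fin n) :
    Tb b z k = Tb b y k + (z k - y k : ℤ) := by
  simpa using congrFun (Tb_add b y (z - y) (by simp [sum_sub_distrib, h])) k

lemma exists_perm_interchanging {ι : Type*} [DecidableEq ι] (I J : Finset ι)
    (hIJ : Disjoint I J) (hcard : #I = #J) :
    ∃ σ : Equiv.Perm ι, (∀ i ∈ I, σ i ∈ J) ∧ (∀ j ∈ J, σ j ∈ I) ∧
      ∀ k, k ∉ I → k ∉ J → σ k = k := by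
  induction I using Finset.induction_on generalizing J with
  | empty =>
    obtain rfl : J = ∅ := card_eq_zero.1 hcard.symm
    exact ⟨1, by simp⟩
  | insert i I hiI ih =>
    obtain ⟨j, hj⟩ : J.Nonempty := by rw [← card_pos, ← hcard]; simp
    have hiJ : i ∉ J := disjoint_left.1 hIJ (mem_insert_self i I)
    have hjI : j ∉ I := fun h => disjoint_left.1 hIJ (mem_insert_of_mem h) hj
    have hij : i ≠ j := fun h => hiJ (h ▸ hj)
    obtain ⟨σ, hσI, hσJ, hσ⟩ := ih (J.erase j)
      (disjoint_of_subset_right (erase_subset j J) (disjoint_of_subset_left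
        (subset_insert i I) hIJ))
      (by rw [card_erase_of_mem hj, ← hcard, card_insert_of_notMem hiI]; simp)
    have hσi : σ i = i := hσ i hiI fun h => hiJ (mem_of_mem_erase h)
    have hσj : σ j = j := hσ j hjI (notMem_erase j J)
    refine ⟨Equiv.swap i j * σ, fun k hk => ?_, fun k hk => ?_, fun k hkI hkJ => ?_⟩
    · rcases mem_insert.1 hk with rfl | hk
      · simp [hσi, hj]
      have hσk := hσI k hk
      rw [Equiv.Perm.mul_apply, Equiv.swap_apply_of_ne_of_ne
        (fun h : σ k = i => hiJ (h ▸ mem_of_mem_erase hσk)) (ne_of_mem_erase hσk)]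
      exact mem_of_mem_erase hσk
    · by_cases hkj : k = j
      · subst hkj; simp [hσj]
      have hσk := hσJ k (mem_erase.2 ⟨hkj, hk⟩)
      rw [Equiv.Perm.mul_apply, Equiv.swap_apply_of_ne_of_ne
        (fun h : σ k = i => hiI (h ▸ hσk)) (fun h : σ k = j => hjI (h ▸ hσk))]
      exact mem_insert_of_mem hσk
    · have hki : k ≠ i := fun h => hkI (h ▸ mem_insert_self i I)
      have hkj : k ≠ j := fun h => hkJ (h ▸ hj)
      rw [Equiv.Perm.mul_apply, hσ k (fun h => hkI (mem_insert_of_mem h))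
        (fun h => hkJ (mem_of_mem_erase h)), Equiv.swap_apply_of_ne_of_ne hki hkj]

lemma exists_perm_add_eq {ι : Type*} [Fintype ι] [DecidableEq ι] (u : ι → ℝ) (d : ι → ℤ)
    (hd : ∑ k, d k = 0)
    (h : ∀ i j, d i < 0 → 0 < d j → d i = -1 ∧ d j = 1 ∧ u i = u j + 1) :
    ∃ σ : Equiv.Perm ι, ∀ k, u k + d k = u (σ k) := by
  set I := univ.filter fun k => d k < 0
  set J := univ.filter fun k => 0 < d k
  have hIJ : Disjoint I J := disjoint_filter.2 fun k _ hk => hk.not_gt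
  have hsplit : ∑ k ∈ I, d k + ∑ k ∈ J, d k = 0 := by
    rw [← sum_union hIJ, ← hd]
    exact sum_subset (subset_univ _) fun k _ hk => by simp [I, J] at hk; omega
  have hcard : #I = #J := by
    rcases I.eq_empty_or_nonempty with hI | ⟨i, hi⟩
    · rw [hI, sum_empty, zero_add,
        sum_eq_zero_iff_of_nonneg fun k hk => (mem_filter.1 hk).2.le] at hsplit
      rw [hI, card_empty, eq_comm, card_eq_zero]
      exact eq_empty_of_forall_notMem fun k hk => (mem_filter.1 hk).2.ne' (hsplit k hk)
    rcases J.eq_empty_or_nonempty with hJ | ⟨j, hj⟩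
    · rw [hJ, sum_empty, add_zero,
        sum_eq_zero_iff_of_nonpos fun k hk => (mem_filter.1 hk).2.le] at hsplit
      rw [hJ, card_empty, card_eq_zero]
      exact eq_empty_of_forall_notMem fun k hk => (mem_filter.1 hk).2.ne (hsplit k hk)
    have hdI : ∑ k ∈ I, d k = -#I := by
      rw [sum_congr rfl fun k hk => (h k j (mem_filter.1 hk).2 (mem_filter.1 hj).2).1,
        sum_const, smul_neg, nsmul_one]
    have hdJ : ∑ k ∈ J, d k = #J := by
      rw [sum_congr rfl fun k hk => (h i k (mem_filter.1 hi).2 (mem_filter.1 hk).2).2.1,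
        sum_const, nsmul_one]
    omega
  obtain ⟨σ, hσI, hσJ, hσ⟩ := exists_perm_interchanging I J hIJ hcard
  refine ⟨σ, fun k => ?_⟩
  by_cases hkI : k ∈ I
  · have hk := h k (σ k) (mem_filter.1 hkI).2 (mem_filter.1 (hσI k hkI)).2
    rw [hk.1, hk.2.2]; push_cast; ring
  by_cases hkJ : k ∈ J
  · have hk := h (σ k) k (mem_filter.1 (hσJ k hkJ)).2 (mem_filter.1 hkJ).2
    rw [hk.2.1, hk.2.2]; push_cast; ring
  have hdk : d k = 0 := by simp [I, J] at hkI hkJ; omega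
  rw [hσ k hkI hkJ, hdk]; simp

section Frontier

variable {n q : ℕ} {b : Fin n → ℝ} {x y z : Fin n → ℤ}

lemma memF.sum_le (hy : memF q b x y) (hz : memB q x z) : ∑ k, z k ≤ ∑ k, y k := by
  by_contra! hlt
  obtain ⟨i, hi⟩ : ∃ i, y i < x i := by
    by_contra! hxy
    exact hlt.not_ge ((sum_le_sum fun k _ => hz.2.1 k).trans (sum_le_sum fun k _ => hxy k))
  set w : Fin n → ℤ := y + Pi.single i 1
  have hyw : y ≤ w := le_add_of_nonneg_right (Pi.single_nonneg.2 zero_le_one)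
  have hsum : ∑ k, w k = ∑ k, y k + 1 := by simp [w, sum_add_distrib]
  refine hy.2 ⟨w, ⟨fun k => (hy.1.1 k).trans (hyw k), fun k => ?_, ?_⟩, Or.inl ⟨hyw, ?_⟩⟩
  · rcases eq_or_ne k i with rfl | hk <;> simp [w, *, hy.1.2.1 k]
  · have := hz.2.2; omega
  · intro he
    simpa [w] using congrFun he i

lemma memB_transfer (hy : memB q x y) {i j : Fin n} (hij : i ≠ j) (hi : 0 < y i)
    (hj : y j < x j) : memB q x (transfer y i j 1) := by
  have hk : ∀ k, transfer y i j 1 k = y k - 1 ∧ k = i ∨ transfer y i j 1 k = y k + 1 ∧ k = j ∨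
      transfer y i j 1 k = y k := fun k => by
    by_cases hki : k = i
    · subst hki; exact .inl ⟨transfer_apply_left hij, rfl⟩
    by_cases hkj : k = j
    · subst hkj; exact .inr (.inl ⟨transfer_apply_right hij, rfl⟩)
    exact .inr (.inr (transfer_apply_of_ne hki hkj))
  refine ⟨fun k => ?_, fun k => ?_, by simpa [sum_transfer] using hy.2.2⟩
  · have := hy.1 k
    rcases hk k with ⟨h, rfl⟩ | ⟨h, rfl⟩ | h <;> omega
  · have := hy.2.1 k
    rcases hk k with ⟨h, rfl⟩ | ⟨h, rfl⟩ | h <;> omega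

lemma memF.Tb_le_add_one (hy : memF q b x y) {i j : Fin n} (hij : i ≠ j) (hi : 0 < y i)
    (hj : y j < x j) : Tb b y i ≤ Tb b y j + 1 := by
  by_contra! hlt
  refine hy.2 ⟨transfer y i j 1, memB_transfer hy.1 hij hi hj, Or.inr ?_⟩
  rw [Tb_transfer]; exact smaj_transfer_s10 hij one_pos hlt

lemma memF.exchange (hy : memF q b x y) (hz : memF q b x z) (hsum : ∑ k, z k = ∑ k, y k)
    {i j : Fin n} (hi : (z - y) i < 0) (hj : 0 < (z - y) j) :
    (z - y) i = -1 ∧ (z - y) j = 1 ∧ Tb b y i = Tb b y j + 1 := by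
  simp only [Pi.sub_apply] at hi hj ⊢
  have hij : i ≠ j := by rintro rfl; omega
  have hyz := hy.Tb_le_add_one hij ((hz.1.1 i).trans_lt (by omega)) (by linarith [hz.1.2.1 j])
  have hzy := hz.Tb_le_add_one hij.symm ((hy.1.1 j).trans_lt (by omega))
    (by linarith [hy.1.2.1 i])
  rw [Tb_eq_add_sub b hsum, Tb_eq_add_sub b hsum] at hzy
  have hle : z j - y j + (y i - z i) ≤ 2 := by
    have : ((z j - y j + (y i - z i) : ℤ) : ℝ) ≤ 2 := by push_cast at hzy ⊢; linarith
    exact_mod_cast this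
  have hzi : z i - y i = -1 := by omega
  have hzj : z j - y j = 1 := by omega
  refine ⟨hzi, hzj, ?_⟩
  rw [hzi, hzj] at hzy
  push_cast at hzy
  linarith

end Frontier

theorem stmt10_general {n : ℕ} (q : ℕ) (b : Fin n → ℝ)
    (x : Fin n → ℤ) (y z : Fin n → ℤ)
    (hy : memF q b x y) (hz : memF q b x z) :
    ∑ i, (Tb b y i) ^ 2 = ∑ i, (Tb b z i) ^ 2 ∧
      maj (Tb b y) (Tb b z) ∧ maj (Tb b z) (Tb b y) := by
  have hsum : ∑ k, z k = ∑ k, y k := le_antisymm (hy.sum_le hz.1) (hz.sum_le hy.1)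
  obtain ⟨σ, hσ⟩ := exists_perm_add_eq (Tb b y) (z - y) (by simp [sum_sub_distrib, hsum])
    fun i j hi hj => hy.exchange hz hsum hi hj
  have hTz : Tb b z = Tb b y ∘ σ := funext fun k => by
    rw [Tb_eq_add_sub b hsum, Function.comp_apply, ← hσ k, Pi.sub_apply]
  rw [hTz]
  refine ⟨(Equiv.sum_comp σ fun k => Tb b y k ^ 2).symm, maj_comp_perm _ σ, ?_⟩
  simpa [Function.comp_assoc] using maj_comp_perm (Tb b y ∘ σ) σ⁻¹

/-- Any two frontier elements have equal sums of squared transformed coordinates,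
and are equally `b`-diverse: each transformed vector majorizes the other. -/
theorem stmt10 {n : ℕ} (q : ℕ) (hq : 0 < q) (b : Fin n → ℝ) (hb : ∑ i, b i = 0)
    (x : Fin n → ℤ) (hx : ∀ i, 0 ≤ x i) (y z : Fin n → ℤ)
    (hy : memF q b x y) (hz : memF q b x z) :
    ∑ i, (Tb b y i) ^ 2 = ∑ i, (Tb b z i) ^ 2 ∧
      maj (Tb b y) (Tb b z) ∧ maj (Tb b z) (Tb b y) :=
  stmt10_general q b x y z hy hz
end
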